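/- arXiv:2411.04465 — 14 statements merged into one kernel-verified Lean document; each statement's English description precedes it below -/
import Mathlib

section
/- Let a, b be positive integers and let V be the generalized Fibonacci sequence with V_1 = a, V_2 = b and V_n = V_{n-1} + V_{n-2} for all n ≥ 3. Then for all positive integers k, n, d, the identity F_d·V_{n+kd} = (−1)^{d−1}·F_{(k−1)d}·V_n + F_{kd}·V_{n+d} holds (as an identity of integers). -/
lemma fibL (i j : ℕ) :
    (Nat.fib (i + j) : ℤ) * Nat.fib (j + 1) - Nat.fib (i + j + 1) * Nat.fib j
      = (-1) ^ j * Nat.fib i := by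
  induction j with
  | zero => simp
  | succ j ih =>
    have e1 : (Nat.fib (i + j + 2) : ℤ) = Nat.fib (i + j) + Nat.fib (i + j + 1) := by
      exact_mod_cast Nat.fib_add_two
    have e2 : (Nat.fib (j + 2) : ℤ) = Nat.fib j + Nat.fib (j + 1) := by
      exact_mod_cast Nat.fib_add_two
    have hij : i + (j + 1) = i + j + 1 := by ring
    rw [hij]
    have e1' : (Nat.fib (i + j + 1 + 1) : ℤ) = Nat.fib (i + j) + Nat.fib (i + j + 1) := e1
    have e2' : (Nat.fib (j + 1 + 1) : ℤ) = Nat.fib j + Nat.fib (j + 1) := e2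
    rw [e1', e2']
    linear_combination -ih

-- Fibonacci addition formula cast to ℤ
lemma fibA (m N : ℕ) :
    (Nat.fib (m + N + 1) : ℤ) = Nat.fib m * Nat.fib N + Nat.fib (m + 1) * Nat.fib (N + 1) := by
  exact_mod_cast Nat.fib_add m N

theorem stmt_1 (a b : ℕ) (ha : 0 < a) (hb : 0 < b)
    (V : ℕ → ℕ) (hV1 : V 1 = a) (hV2 : V 2 = b)
    (hVrec : ∀ n, 3 ≤ n → V n = V (n - 1) + V (n - 2)) :
    ∀ k n d : ℕ, 0 < k → 0 < n → 0 < d →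
      (Nat.fib d : ℤ) * V (n + k * d)
        = (-1) ^ (d - 1) * Nat.fib ((k - 1) * d) * V n
          + Nat.fib (k * d) * V (n + d) := by
  have hW : ∀ n, V (n + 2) = a * Nat.fib n + b * Nat.fib (n + 1) := by
    intro n
    induction n using Nat.strong_induction_on with
    | _ n ih =>
      match n with
      | 0 => simpa using hV2
      | 1 =>
        rw [hVrec 3 (by norm_num)]
        simp [hV1, hV2]
        omega
      | (n + 2) =>
        rw [hVrec (n + 2 + 2) (by omega)]
        have h1 : n + 2 + 2 - 1 = (n + 1) + 2 := by omega
        have h2 : n + 2 + 2 - 2 = n + 2 := by omega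
        rw [h1, h2, ih (n + 1) (by omega), ih n (by omega),
          Nat.fib_add_two (n := n + 1), Nat.fib_add_two (n := n)]
        ring
  intro k n d hk hn hd
  obtain ⟨j, rfl⟩ : ∃ j, k = j + 1 := ⟨k - 1, by omega⟩
  obtain ⟨e, rfl⟩ : ∃ e, d = e + 1 := ⟨d - 1, by omega⟩
  have hkd : (j + 1) * (e + 1) = j * (e + 1) + e + 1 := by ring
  have hk1 : (j + 1 - 1) * (e + 1) = j * (e + 1) := by simp
  have hd1 : e + 1 - 1 = e := by omega
  have key := fibL (j * (e + 1)) e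
  -- key : fib(j(e+1)+e) * fib(e+1) - fib(j(e+1)+e+1) * fib e = (-1)^e * fib(j(e+1))
  rw [hk1, hd1, hkd]
  match n, hn with
  | 1, _ =>
    have h1 : 1 + (j * (e + 1) + e + 1) = (j * (e + 1) + e) + 2 := by ring
    have h2 : 1 + (e + 1) = e + 2 := by ring
    rw [h1, h2, hW, hW, hV1]
    push_cast
    have e1 : (Nat.fib (j * (e + 1) + e + 1) : ℤ)
        = Nat.fib (j * (e + 1) + e) + Nat.fib (j * (e + 1) + e + 1) - Nat.fib (j * (e + 1) + e) := by
      ring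
    linear_combination (a : ℤ) * key + ((b : ℤ) * Nat.fib (j * (e + 1) + e + 1)
      + (a : ℤ) * Nat.fib e) * (by exact_mod_cast rfl : (Nat.fib (j * (e + 1) + e + 1) : ℤ) = Nat.fib (j * (e + 1) + e + 1))
  | (m + 2), _ =>
    have h1 : m + 2 + (j * (e + 1) + e + 1) = (m + (j * (e + 1) + e) + 1) + 2 := by ring
    have h2 : m + 2 + (e + 1) = (m + e + 1) + 2 := by ring
    rw [h1, h2, hW, hW, hW]
    push_cast
    have A1 := fibA m (j * (e + 1) + e)
    have A2 := fibA (m + 1) (j * (e + 1) + e)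
    have A3 := fibA m e
    have A4 := fibA (m + 1) e
    have hre1 : m + (j * (e + 1) + e) + 1 + 1 = m + 1 + (j * (e + 1) + e) + 1 := by ring
    have hre2 : m + e + 1 + 1 = m + 1 + e + 1 := by ring
    rw [hre1, hre2] at *
    rw [A1, A2, A3, A4]
    linear_combination ((a : ℤ) * Nat.fib m + (b : ℤ) * Nat.fib (m + 1)) * key
end

section
/- Let a, b be positive integers with gcd(a,b) = 1 and let V be the generalized Fibonacci sequence with V_1 = a, V_2 = b and V_n = V_{n-1} + V_{n-2} for all n ≥ 3. Then for all positive integers n and d, gcd(V_n, V_{n+d}) = gcd(V_n, F_d). -/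
theorem stmt_3 (a b : ℕ) (ha : 0 < a) (hb : 0 < b) (hab : Nat.gcd a b = 1)
    (V : ℕ → ℕ) (hV1 : V 1 = a) (hV2 : V 2 = b)
    (hVrec : ∀ n, 3 ≤ n → V n = V (n - 1) + V (n - 2)) :
    ∀ n d : ℕ, 0 < n → 0 < d →
      Nat.gcd (V n) (V (n + d)) = Nat.gcd (V n) (Nat.fib d) := by
  have hrec : ∀ n, V (n + 3) = V (n + 2) + V (n + 1) := by
    intro n
    have := hVrec (n + 3) (by omega)
    simpa using this
  -- coprimality of consecutive terms
  have hcop : ∀ n, 0 < n → Nat.gcd (V n) (V (n + 1)) = 1 := by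
    intro n hn
    induction n with
    | zero => omega
    | succ m ih =>
      rcases Nat.eq_zero_or_pos m with hm | hm
      · subst hm; simpa [hV1, hV2] using hab
      · have h3 : m + 2 = (m - 1) + 3 := by omega
        have hr : V (m + 2) = V (m + 1) + V m := by
          have := hrec (m - 1)
          rw [h3, this]
          congr 2 <;> omega
        rw [hr, Nat.add_comm (V (m+1)) (V m)]
        rw [Nat.gcd_add_self_right]
        rw [Nat.gcd_comm]
        exact ih hm
  -- addition formula
  have hadd : ∀ n d, 0 < n → 0 < d →
      V (n + d) = Nat.fib (d - 1) * V n + Nat.fib d * V (n + 1) := by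
    intro n d hn
    induction d using Nat.strong_induction_on with
    | _ d ih =>
      intro hd
      match d, hd with
      | 1, _ => simp
      | 2, _ =>
        have := hrec (n - 1)
        have h1 : n - 1 + 3 = n + 2 := by omega
        have h2 : n - 1 + 2 = n + 1 := by omega
        have h3 : n - 1 + 1 = n := by omega
        rw [h1, h2, h3] at this
        rw [show n + 2 = n + 2 from rfl, this]
        simp [Nat.fib_one, Nat.fib_two]
        ring
      | (k + 3), _ =>
        have e1 := ih (k + 1) (by omega) (by omega)
        have e2 := ih (k + 2) (by omega) (by omega)
        have := hrec (n + k)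
        rw [show n + (k + 3) = n + k + 3 from by ring, this,
          show n + k + 2 = n + (k + 2) from by ring,
          show n + k + 1 = n + (k + 1) from by ring, e1, e2]
        have f1 : Nat.fib (k + 3) = Nat.fib (k + 2) + Nat.fib (k + 1) := by
          rw [Nat.fib_add_two]; ring
        have f2 : Nat.fib (k + 2) = Nat.fib (k + 1) + Nat.fib k := by
          rw [Nat.fib_add_two]; ring
        rw [show k + 3 - 1 = k + 2 from rfl, show k + 2 - 1 = k + 1 from rfl,
          show k + 1 - 1 = k from rfl, f1, f2]
        ring
  intro n d hn hd
  rw [hadd n d hn hd, Nat.add_comm, Nat.gcd_add_mul_right_right]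
  exact Nat.Coprime.gcd_mul_right_cancel_right _ (Nat.Coprime.symm (hcop n hn))
end

section
/- Let a, b be positive integers and let V be the generalized Fibonacci sequence with V_1 = a, V_2 = b and V_n = V_{n-1} + V_{n-2} for all n ≥ 3. Fix positive integers n and d, and let S = ⟨{V_{n+kd} : k ≥ 0}⟩ be the additive submonoid of ℕ generated by the set {V_{n+kd} : k ∈ ℕ}. Then the complement ℕ \ S is finite if and only if gcd(a,b) = 1 and gcd(V_n, F_d) = 1. -/
section Aux

variable {a b : ℕ} {V : ℕ → ℕ}

lemma aux_pos (ha : 0 < a) (hb : 0 < b) (hV1 : V 1 = a) (hV2 : V 2 = b)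
    (hVrec : ∀ n, 3 ≤ n → V n = V (n - 1) + V (n - 2)) :
    ∀ m, 1 ≤ m → 0 < V m := by
  intro m
  induction m using Nat.strong_induction_on with
  | _ m ih =>
    intro hm
    match m, hm with
    | 1, _ => rw [hV1]; exact ha
    | 2, _ => rw [hV2]; exact hb
    | (k+3), _ =>
      rw [hVrec (k+3) (by omega)]
      have h1 := ih (k+2) (by omega) (by omega)
      simp only [show k+3-1 = k+2 from rfl, show k+3-2 = k+1 from rfl]
      omega

lemma aux_shift (hVrec : ∀ n, 3 ≤ n → V n = V (n - 1) + V (n - 2)) :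
    ∀ m, 1 ≤ m → ∀ k, V (m + k + 1) = Nat.fib (k+1) * V (m+1) + Nat.fib k * V m := by
  intro m hm k
  induction k using Nat.strong_induction_on with
  | _ k ih =>
    match k with
    | 0 => simp
    | 1 =>
      have hr := hVrec (m+2) (by omega)
      simp only [show m+2-1 = m+1 from rfl, show m+2-2 = m from rfl] at hr
      show V (m+2) = Nat.fib 2 * V (m+1) + Nat.fib 1 * V m
      rw [hr, Nat.fib_two, Nat.fib_one]; ring
    | (k+2) =>
      have h1 := ih (k+1) (by omega)
      have h0 := ih k (by omega)
      have hr := hVrec (m + k + 3) (by omega)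
      simp only [show m+k+3-1 = m+k+2 from rfl, show m+k+3-2 = m+k+1 from rfl] at hr
      have e1 : m + (k+1) + 1 = m + k + 2 := by ring
      have e2 : m + (k+2) + 1 = m + k + 3 := by ring
      rw [e1] at h1
      have f1 : Nat.fib (k+3) = Nat.fib (k+1) + Nat.fib (k+2) := Nat.fib_add_two
      have f2 : Nat.fib (k+2) = Nat.fib k + Nat.fib (k+1) := Nat.fib_add_two
      rw [e2, hr, h1, h0, show k+2+1 = k+3 from rfl, show k+1+1 = k+2 from rfl, f1, f2]
      ring

lemma aux_gcd_consec (hV1 : V 1 = a) (hV2 : V 2 = b)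
    (hVrec : ∀ n, 3 ≤ n → V n = V (n - 1) + V (n - 2)) :
    ∀ m, 1 ≤ m → Nat.gcd (V m) (V (m+1)) = Nat.gcd a b := by
  intro m hm
  induction m, hm using Nat.le_induction with
  | base => rw [hV1, hV2]
  | succ m hm ih =>
    have hr := hVrec (m+2) (by omega)
    simp only [show m+2-1 = m+1 from rfl, show m+2-2 = m from rfl] at hr
    rw [show m+1+1 = m+2 from rfl, hr, Nat.add_comm (V (m+1)) (V m), Nat.gcd_add_self_right,
      Nat.gcd_comm, ih]

lemma aux_gcd_dvd (hV1 : V 1 = a) (hV2 : V 2 = b)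
    (hVrec : ∀ n, 3 ≤ n → V n = V (n - 1) + V (n - 2)) :
    ∀ m, 1 ≤ m → Nat.gcd a b ∣ V m := by
  intro m
  induction m using Nat.strong_induction_on with
  | _ m ih =>
    intro hm
    match m, hm with
    | 1, _ => rw [hV1]; exact Nat.gcd_dvd_left a b
    | 2, _ => rw [hV2]; exact Nat.gcd_dvd_right a b
    | (k+3), _ =>
      rw [hVrec (k+3) (by omega)]
      simp only [show k+3-1 = k+2 from rfl, show k+3-2 = k+1 from rfl]
      exact Nat.dvd_add (ih (k+2) (by omega) (by omega)) (ih (k+1) (by omega) (by omega))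

end Aux

theorem stmt_4 (a b : ℕ) (ha : 0 < a) (hb : 0 < b)
    (V : ℕ → ℕ) (hV1 : V 1 = a) (hV2 : V 2 = b)
    (hVrec : ∀ n, 3 ≤ n → V n = V (n - 1) + V (n - 2))
    (n d : ℕ) (hn : 0 < n) (hd : 0 < d)
    (S : AddSubmonoid ℕ)
    (hS : S = AddSubmonoid.closure {x : ℕ | ∃ k : ℕ, x = V (n + k * d)}) :
    {x : ℕ | x ∉ S}.Finite ↔ (Nat.gcd a b = 1 ∧ Nat.gcd (V n) (Nat.fib d) = 1) := by
  have hpos := aux_pos ha hb hV1 hV2 hVrec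
  have hshift := aux_shift hVrec
  -- key: every generator is divisible by gcd (V n) (fib d) and by gcd a b
  constructor
  · intro hfin
    by_contra hcon
    push_neg at hcon
    -- obtain g ≥ 2 dividing all generators
    obtain ⟨g, hg2, hgdvd⟩ : ∃ g, 2 ≤ g ∧ ∀ k : ℕ, g ∣ V (n + k * d) := by
      by_cases h1 : Nat.gcd a b = 1
      · -- then gcd (V n) (fib d) ≠ 1
        have h2 := hcon h1
        refine ⟨Nat.gcd (V n) (Nat.fib d), ?_, ?_⟩
        · have hVn := hpos n hn
          have : Nat.gcd (V n) (Nat.fib d) ≠ 0 := by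
            intro h; have := Nat.eq_zero_of_gcd_eq_zero_left h; omega
          omega
        · intro k
          induction k with
          | zero => simpa using Nat.gcd_dvd_left _ _
          | succ k ih =>
            have he : n + (k+1) * d = (n + k * d) + (d - 1) + 1 := by
              have : (k+1) * d = k * d + d := by ring
              omega
            rw [he, hshift (n + k * d) (by omega) (d-1)]
            rw [show d - 1 + 1 = d from by omega]
            exact Nat.dvd_add (Dvd.dvd.mul_right (Nat.gcd_dvd_right _ _) _)
              (Dvd.dvd.mul_left ih _)
      · refine ⟨Nat.gcd a b, ?_, fun k => aux_gcd_dvd hV1 hV2 hVrec _ (by omega)⟩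
        have : Nat.gcd a b ≠ 0 := by
          intro h; have := Nat.eq_zero_of_gcd_eq_zero_left h; omega
        omega
    -- so every element of S is divisible by g
    have hSd : ∀ x ∈ S, g ∣ x := by
      rw [hS]
      intro x hx
      induction hx using AddSubmonoid.closure_induction with
      | mem x hx => obtain ⟨k, rfl⟩ := hx; exact hgdvd k
      | zero => exact Dvd.intro 0 rfl
      | add x y _ _ hx hy => exact Nat.dvd_add hx hy
    -- complement is infinite: contains g*k+1 for all k
    have : {x : ℕ | x ∉ S}.Infinite := by
      refine Set.infinite_of_injective_forall_mem (f := fun k : ℕ => g * k + 1) ?_ ?_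
      · intro i j hij
        have hij' : g * i + 1 = g * j + 1 := hij
        have : g * i = g * j := by omega
        exact Nat.eq_of_mul_eq_mul_left (by omega) this
      · intro k hk
        have h := hSd _ hk
        have h1 : g ∣ 1 := (Nat.dvd_add_right (Dvd.intro k rfl)).mp h
        have := Nat.le_of_dvd one_pos h1
        omega
    exact this hfin
  · rintro ⟨hg1, hg2⟩
    set p := V n with hp
    set q := V (n + d) with hq
    have hpS : p ∈ S := by
      rw [hS]; exact AddSubmonoid.subset_closure ⟨0, by simp [hp]⟩
    have hqS : q ∈ S := by
      rw [hS]; exact AddSubmonoid.subset_closure ⟨1, by simp [hq]⟩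
    have hppos : 0 < p := hpos n hn
    have hqpos : 0 < q := hpos _ (by omega)
    -- coprimality of p and q
    have hcop : Nat.Coprime p q := by
      have he : n + d = n + (d - 1) + 1 := by omega
      have := hshift n hn (d - 1)
      rw [show d - 1 + 1 = d from by omega] at this
      show Nat.Coprime (V n) (V (n + d))
      rw [he, this, Nat.Coprime, Nat.gcd_add_mul_right_right]
      have c1 : Nat.Coprime (V n) (Nat.fib d) := hg2
      have c2 : Nat.Coprime (V n) (V (n+1)) := aux_gcd_consec hV1 hV2 hVrec n hn |>.trans hg1
      exact Nat.Coprime.mul_right c1 c2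
    -- case p = 1 or q = 1: S = ⊤
    rcases eq_or_lt_of_le (Nat.one_le_iff_ne_zero.mpr hppos.ne') with h1 | hp1
    · have : ∀ x : ℕ, x ∈ S := by
        intro x
        have hx : x • p ∈ S := AddSubmonoid.nsmul_mem S hpS x
        rw [smul_eq_mul, ← h1, mul_one] at hx
        exact hx
      have : {x : ℕ | x ∉ S} = ∅ := by ext x; simp [this x]
      rw [this]; exact Set.finite_empty
    rcases eq_or_lt_of_le (Nat.one_le_iff_ne_zero.mpr hqpos.ne') with h2 | hq1
    · have : ∀ x : ℕ, x ∈ S := by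
        intro x
        have hx : x • q ∈ S := AddSubmonoid.nsmul_mem S hqS x
        rw [smul_eq_mul, ← h2, mul_one] at hx
        exact hx
      have : {x : ℕ | x ∉ S} = ∅ := by ext x; simp [this x]
      rw [this]; exact Set.finite_empty
    -- use the Frobenius number theorem
    have hfrob := frobeniusNumber_pair hcop hp1 hq1
    apply Set.Finite.subset (Set.finite_Iic (p * q))
    intro x hx
    simp only [Set.mem_setOf_eq] at hx
    simp only [Set.mem_Iic]
    by_contra hgt
    push_neg at hgt
    have hmem : x ∈ AddSubmonoid.closure ({p, q} : Set ℕ) := by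
      by_contra hxc
      have := hfrob.2 hxc
      omega
    apply hx
    have hle : AddSubmonoid.closure ({p, q} : Set ℕ) ≤ S := by
      rw [AddSubmonoid.closure_le]
      rintro y (rfl | rfl)
      · exact hpS
      · exact hqS
    exact hle hmem
end

section
/- Let a, b be positive integers with gcd(a,b) = 1 and let V be the generalized Fibonacci sequence with V_1 = a, V_2 = b and V_n = V_{n-1} + V_{n-2} for all n ≥ 3. Let n be a positive integer and let d be an odd positive integer with gcd(V_n, F_d) = 1. Then the additive submonoid of ℕ generated by {V_{n+kd} : k ∈ ℕ} equals the additive submonoid of ℕ generated by {V_n, V_{n+d}}. -/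
private lemma cassiniZ (n : ℕ) :
    (Nat.fib (n+1) : ℤ)^2 - Nat.fib n * Nat.fib (n+2) = (-1)^n := by
  induction n with
  | zero => simp
  | succ k ih =>
    have h1 : (Nat.fib (k+1+2) : ℤ) = Nat.fib (k+1) + Nat.fib (k+1+1) := by
      rw [Nat.fib_add_two]; push_cast; ring
    have h2 : (Nat.fib (k+2) : ℤ) = Nat.fib k + Nat.fib (k+1) := by
      rw [Nat.fib_add_two]; push_cast; ring
    rw [pow_succ]
    linear_combination (-1 : ℤ) * ih - (Nat.fib (k+1) : ℤ) * h1 + (Nat.fib (k+2) : ℤ) * h2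

private lemma Vcomb (V : ℕ → ℕ)
    (hVrec : ∀ n, 3 ≤ n → V n = V (n - 1) + V (n - 2))
    (m : ℕ) (hm : 1 ≤ m) :
    ∀ k, V (m + k + 1) = Nat.fib (k+1) * V (m+1) + Nat.fib k * V m := by
  intro k
  induction k using Nat.twoStepInduction with
  | zero => simp
  | one =>
    have h := hVrec (m+2) (by omega)
    have e1 : m + 2 - 1 = m + 1 := by omega
    have e2 : m + 2 - 2 = m := by omega
    rw [e1, e2] at h
    simpa [Nat.fib] using h
  | more k ih1 ih2 =>
    have h := hVrec (m + (k + 2) + 1) (by omega)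
    have e1 : m + (k+2) + 1 - 1 = m + (k+1) + 1 := by omega
    have e2 : m + (k+2) + 1 - 2 = m + k + 1 := by omega
    rw [e1, e2, ih1, ih2] at h
    rw [h, Nat.fib_add_two (n := k+1), Nat.fib_add_two (n := k)]
    ring

theorem stmt_5 (a b : ℕ) (ha : 0 < a) (hb : 0 < b) (hab : Nat.gcd a b = 1)
    (V : ℕ → ℕ) (hV1 : V 1 = a) (hV2 : V 2 = b)
    (hVrec : ∀ n, 3 ≤ n → V n = V (n - 1) + V (n - 2))
    (n d : ℕ) (hn : 0 < n) (hd : 0 < d) (hodd : Odd d)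
    (hgcd : Nat.gcd (V n) (Nat.fib d) = 1) :
    AddSubmonoid.closure {x : ℕ | ∃ k : ℕ, x = V (n + k * d)}
      = AddSubmonoid.closure {V n, V (n + d)} := by
  obtain ⟨j, hj⟩ := hodd
  set e := 2 * j with he
  have hde : d = e + 1 := by omega
  set L := 2 * Nat.fib e + Nat.fib (e + 1) with hL
  have h2 : Nat.fib (e + 2) = Nat.fib e + Nat.fib (e + 1) := Nat.fib_add_two
  have hA : Nat.fib (2 * e + 2) = L * Nat.fib (e + 1) := by
    have h := Nat.fib_two_mul (e + 1)
    have e1 : 2 * (e + 1) = 2 * e + 2 := by ring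
    rw [e1] at h
    have e2 : 2 * Nat.fib (e + 1 + 1) - Nat.fib (e + 1) = L := by
      have : Nat.fib (e + 1 + 1) = Nat.fib e + Nat.fib (e + 1) := h2
      omega
    rw [e2] at h
    rw [h]; ring
  have hB : Nat.fib (2 * e + 1) = L * Nat.fib e + 1 := by
    have hc := cassiniZ e
    have heven : (-1 : ℤ) ^ e = 1 := by
      rw [he]; simp [pow_mul]
    rw [heven] at hc
    have h := Nat.fib_two_mul_add_one e
    have : (Nat.fib (2 * e + 1) : ℤ) = L * Nat.fib e + 1 := by
      rw [h]; push_cast [hL, h2] at hc ⊢; linarith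
    exact_mod_cast this
  have hstep : ∀ m, 1 ≤ m → V (m + 2 * d) = L * V (m + d) + V m := by
    intro m hm
    have k1 := Vcomb V hVrec m hm (2 * e + 1)
    have k2 := Vcomb V hVrec m hm e
    have e1 : m + 2 * d = m + (2 * e + 1) + 1 := by omega
    have e2 : m + d = m + e + 1 := by omega
    rw [e1, e2, k1, k2, hA, hB]
    ring
  have hmem : ∀ k, V (n + k * d) ∈ AddSubmonoid.closure {V n, V (n + d)} := by
    intro k
    induction k using Nat.twoStepInduction with
    | zero => simpa using AddSubmonoid.subset_closure (by simp : V n ∈ ({V n, V (n+d)} : Set ℕ))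
    | one =>
      have : n + 1 * d = n + d := by ring
      rw [this]
      exact AddSubmonoid.subset_closure (by simp)
    | more k ih1 ih2 =>
      have h := hstep (n + k * d) (by omega)
      have e1 : n + (k + 2) * d = n + k * d + 2 * d := by ring
      have e2 : n + k * d + d = n + (k + 1) * d := by ring
      rw [e1, h, e2]
      have hs := AddSubmonoid.nsmul_mem _ ih2 L
      rw [smul_eq_mul] at hs
      exact AddSubmonoid.add_mem _ hs ih1
  apply le_antisymm
  · rw [AddSubmonoid.closure_le]
    rintro x ⟨k, rfl⟩
    exact hmem k
  · rw [AddSubmonoid.closure_le]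
    rintro x (rfl | rfl)
    · exact AddSubmonoid.subset_closure ⟨0, by simp⟩
    · exact AddSubmonoid.subset_closure ⟨1, by simp⟩
end

section
/- Let a, b be positive integers with gcd(a,b) = 1 and let V be the generalized Fibonacci sequence with V_1 = a, V_2 = b and V_n = V_{n-1} + V_{n-2} for all n ≥ 3. Let n be a positive integer and let d be an odd positive integer with gcd(V_n, F_d) = 1. Let S = ⟨{V_{n+kd} : k ≥ 0}⟩. Then the number of natural numbers not belonging to S is (V_n − 1)(V_{n+d} − 1)/2. -/
/-- If `m = X*p + Y*q` with `0 ≤ X < q`, then `m` is representable with nonneg coeffs iff `0 ≤ Y`. -/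
lemma repZ_iff (p q : ℕ) (hq : 0 < q) (hco : IsCoprime (q : ℤ) (p : ℤ))
    (m X Y : ℤ) (hX : 0 ≤ X) (hXq : X < q) (hm : m = X * p + Y * q) :
    (∃ x y : ℤ, 0 ≤ x ∧ 0 ≤ y ∧ m = x * p + y * q) ↔ 0 ≤ Y := by
  constructor
  · rintro ⟨x, y, hx, hy, hxy⟩
    have hq0 : (q : ℤ) ≠ 0 := by exact_mod_cast hq.ne'
    have hdvd : (q : ℤ) ∣ (x - X) * p := ⟨Y - y, by linarith [hxy, hm]⟩
    obtain ⟨s, hs⟩ := hco.dvd_of_dvd_mul_right hdvd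
    have hs0 : 0 ≤ s := by nlinarith
    have hYy : Y - y = s * p := by
      have : (q : ℤ) * (Y - y) = (q : ℤ) * (s * p) := by
        have := hs
        nlinarith [hs, hxy, hm]
      exact mul_left_cancel₀ hq0 this
    have hp0 : (0:ℤ) ≤ p := Int.natCast_nonneg p
    nlinarith
  · intro hY
    exact ⟨X, Y, hX, hY, hm⟩

lemma keyA (p q : ℕ) (hq : 0 < q) (hpq : Nat.Coprime p q) (m : ℤ) :
    (∃ x y : ℤ, 0 ≤ x ∧ 0 ≤ y ∧ m = x * p + y * q) ↔
      ¬ (∃ x y : ℤ, 0 ≤ x ∧ 0 ≤ y ∧ (p * q - p - q - m : ℤ) = x * p + y * q) := by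
  have hco : IsCoprime (p : ℤ) (q : ℤ) := by
    rw [Int.isCoprime_iff_gcd_eq_one]; exact_mod_cast hpq
  have hco' : IsCoprime (q : ℤ) (p : ℤ) := hco.symm
  obtain ⟨u, v, huv⟩ := hco
  have hq0 : (0:ℤ) < q := by exact_mod_cast hq
  set X := (m * u) % q with hXdef
  have hX : 0 ≤ X := Int.emod_nonneg _ hq0.ne'
  have hXq : X < q := Int.emod_lt_of_pos _ hq0
  set Y := m * v + (m * u) / q * p with hYdef
  have hm : m = X * p + Y * q := by
    have hdiv := Int.emod_add_mul_ediv (m * u) q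
    calc m = m * (u * p + v * q) := by rw [huv]; ring
    _ = X * p + Y * q := by rw [hXdef, hYdef]; linear_combination -(p : ℤ) * hdiv
  have h1 := repZ_iff p q hq hco' m X Y hX hXq hm
  have h2 := repZ_iff p q hq hco' (p * q - p - q - m) (q - 1 - X) (-1 - Y)
    (by omega) (by omega) (by linear_combination -hm)
  rw [h1, h2]; omega

lemma repNat_iff (p q m : ℕ) :
    (∃ x y : ℕ, m = x * p + y * q) ↔
      (∃ x y : ℤ, 0 ≤ x ∧ 0 ≤ y ∧ (m : ℤ) = x * p + y * q) := by
  constructor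
  · rintro ⟨x, y, rfl⟩
    exact ⟨x, y, Int.natCast_nonneg x, Int.natCast_nonneg y, by push_cast; ring⟩
  · rintro ⟨x, y, hx, hy, hm⟩
    lift x to ℕ using hx
    lift y to ℕ using hy
    exact ⟨x, y, by exact_mod_cast hm⟩

lemma sylvester_genus (p q : ℕ) (hp : 0 < p) (hq : 0 < q) (hpq : Nat.Coprime p q) :
    {m : ℕ | ¬ ∃ x y : ℕ, m = x * p + y * q}.ncard = (p - 1) * (q - 1) / 2 := by
  rcases eq_or_lt_of_le (show 1 ≤ p from hp) with hp1 | hp1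
  · obtain rfl : p = 1 := hp1.symm
    have : {m : ℕ | ¬ ∃ x y : ℕ, m = x * 1 + y * q} = ∅ := by
      ext m; simp only [Set.mem_setOf_eq, Set.mem_empty_iff_false, iff_false, not_not]
      exact ⟨m, 0, by simp⟩
    rw [this]; simp
  rcases eq_or_lt_of_le (show 1 ≤ q from hq) with hq1 | hq1
  · obtain rfl : q = 1 := hq1.symm
    have : {m : ℕ | ¬ ∃ x y : ℕ, m = x * p + y * 1} = ∅ := by
      ext m; simp only [Set.mem_setOf_eq, Set.mem_empty_iff_false, iff_false, not_not]
      exact ⟨0, m, by simp⟩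
    rw [this]; simp
  -- now 2 ≤ p, 2 ≤ q
  set N : ℕ := p * q - p - q with hNdef
  have hle : p + q ≤ p * q := Nat.add_le_mul hp1 hq1
  have hNZ : (N : ℤ) = (p : ℤ) * q - p - q := by
    have h1 : N + p + q = p * q := by omega
    have := congrArg (Nat.cast : ℕ → ℤ) h1
    push_cast at this; linarith
  set G : Set ℕ := {m : ℕ | ¬ ∃ x y : ℕ, m = x * p + y * q} with hGdef
  set R : Set ℕ := {m : ℕ | m ≤ N ∧ ∃ x y : ℕ, m = x * p + y * q} with hRdef
  -- every gap is at most N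
  have hGle : ∀ m ∈ G, m ≤ N := by
    intro m hm
    by_contra hmN
    apply hm
    rw [repNat_iff]
    rw [keyA p q hq hpq]
    rintro ⟨x, y, hx, hy, hxy⟩
    have : ((p : ℤ) * q - p - q - m) < 0 := by
      rw [← hNZ]; omega
    nlinarith [Int.natCast_nonneg p, Int.natCast_nonneg q]
  -- the reflection m ↦ N - m maps G bijectively onto R
  have himg : (fun m => N - m) '' G = R := by
    ext r
    constructor
    · rintro ⟨m, hm, rfl⟩
      have hmN := hGle m hm
      refine ⟨Nat.sub_le _ _, ?_⟩
      rw [repNat_iff]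
      have hcast : ((N - m : ℕ) : ℤ) = (p : ℤ) * q - p - q - m := by
        rw [← hNZ]; omega
      rw [hcast]
      by_contra hc
      have hrm : (∃ x y : ℤ, 0 ≤ x ∧ 0 ≤ y ∧ (m : ℤ) = x * p + y * q) :=
        (keyA p q hq hpq m).mpr hc
      simp only [hGdef, Set.mem_setOf_eq] at hm
      exact hm ((repNat_iff p q m).mpr hrm)
    · rintro ⟨hrN, hr⟩
      have hsub : N - (N - r) = r := by omega
      refine ⟨N - r, ?_, hsub⟩
      rw [hGdef]
      simp only [Set.mem_setOf_eq]
      rw [repNat_iff, keyA p q hq hpq]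
      intro hcon
      have hcast : ((p : ℤ) * q - p - q - (N - r : ℕ)) = (r : ℤ) := by
        rw [← hNZ]; omega
      rw [hcast] at hcon
      exact hcon ((repNat_iff p q r).mp hr)
  have hGfin : G.Finite := (Set.finite_Iic N).subset hGle
  have hinj : Set.InjOn (fun m => N - m) G := by
    intro a ha b hb hab
    have := hGle a ha; have := hGle b hb
    simp only at hab; omega
  have hRcard : R.ncard = G.ncard := by
    rw [← himg, Set.ncard_image_of_injOn hinj]
  have hunion : G ∪ R = Set.Iic N := by
    ext m
    simp only [Set.mem_union, hGdef, hRdef, Set.mem_setOf_eq, Set.mem_Iic]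
    constructor
    · rintro (h | h)
      · exact hGle m h
      · exact h.1
    · intro hm
      by_cases hc : ∃ x y : ℕ, m = x * p + y * q
      · exact Or.inr ⟨hm, hc⟩
      · exact Or.inl hc
  have hRfin : R.Finite := (Set.finite_Iic N).subset (fun m hm => hm.1)
  have hdisj : Disjoint G R := by
    rw [Set.disjoint_left]
    rintro m hm ⟨_, hr⟩
    exact hm hr
  have hcount : G.ncard + R.ncard = N + 1 := by
    rw [← Set.ncard_union_eq hdisj hGfin hRfin, hunion]
    rw [← Nat.card_coe_set_eq, Nat.card_eq_card_toFinset]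
    simp [Nat.card_Iic]
  have hfact : (p - 1) * (q - 1) = N + 1 := by
    obtain ⟨p', rfl⟩ : ∃ p', p = p' + 2 := ⟨p - 2, by omega⟩
    obtain ⟨q', rfl⟩ : ∃ q', q = q' + 2 := ⟨q - 2, by omega⟩
    have h1 : (p' + 2) * (q' + 2) = p' * q' + 2 * p' + 2 * q' + 4 := by ring
    have h2 : (p' + 2 - 1) * (q' + 2 - 1) = p' * q' + p' + q' + 1 := by
      norm_num; ring
    omega
  omega

lemma cassini (k : ℕ) :
    (Nat.fib (k + 1) : ℤ) ^ 2 - Nat.fib (k + 2) * Nat.fib k = (-1) ^ k := by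
  induction k with
  | zero => simp
  | succ k ih =>
    have h2 : (Nat.fib (k + 2) : ℤ) = Nat.fib k + Nat.fib (k + 1) := by
      exact_mod_cast Nat.fib_add_two
    have h3 : (Nat.fib (k + 3) : ℤ) = Nat.fib (k + 1) + Nat.fib (k + 2) := by
      exact_mod_cast (Nat.fib_add_two : Nat.fib (k + 1 + 2) = _)
    rw [pow_succ]
    have : (Nat.fib (k + 1 + 2) : ℤ) = Nat.fib (k + 1) + Nat.fib (k + 2) := h3
    rw [show k + 1 + 2 = k + 3 from rfl] at *
    rw [h3]
    linear_combination -ih + ((Nat.fib (k + 2) : ℤ)) * h2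

section Vseq

variable (V : ℕ → ℕ)

lemma V_formula (hVrec : ∀ n, 3 ≤ n → V n = V (n - 1) + V (n - 2)) :
    ∀ k m, 1 ≤ m → V (m + k + 1) = Nat.fib (k + 1) * V (m + 1) + Nat.fib k * V m := by
  intro k
  induction k using Nat.strong_induction_on with
  | _ k ih =>
    match k with
    | 0 => intro m hm; simp
    | 1 => intro m hm
           have hr := hVrec (m + 2) (by omega)
           have h2 : m + 2 - 1 = m + 1 := by omega
           have h3 : m + 2 - 2 = m := by omega
           rw [h2, h3] at hr
           have f1 : Nat.fib 1 = 1 := rfl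
           have f2 : Nat.fib 2 = 1 := rfl
           show V (m + 2) = Nat.fib 2 * V (m + 1) + Nat.fib 1 * V m
           rw [f1, f2, hr]; ring
    | (k + 2) =>
      intro m hm
      have e1 := ih k (by omega) m hm
      have e2 := ih (k + 1) (by omega) m hm
      have e3 := hVrec (m + k + 3) (by omega)
      have h2 : m + k + 3 - 1 = m + (k + 1) + 1 := by omega
      have h3 : m + k + 3 - 2 = m + k + 1 := by omega
      rw [h2, h3] at e3
      have h4 : m + (k + 2) + 1 = m + k + 3 := by omega
      rw [h4, e3, e2, e1]
      have f1 : Nat.fib (k + 3) = Nat.fib (k + 1) + Nat.fib (k + 2) := Nat.fib_add_two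
      have f2 : Nat.fib (k + 2) = Nat.fib k + Nat.fib (k + 1) := Nat.fib_add_two
      rw [f1, f2]
      ring

lemma V_pos (a b : ℕ) (ha : 0 < a) (hb : 0 < b) (hV1 : V 1 = a) (hV2 : V 2 = b)
    (hVrec : ∀ n, 3 ≤ n → V n = V (n - 1) + V (n - 2)) :
    ∀ m, 1 ≤ m → 0 < V m := by
  intro m
  induction m using Nat.strong_induction_on with
  | _ m ih =>
    match m with
    | 0 => intro h; exact absurd h (by omega)
    | 1 => intro _; omega
    | 2 => intro _; omega
    | (m + 3) =>
      intro _
      rw [hVrec (m + 3) (by omega)]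
      have : m + 3 - 1 = m + 2 := by omega
      rw [this]
      have := ih (m + 2) (by omega) (by omega)
      omega

lemma V_coprime_succ (a b : ℕ) (hab : Nat.gcd a b = 1) (hV1 : V 1 = a) (hV2 : V 2 = b)
    (hVrec : ∀ n, 3 ≤ n → V n = V (n - 1) + V (n - 2)) :
    ∀ m, 1 ≤ m → Nat.Coprime (V m) (V (m + 1)) := by
  intro m
  induction m with
  | zero => intro h; exact absurd h (by omega)
  | succ m ih =>
    intro _
    rcases Nat.eq_zero_or_pos m with rfl | hm
    · simpa [hV1, hV2, Nat.Coprime] using hab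
    · have hrec := hVrec (m + 2) (by omega)
      have h2 : m + 2 - 1 = m + 1 := by omega
      have h3 : m + 2 - 2 = m := by omega
      rw [h2, h3] at hrec
      have := ih (by omega)
      rw [show m + 1 + 1 = m + 2 from rfl, hrec]
      simpa [Nat.coprime_add_self_right] using this.symm

end Vseq

lemma cassini_even (e : ℕ) (he : Even e) :
    Nat.fib (e + 1) ^ 2 = Nat.fib (e + 2) * Nat.fib e + 1 := by
  have h := cassini e
  rw [he.neg_one_pow] at h
  have : (Nat.fib (e + 1) : ℤ) ^ 2 = Nat.fib (e + 2) * Nat.fib e + 1 := by linarith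
  exact_mod_cast this

lemma V_step (V : ℕ → ℕ) (hVrec : ∀ n, 3 ≤ n → V n = V (n - 1) + V (n - 2))
    (d : ℕ) (hd : 0 < d) (hodd : Odd d) :
    ∀ m, 1 ≤ m →
      V (m + 2 * d) = (Nat.fib (d + 1) + Nat.fib (d - 1)) * V (m + d) + V m := by
  obtain ⟨e, rfl⟩ : ∃ e, d = e + 1 := ⟨d - 1, by omega⟩
  have heven : Even e := by
    rcases hodd with ⟨j, hj⟩
    exact ⟨j, by omega⟩
  intro m hm
  have h1 := V_formula V hVrec (2 * e + 1) m hm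
  have h2 := V_formula V hVrec e m hm
  have hA : Nat.fib (2 * e + 1 + 1) = Nat.fib (e + 1) * (Nat.fib (e + 2) + Nat.fib e) := by
    have h := Nat.fib_add (e + 1) e
    rw [show e + 1 + e + 1 = 2 * e + 1 + 1 by ring] at h
    rw [h]; ring
  have hB : Nat.fib (2 * e + 1) = (Nat.fib (e + 2) + Nat.fib e) * Nat.fib e + 1 := by
    have h := Nat.fib_add e e
    rw [show e + e + 1 = 2 * e + 1 by ring] at h
    have hc := cassini_even e heven
    rw [h]; nlinarith [hc]
  have hidx : m + 2 * (e + 1) = m + (2 * e + 1) + 1 := by ring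
  have hidx2 : m + (e + 1) = m + e + 1 := by ring
  rw [hidx, h1, show e + 1 + 1 = e + 2 from rfl, Nat.add_sub_cancel, hidx2, h2, hA, hB]
  ring

lemma closure_eq (V : ℕ → ℕ) (hVrec : ∀ n, 3 ≤ n → V n = V (n - 1) + V (n - 2))
    (n d : ℕ) (hn : 0 < n) (hd : 0 < d) (hodd : Odd d) :
    AddSubmonoid.closure {x : ℕ | ∃ k : ℕ, x = V (n + k * d)} =
      AddSubmonoid.closure {V n, V (n + d)} := by
  apply le_antisymm
  · rw [AddSubmonoid.closure_le]
    rintro x ⟨k, rfl⟩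
    induction k using Nat.strong_induction_on with
    | _ k ih =>
      match k with
      | 0 =>
        simp only [Nat.zero_mul, Nat.add_zero]
        exact AddSubmonoid.subset_closure (by simp)
      | 1 =>
        simp only [Nat.one_mul]
        exact AddSubmonoid.subset_closure (by simp)
      | (k + 2) =>
        have hid := V_step V hVrec d hd hodd (n + k * d) (by omega)
        have hidx : n + (k + 2) * d = n + k * d + 2 * d := by ring
        have hidx2 : n + k * d + d = n + (k + 1) * d := by ring
        rw [hidx, hid, hidx2]
        refine AddSubmonoid.add_mem _ ?_ (ih k (by omega))
        have hmem := ih (k + 1) (by omega)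
        have := nsmul_mem hmem (Nat.fib (d + 1) + Nat.fib (d - 1))
        simpa [smul_eq_mul] using this
  · rw [AddSubmonoid.closure_le]
    rintro x (rfl | rfl)
    · exact AddSubmonoid.subset_closure ⟨0, by simp⟩
    · exact AddSubmonoid.subset_closure ⟨1, by simp⟩

theorem stmt_7 (a b : ℕ) (ha : 0 < a) (hb : 0 < b) (hab : Nat.gcd a b = 1)
    (V : ℕ → ℕ) (hV1 : V 1 = a) (hV2 : V 2 = b)
    (hVrec : ∀ n, 3 ≤ n → V n = V (n - 1) + V (n - 2))
    (n d : ℕ) (hn : 0 < n) (hd : 0 < d) (hodd : Odd d)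
    (hgcd : Nat.gcd (V n) (Nat.fib d) = 1)
    (S : AddSubmonoid ℕ)
    (hS : S = AddSubmonoid.closure {x : ℕ | ∃ k : ℕ, x = V (n + k * d)}) :
    {m : ℕ | m ∉ S}.ncard = (V n - 1) * (V (n + d) - 1) / 2 := by
  have hp : 0 < V n := V_pos V a b ha hb hV1 hV2 hVrec n hn
  have hq : 0 < V (n + d) := V_pos V a b ha hb hV1 hV2 hVrec (n + d) (by omega)
  -- coprimality of V n and V (n + d)
  have hVnd : V (n + d) = Nat.fib d * V (n + 1) + Nat.fib (d - 1) * V n := by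
    have h := V_formula V hVrec (d - 1) n hn
    rw [show n + (d - 1) + 1 = n + d by omega, show d - 1 + 1 = d by omega] at h
    exact h
  have hc1 : Nat.Coprime (V n) (V (n + 1)) := V_coprime_succ V a b hab hV1 hV2 hVrec n hn
  have hc2 : Nat.Coprime (V n) (Nat.fib d) := hgcd
  have hcop : Nat.Coprime (V n) (V (n + d)) := by
    rw [hVnd]
    exact (Nat.coprime_add_mul_right_right _ _ _).mpr (hc2.mul_right hc1)
  -- rewrite the submonoid
  rw [hS, closure_eq V hVrec n d hn hd hodd]
  have hset : {m : ℕ | m ∉ AddSubmonoid.closure ({V n, V (n + d)} : Set ℕ)} =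
      {m : ℕ | ¬ ∃ x y : ℕ, m = x * V n + y * V (n + d)} := by
    ext m
    simp only [Set.mem_setOf_eq, AddSubmonoid.mem_closure_pair, smul_eq_mul]
    constructor
    · intro h ⟨x, y, hxy⟩; exact h ⟨x, y, hxy.symm⟩
    · intro h ⟨x, y, hxy⟩; exact h ⟨x, y, hxy.symm⟩
  rw [hset]
  exact sylvester_genus (V n) (V (n + d)) hp hq hcop
end

section
/- Let a, b be positive integers and let V be the generalized Fibonacci sequence with V_1 = a, V_2 = b and V_n = V_{n-1} + V_{n-2} for all n ≥ 3. Let n be a positive integer and let x be an integer with 1 ≤ x ≤ V_n − 1, and let k be the unique positive integer with F_{2k} ≤ x < F_{2k+2}. Then there exist λ_1, …, λ_k with each λ_i ∈ {0,1,2} and λ_k ≥ 1 such that x = Σ_{i=1}^{k} λ_i·F_{2i}, and the number s = Σ_{i=1}^{k} λ_i·V_{n+2i} satisfies V_{n+2k} ≤ s < V_{n+2k+2} and s ≡ V_{n+2}·x (mod V_n). -/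
open Finset

/-- Greedy digits of `x` in the even-indexed Fibonacci base, digits in {0,1,2}. -/
def lamF : ℕ → ℕ → ℕ → ℕ
  | 0, _, _ => 0
  | k+1, x, i =>
      if i = k + 1 then x / Nat.fib (2*k+2) else lamF k (x % Nat.fib (2*k+2)) i

lemma lamF_top (k x : ℕ) : lamF (k+1) x (k+1) = x / Nat.fib (2*k+2) := by
  simp [lamF]

lemma lamF_low (k x i : ℕ) (h : i ≠ k+1) :
    lamF (k+1) x i = lamF k (x % Nat.fib (2*k+2)) i := by
  simp [lamF, h]

lemma lamF_split (k x : ℕ) (g : ℕ → ℕ) :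
    ∑ i ∈ Finset.Icc 1 (k+1), lamF (k+1) x i * g i
      = x / Nat.fib (2*k+2) * g (k+1)
        + ∑ i ∈ Finset.Icc 1 k, lamF k (x % Nat.fib (2*k+2)) i * g i := by
  rw [Finset.sum_Icc_succ_top (by omega : 1 ≤ k+1)]
  have h2 : ∑ i ∈ Finset.Icc 1 k, lamF (k+1) x i * g i
      = ∑ i ∈ Finset.Icc 1 k, lamF k (x % Nat.fib (2*k+2)) i * g i := by
    refine Finset.sum_congr rfl fun i hi => ?_
    simp only [Finset.mem_Icc] at hi
    rw [lamF_low k x i (by omega)]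
  rw [h2, lamF_top, add_comm]

lemma fib_two : Nat.fib 2 = 1 := rfl

lemma lamF_rep : ∀ k x, x < Nat.fib (2*k+2) →
    ∑ i ∈ Finset.Icc 1 k, lamF k x i * Nat.fib (2*i) = x := by
  intro k
  induction k with
  | zero =>
    intro x hx
    have e : Nat.fib (2*0+2) = 1 := rfl
    have hx0 : x = 0 := by omega
    rw [Finset.Icc_eq_empty (by omega), Finset.sum_empty, hx0]
  | succ k ih =>
    intro x hx
    have hF : 0 < Nat.fib (2*k+2) := Nat.fib_pos.mpr (by omega)
    rw [lamF_split, ih _ (Nat.mod_lt _ hF)]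
    rw [show 2*(k+1) = 2*k+2 by ring]
    exact Nat.div_add_mod' x (Nat.fib (2*k+2))

lemma lamF_le_two : ∀ k x, x < Nat.fib (2*k+2) → ∀ i, lamF k x i ≤ 2 := by
  intro k
  induction k with
  | zero => intro x _ i; simp [lamF]
  | succ k ih =>
    intro x hx i
    have hF : 0 < Nat.fib (2*k+2) := Nat.fib_pos.mpr (by omega)
    have f1 : Nat.fib (2*k+4) = Nat.fib (2*k+2) + Nat.fib (2*k+3) := Nat.fib_add_two
    have f2 : Nat.fib (2*k+3) = Nat.fib (2*k+1) + Nat.fib (2*k+2) := Nat.fib_add_two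
    have m1 : Nat.fib (2*k+1) ≤ Nat.fib (2*k+2) := Nat.fib_mono (by omega)
    have hx' : x < Nat.fib (2*k+4) := by
      rwa [show 2*(k+1)+2 = 2*k+4 by ring] at hx
    by_cases h : i = k + 1
    · subst h
      rw [lamF_top]
      have h3 : x / Nat.fib (2*k+2) < 3 := (Nat.div_lt_iff_lt_mul hF).mpr (by omega)
      exact Nat.le_of_lt_succ h3
    · rw [lamF_low k x i h]
      exact ih _ (Nat.mod_lt _ hF) i

lemma lamF_Ybound : ∀ k x,
    (x < Nat.fib (2*k+2) →
      ∑ i ∈ Finset.Icc 1 k, lamF k x i * Nat.fib (2*i-1) ≤ Nat.fib (2*k+1))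
  ∧ (x < Nat.fib (2*k+1) →
      ∑ i ∈ Finset.Icc 1 k, lamF k x i * Nat.fib (2*i-1) ≤ Nat.fib (2*k)) := by
  intro k
  induction k with
  | zero =>
    intro x
    constructor <;> intro _ <;> simp
  | succ k ih =>
    intro x
    have hF : 0 < Nat.fib (2*k+2) := Nat.fib_pos.mpr (by omega)
    have hsplit := lamF_split k x (fun i => Nat.fib (2*i-1))
    simp only [show 2*(k+1)-1 = 2*k+1 from by omega] at hsplit
    have hr : x % Nat.fib (2*k+2) < Nat.fib (2*k+2) := Nat.mod_lt _ hF
    have ih1 := (ih (x % Nat.fib (2*k+2))).1 hr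
    have f1 : Nat.fib (2*k+3) = Nat.fib (2*k+1) + Nat.fib (2*k+2) := Nat.fib_add_two
    have f2 : Nat.fib (2*k+2) = Nat.fib (2*k) + Nat.fib (2*k+1) := Nat.fib_add_two
    have f3 : Nat.fib (2*k+4) = Nat.fib (2*k+2) + Nat.fib (2*k+3) := Nat.fib_add_two
    have m1 : Nat.fib (2*k+1) ≤ Nat.fib (2*k+2) := Nat.fib_mono (by omega)
    have hdm := Nat.div_add_mod x (Nat.fib (2*k+2))
    constructor
    · intro hx
      have hx' : x < Nat.fib (2*k+4) := by
        rwa [show 2*(k+1)+2 = 2*k+4 by ring] at hx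
      rw [show 2*(k+1)+1 = 2*k+3 by ring, hsplit]
      have hd3 : x / Nat.fib (2*k+2) < 3 := (Nat.div_lt_iff_lt_mul hF).mpr (by omega)
      obtain ⟨d, hd⟩ : ∃ d, x / Nat.fib (2*k+2) = d := ⟨_, rfl⟩
      rw [hd] at hdm hd3 ⊢
      interval_cases d
      · omega
      · omega
      · have hrlt : x % Nat.fib (2*k+2) < Nat.fib (2*k+1) := by omega
        have ih2 := (ih (x % Nat.fib (2*k+2))).2 hrlt
        omega
    · intro hx
      have hx' : x < Nat.fib (2*k+3) := by
        rwa [show 2*(k+1)+1 = 2*k+3 by ring] at hx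
      rw [show 2*(k+1) = 2*k+2 by ring, hsplit]
      have hd2 : x / Nat.fib (2*k+2) < 2 := (Nat.div_lt_iff_lt_mul hF).mpr (by omega)
      obtain ⟨d, hd⟩ : ∃ d, x / Nat.fib (2*k+2) = d := ⟨_, rfl⟩
      rw [hd] at hdm hd2 ⊢
      interval_cases d
      · omega
      · have hrlt : x % Nat.fib (2*k+2) < Nat.fib (2*k+1) := by omega
        have ih2 := (ih (x % Nat.fib (2*k+2))).2 hrlt
        omega

theorem stmt_9 (a b : ℕ) (ha : 0 < a) (hb : 0 < b)
    (V : ℕ → ℕ) (hV1 : V 1 = a) (hV2 : V 2 = b)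
    (hVrec : ∀ n, 3 ≤ n → V n = V (n - 1) + V (n - 2))
    (n : ℕ) (hn : 0 < n)
    (x : ℕ) (hx1 : 1 ≤ x) (hx2 : x ≤ V n - 1)
    (k : ℕ) (hk : 0 < k)
    (hkx : Nat.fib (2 * k) ≤ x ∧ x < Nat.fib (2 * k + 2)) :
    ∃ lam : ℕ → ℕ,
      (∀ i ∈ Finset.Icc 1 k, lam i ≤ 2) ∧ 1 ≤ lam k ∧
      x = ∑ i ∈ Finset.Icc 1 k, lam i * Nat.fib (2 * i) ∧
      V (n + 2 * k) ≤ ∑ i ∈ Finset.Icc 1 k, lam i * V (n + 2 * i) ∧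
      (∑ i ∈ Finset.Icc 1 k, lam i * V (n + 2 * i)) < V (n + 2 * k + 2) ∧
      (∑ i ∈ Finset.Icc 1 k, lam i * V (n + 2 * i)) ≡ V (n + 2) * x [MOD V n] := by
  -- basic facts about V
  have hVstep : ∀ m, 1 ≤ m → V (m+2) = V (m+1) + V m := by
    intro m hm
    have h := hVrec (m+2) (by omega)
    rwa [show m+2-1 = m+1 by omega, show m+2-2 = m by omega] at h
  have hVpos : ∀ m, 0 < V (m+1) := by
    intro m
    induction m using Nat.strong_induction_on with
    | _ m ih =>
      match m with
      | 0 => simpa [hV1] using ha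
      | 1 => simpa [hV2] using hb
      | (m+2) =>
        rw [hVstep (m+1) (by omega)]
        have h1 := ih (m+1) (by omega)
        have h2 := ih m (by omega)
        omega
  have hVform : ∀ m, V (n+1+m) = Nat.fib m * V n + Nat.fib (m+1) * V (n+1) := by
    intro m
    induction m using Nat.strong_induction_on with
    | _ m ih =>
      match m with
      | 0 => simp
      | 1 =>
        have h := hVstep n hn
        have e2 : Nat.fib (1+1) = 1 := rfl
        rw [show n+1+1 = n+2 by omega, h, Nat.fib_one, e2, one_mul, one_mul]
        omega
      | (m+2) =>
        have h1 := ih m (by omega)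
        have h2 := ih (m+1) (by omega)
        have hs := hVstep (n+1+m) (by omega)
        rw [show n+1+(m+2) = n+1+m+2 by omega, hs,
            show n+1+m+1 = n+1+(m+1) by omega, h2, h1]
        have f1 : Nat.fib (m+2) = Nat.fib m + Nat.fib (m+1) := Nat.fib_add_two
        have f2 : Nat.fib (m+3) = Nat.fib (m+1) + Nat.fib (m+2) := Nat.fib_add_two
        rw [f2, f1]
        ring
  obtain ⟨j, rfl⟩ : ∃ j, k = j + 1 := ⟨k - 1, by omega⟩
  have hxfib : x < Nat.fib (2*(j+1)+2) := hkx.2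
  have hF : 0 < Nat.fib (2*j+2) := Nat.fib_pos.mpr (by omega)
  have hxge : Nat.fib (2*j+2) ≤ x := by
    have h := hkx.1
    rwa [show 2*(j+1) = 2*j+2 by ring] at h
  have hxlt : x < Nat.fib (2*j+4) := by
    rwa [show 2*(j+1)+2 = 2*j+4 by ring] at hxfib
  have hd1 : 1 ≤ lamF (j+1) x (j+1) := by
    rw [lamF_top]
    exact (Nat.one_le_div_iff hF).mpr hxge
  have hrep := lamF_rep (j+1) x hxfib
  -- expansion of the sum s
  set Y : ℕ := ∑ i ∈ Finset.Icc 1 (j+1), lamF (j+1) x i * Nat.fib (2*i-1) with hY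
  have hkey : (∑ i ∈ Finset.Icc 1 (j+1), lamF (j+1) x i * V (n + 2*i))
      = Y * V n
        + (∑ i ∈ Finset.Icc 1 (j+1), lamF (j+1) x i * Nat.fib (2*i)) * V (n+1) := by
    rw [hY, Finset.sum_mul, Finset.sum_mul, ← Finset.sum_add_distrib]
    refine Finset.sum_congr rfl fun i hi => ?_
    simp only [Finset.mem_Icc] at hi
    have hform := hVform (2*i-1)
    rw [show n+2*i = n+1+(2*i-1) by omega, hform, show 2*i-1+1 = 2*i by omega]
    ring
  have hs_eq : (∑ i ∈ Finset.Icc 1 (j+1), lamF (j+1) x i * V (n + 2*i))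
      = Y * V n + x * V (n+1) := by
    rw [hkey, hrep]
  -- Y bounds
  have hYub : Y ≤ Nat.fib (2*j+3) := by
    have h := (lamF_Ybound (j+1) x).1 hxfib
    rwa [show 2*(j+1)+1 = 2*j+3 by ring] at h
  have hYlb : Nat.fib (2*j+1) ≤ Y := by
    have hmem : j+1 ∈ Finset.Icc 1 (j+1) := by simp
    have hsingle := Finset.single_le_sum
      (f := fun i => lamF (j+1) x i * Nat.fib (2*i-1))
      (fun i _ => Nat.zero_le _) hmem
    have hone : Nat.fib (2*(j+1)-1) ≤ lamF (j+1) x (j+1) * Nat.fib (2*(j+1)-1) :=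
      Nat.le_mul_of_pos_left _ hd1
    rw [show 2*(j+1)-1 = 2*j+1 by omega] at hone
    exact le_trans hone hsingle
  -- expansions of V(n+2k) and V(n+2k+2)
  have hVk : V (n + 2*(j+1)) = Nat.fib (2*j+1) * V n + Nat.fib (2*j+2) * V (n+1) := by
    have h := hVform (2*j+1)
    rwa [show n+1+(2*j+1) = n+2*(j+1) by omega] at h
  have hVk2 : V (n + 2*(j+1) + 2) = Nat.fib (2*j+3) * V n + Nat.fib (2*j+4) * V (n+1) := by
    have h := hVform (2*j+3)
    rwa [show n+1+(2*j+3) = n+2*(j+1)+2 by omega] at h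
  refine ⟨lamF (j+1) x, fun i _ => lamF_le_two (j+1) x hxfib i, hd1, hrep.symm, ?_, ?_, ?_⟩
  · -- lower bound
    rw [hs_eq, hVk]
    exact Nat.add_le_add (Nat.mul_le_mul_right _ hYlb) (Nat.mul_le_mul_right _ hxge)
  · -- upper bound
    rw [hs_eq, hVk2]
    have h1 : Y * V n ≤ Nat.fib (2*j+3) * V n := Nat.mul_le_mul_right _ hYub
    have h2 : x * V (n+1) < Nat.fib (2*j+4) * V (n+1) :=
      Nat.mul_lt_mul_of_lt_of_le hxlt (le_refl _) (hVpos n)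
    omega
  · -- congruence
    rw [hs_eq]
    have hV2x : V (n+2) = V (n+1) + V n := hVstep n hn
    have e1 : Y * V n + x * V (n+1) ≡ 0 + x * V (n+1) [MOD V n] :=
      Nat.ModEq.add_right _ (Nat.modEq_zero_iff_dvd.mpr (dvd_mul_left _ _))
    have e2 : x * V n + x * V (n+1) ≡ 0 + x * V (n+1) [MOD V n] :=
      Nat.ModEq.add_right _ (Nat.modEq_zero_iff_dvd.mpr (dvd_mul_left _ _))
    have e3 : V (n+2) * x = x * V n + x * V (n+1) := by rw [hV2x]; ring
    rw [e3]
    exact e1.trans e2.symm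
end

section
/- Let a, b be positive integers and let V be the generalized Fibonacci sequence with V_1 = a, V_2 = b and V_n = V_{n-1} + V_{n-2} for all n ≥ 3. Fix a positive integer n. For every positive integer m and every sequence α_1, …, α_m of nonnegative integers, not all zero, there exist a positive integer k and λ_1, …, λ_k with each λ_i ∈ {0,1,2} such that Σ_{i=1}^{k} λ_i·F_{2i} = Σ_{i=1}^{m} α_i·F_{2i} and Σ_{i=1}^{k} λ_i·V_{n+2i} ≤ Σ_{i=1}^{m} α_i·V_{n+2i}. -/
lemma aux_rep (c w : ℕ → ℕ)
    (h1 : c 2 = 3 * c 1) (h2 : ∀ j, 2 ≤ j → c (j+1) + c (j-1) = 3 * c j)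
    (h3 : w 2 ≤ 3 * w 1) (h4 : ∀ j, 2 ≤ j → w (j+1) + w (j-1) = 3 * w j) :
    ∀ W m (α : ℕ → ℕ), 0 < m → (∑ i ∈ Finset.Icc 1 m, α i) ≤ W →
      ∃ k : ℕ, 0 < k ∧ ∃ lam : ℕ → ℕ,
        (∀ i ∈ Finset.Icc 1 k, lam i ≤ 2) ∧
        (∑ i ∈ Finset.Icc 1 k, lam i * c i) = ∑ i ∈ Finset.Icc 1 m, α i * c i ∧
        (∑ i ∈ Finset.Icc 1 k, lam i * w i) ≤ ∑ i ∈ Finset.Icc 1 m, α i * w i := by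
  intro W
  induction W with
  | zero =>
    intro m α hm hW
    refine ⟨m, hm, α, ?_, rfl, le_rfl⟩
    intro i hi
    have := Finset.single_le_sum (f := α) (fun i _ => Nat.zero_le _) hi
    omega
  | succ W ih =>
    intro m α hm hW
    by_cases hall : ∀ i ∈ Finset.Icc 1 m, α i ≤ 2
    · exact ⟨m, hm, α, hall, rfl, le_rfl⟩
    push_neg at hall
    obtain ⟨j, hjmem, hj3⟩ := hall
    rw [Finset.mem_Icc] at hjmem
    obtain ⟨hj1, hjm⟩ := hjmem
    -- truncate α
    set β : ℕ → ℕ := fun i => if i ≤ m then α i else 0 with hβ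
    have hβsum : ∀ g : ℕ → ℕ, (∑ i ∈ Finset.Icc 1 (m+1), β i * g i)
        = ∑ i ∈ Finset.Icc 1 m, α i * g i := by
      intro g
      rw [Finset.sum_Icc_succ_top (by omega : 1 ≤ m + 1)]
      have hz : ¬ (m + 1 ≤ m) := by omega
      rw [show β (m+1) = 0 by simp [hβ, hz], zero_mul, add_zero]
      exact Finset.sum_congr rfl (fun i hi => by
        rw [Finset.mem_Icc] at hi; simp [hβ, hi.2])
    have hβj : β j = α j := by simp [hβ, hjm]
    have hd3 : 3 ≤ β j := by rw [hβj]; omega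
    obtain ⟨d, hd⟩ : ∃ d, β j = d + 3 := ⟨β j - 3, by omega⟩
    have hjmem' : j ∈ Finset.Icc 1 (m+1) := by rw [Finset.mem_Icc]; omega
    have hjmem'' : j + 1 ∈ Finset.Icc 1 (m+1) := by rw [Finset.mem_Icc]; omega
    by_cases hj2 : 2 ≤ j
    · -- interior reduction
      have hjm1 : j - 1 ∈ Finset.Icc 1 (m+1) := by rw [Finset.mem_Icc]; omega
      set α' : ℕ → ℕ := fun i =>
        if i = j then d else if i = j+1 then β (j+1) + 1
        else if i = j-1 then β (j-1) + 1 else β i with hα'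
      have key : ∀ g : ℕ → ℕ,
          (∑ i ∈ Finset.Icc 1 (m+1), α' i * g i) + 3 * g j
            = (∑ i ∈ Finset.Icc 1 (m+1), β i * g i) + g (j+1) + g (j-1) := by
        intro g
        have e1 : ∀ i ∈ Finset.Icc 1 (m+1),
            α' i * g i + (if i = j then 3 * g j else 0)
              = β i * g i + (if i = j+1 then g (j+1) else 0)
                + (if i = j-1 then g (j-1) else 0) := by
          intro i _
          rcases eq_or_ne i j with rfl | hij
          · have n1 : i ≠ i + 1 := by omega
            have n2 : i ≠ i - 1 := by omega
            simp [hα', n1, n2, hd]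
            ring
          · rcases eq_or_ne i (j+1) with rfl | hij1
            · have n2 : j + 1 ≠ j - 1 := by omega
              simp [hα', hij, n2]
              ring
            · rcases eq_or_ne i (j-1) with rfl | hij2
              · simp [hα', hij, hij1]
                ring
              · simp [hα', hij, hij1, hij2]
        calc (∑ i ∈ Finset.Icc 1 (m+1), α' i * g i) + 3 * g j
            = ∑ i ∈ Finset.Icc 1 (m+1),
                (α' i * g i + (if i = j then 3 * g j else 0)) := by
              rw [Finset.sum_add_distrib, Finset.sum_ite_eq' _ j, if_pos hjmem']
          _ = ∑ i ∈ Finset.Icc 1 (m+1),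
                (β i * g i + (if i = j+1 then g (j+1) else 0)
                  + (if i = j-1 then g (j-1) else 0)) :=
              Finset.sum_congr rfl e1
          _ = (∑ i ∈ Finset.Icc 1 (m+1), β i * g i) + g (j+1) + g (j-1) := by
              rw [Finset.sum_add_distrib, Finset.sum_add_distrib,
                Finset.sum_ite_eq' _ (j+1), if_pos hjmem'',
                Finset.sum_ite_eq' _ (j-1), if_pos hjm1]
      -- equality for c
      have hc : (∑ i ∈ Finset.Icc 1 (m+1), α' i * c i)
          = ∑ i ∈ Finset.Icc 1 m, α i * c i := by
        have := key c
        rw [hβsum c] at this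
        have h2' := h2 j hj2
        omega
      -- inequality for w
      have hw : (∑ i ∈ Finset.Icc 1 (m+1), α' i * w i)
          ≤ ∑ i ∈ Finset.Icc 1 m, α i * w i := by
        have := key w
        rw [hβsum w] at this
        have h4' := h4 j hj2
        omega
      -- weight decrease
      have hwt : (∑ i ∈ Finset.Icc 1 (m+1), α' i) ≤ W := by
        have k1 := key (fun _ => 1)
        simp only [mul_one] at k1
        have hb1 : (∑ i ∈ Finset.Icc 1 (m+1), β i) = ∑ i ∈ Finset.Icc 1 m, α i := by
          have := hβsum (fun _ => 1); simpa using this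
        omega
      obtain ⟨k, hk, lam, hbd, hcf, hwf⟩ := ih (m+1) α' (by omega) hwt
      exact ⟨k, hk, lam, hbd, hcf.trans hc, hwf.trans hw⟩
    · -- j = 1
      have hj : j = 1 := by omega
      subst hj
      set α' : ℕ → ℕ := fun i =>
        if i = 1 then d else if i = 2 then β 2 + 1 else β i with hα'
      have key : ∀ g : ℕ → ℕ,
          (∑ i ∈ Finset.Icc 1 (m+1), α' i * g i) + 3 * g 1
            = (∑ i ∈ Finset.Icc 1 (m+1), β i * g i) + g 2 := by
        intro g
        have e1 : ∀ i ∈ Finset.Icc 1 (m+1),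
            α' i * g i + (if i = 1 then 3 * g 1 else 0)
              = β i * g i + (if i = 2 then g 2 else 0) := by
          intro i _
          rcases eq_or_ne i 1 with rfl | hij
          · simp [hα', hd]; ring
          · rcases eq_or_ne i 2 with rfl | hij1
            · simp [hα']; ring
            · simp [hα', hij, hij1]
        calc (∑ i ∈ Finset.Icc 1 (m+1), α' i * g i) + 3 * g 1
            = ∑ i ∈ Finset.Icc 1 (m+1),
                (α' i * g i + (if i = 1 then 3 * g 1 else 0)) := by
              rw [Finset.sum_add_distrib, Finset.sum_ite_eq' _ 1, if_pos hjmem']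
          _ = ∑ i ∈ Finset.Icc 1 (m+1),
                (β i * g i + (if i = 2 then g 2 else 0)) :=
              Finset.sum_congr rfl e1
          _ = (∑ i ∈ Finset.Icc 1 (m+1), β i * g i) + g 2 := by
              rw [Finset.sum_add_distrib, Finset.sum_ite_eq' _ 2,
                if_pos (by simpa using hjmem'')]
      have hc : (∑ i ∈ Finset.Icc 1 (m+1), α' i * c i)
          = ∑ i ∈ Finset.Icc 1 m, α i * c i := by
        have := key c
        rw [hβsum c, h1] at this
        omega
      have hw : (∑ i ∈ Finset.Icc 1 (m+1), α' i * w i)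
          ≤ ∑ i ∈ Finset.Icc 1 m, α i * w i := by
        have := key w
        rw [hβsum w] at this
        omega
      have hwt : (∑ i ∈ Finset.Icc 1 (m+1), α' i) ≤ W := by
        have k1 := key (fun _ => 1)
        simp only [mul_one] at k1
        have hb1 : (∑ i ∈ Finset.Icc 1 (m+1), β i) = ∑ i ∈ Finset.Icc 1 m, α i := by
          have := hβsum (fun _ => 1); simpa using this
        omega
      obtain ⟨k, hk, lam, hbd, hcf, hwf⟩ := ih (m+1) α' (by omega) hwt
      exact ⟨k, hk, lam, hbd, hcf.trans hc, hwf.trans hw⟩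

theorem stmt_10 (a b : ℕ) (ha : 0 < a) (hb : 0 < b)
    (V : ℕ → ℕ) (hV1 : V 1 = a) (hV2 : V 2 = b)
    (hVrec : ∀ n, 3 ≤ n → V n = V (n - 1) + V (n - 2))
    (n : ℕ) (hn : 0 < n) :
    ∀ m : ℕ, 0 < m → ∀ α : ℕ → ℕ, (∃ i ∈ Finset.Icc 1 m, α i ≠ 0) →
      ∃ k : ℕ, 0 < k ∧ ∃ lam : ℕ → ℕ,
        (∀ i ∈ Finset.Icc 1 k, lam i ≤ 2) ∧
        (∑ i ∈ Finset.Icc 1 k, lam i * Nat.fib (2 * i))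
          = ∑ i ∈ Finset.Icc 1 m, α i * Nat.fib (2 * i) ∧
        (∑ i ∈ Finset.Icc 1 k, lam i * V (n + 2 * i))
          ≤ ∑ i ∈ Finset.Icc 1 m, α i * V (n + 2 * i) := by
  intro m hm α _
  have fibkey : ∀ k : ℕ, Nat.fib (k+4) + Nat.fib k = 3 * Nat.fib (k+2) := by
    intro k
    have a1 : Nat.fib (k+2) = Nat.fib k + Nat.fib (k+1) := Nat.fib_add_two
    have a2 : Nat.fib (k+3) = Nat.fib (k+1) + Nat.fib (k+2) := Nat.fib_add_two
    have a3 : Nat.fib (k+4) = Nat.fib (k+2) + Nat.fib (k+3) := Nat.fib_add_two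
    omega
  have Vkey : ∀ k : ℕ, 1 ≤ k → V (k+4) + V k = 3 * V (k+2) := by
    intro k hk
    have e4 := hVrec (k+4) (by omega)
    have e3 := hVrec (k+3) (by omega)
    have e2 := hVrec (k+2) (by omega)
    simp only [show k+4-1 = k+3 from rfl, show k+4-2 = k+2 from rfl,
      show k+3-1 = k+2 from rfl, show k+3-2 = k+1 from rfl,
      show k+2-1 = k+1 from rfl, show k+2-2 = k from rfl] at e4 e3 e2
    omega
  have h1 : Nat.fib (2*2) = 3 * Nat.fib (2*1) := by decide
  have h2 : ∀ j, 2 ≤ j → Nat.fib (2*(j+1)) + Nat.fib (2*(j-1)) = 3 * Nat.fib (2*j) := by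
    intro j hj
    have e1 : 2*(j+1) = (2*(j-1))+4 := by omega
    have e2 : 2*j = (2*(j-1))+2 := by omega
    rw [e1, e2]
    exact fibkey _
  have h3 : V (n + 2*2) ≤ 3 * V (n + 2*1) := by
    have := Vkey n (by omega)
    have e1 : n + 2*2 = n + 4 := by omega
    have e2 : n + 2*1 = n + 2 := by omega
    rw [e1, e2]
    omega
  have h4 : ∀ j, 2 ≤ j → V (n + 2*(j+1)) + V (n + 2*(j-1)) = 3 * V (n + 2*j) := by
    intro j hj
    have e1 : n + 2*(j+1) = (n + 2*(j-1)) + 4 := by omega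
    have e2 : n + 2*j = (n + 2*(j-1)) + 2 := by omega
    rw [e1, e2]
    exact Vkey _ (by omega)
  exact aux_rep (fun i => Nat.fib (2*i)) (fun i => V (n + 2*i)) h1 h2 h3 h4
    (∑ i ∈ Finset.Icc 1 m, α i) m α hm le_rfl
end

section
/- Let a, b be positive integers with gcd(a,b) = 1 and let V be the generalized Fibonacci sequence with V_1 = a, V_2 = b and V_n = V_{n-1} + V_{n-2} for all n ≥ 3. Fix a positive integer n and let S = ⟨{V_{n+2k} : k ≥ 0}⟩. For each integer x with 1 ≤ x ≤ V_n − 1, let m(x) denote the least element of S that is congruent to V_{n+2}·x modulo V_n. Then m is strictly increasing: for all 1 ≤ x < y ≤ V_n − 1, m(x) < m(y). -/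
/-- Partial sums `V (n+2) + V (n+4) + ... + V (n+2k)`. -/
def uAux (V : ℕ → ℕ) (n : ℕ) : ℕ → ℕ
  | 0 => 0
  | k+1 => uAux V n k + V (n + 2*(k+1))

theorem stmt_11 (a b : ℕ) (ha : 0 < a) (hb : 0 < b) (hab : Nat.gcd a b = 1)
    (V : ℕ → ℕ) (hV1 : V 1 = a) (hV2 : V 2 = b)
    (hVrec : ∀ n, 3 ≤ n → V n = V (n - 1) + V (n - 2))
    (n : ℕ) (hn : 0 < n)
    (S : AddSubmonoid ℕ)
    (hS : S = AddSubmonoid.closure {x : ℕ | ∃ k : ℕ, x = V (n + 2 * k)})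
    (m : ℕ → ℕ)
    (hm : ∀ x, 1 ≤ x → x ≤ V n - 1 →
      IsLeast {s : ℕ | s ∈ S ∧ s ≡ V (n + 2) * x [MOD V n]} (m x)) :
    ∀ x y : ℕ, 1 ≤ x → x < y → y ≤ V n - 1 → m x < m y := by
  intro x y hx1 hxy hy
  -- replace n by j+1
  obtain ⟨j, rfl⟩ : ∃ j, n = j + 1 := ⟨n - 1, by omega⟩
  set n := j + 1 with hnj
  -- the recursion in convenient form
  have hrec' : ∀ i, V (i+3) = V (i+2) + V (i+1) := fun i => hVrec (i+3) (by omega)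
  -- positivity
  have hpos2 : ∀ i, 0 < V (i+1) ∧ 0 < V (i+2) := by
    intro i
    induction i with
    | zero => exact ⟨hV1 ▸ ha, hV2 ▸ hb⟩
    | succ k ih => exact ⟨ih.2, by rw [hrec' k]; omega⟩
  have hpos : ∀ i, 0 < V (i+1) := fun i => (hpos2 i).1
  -- coprimality of consecutive terms
  have hcop' : ∀ i, Nat.gcd (V (i+1)) (V (i+2)) = 1 := by
    intro i
    induction i with
    | zero => rw [hV1, hV2]; exact hab
    | succ k ih =>
      rw [hrec' k, add_comm (V (k+2)) (V (k+1)), Nat.gcd_add_self_right, Nat.gcd_comm]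
      exact ih
  have hcop : Nat.gcd (V n) (V (n+1)) = 1 := hcop' j
  -- linear expansion in terms of Fibonacci numbers
  have hlin2 : ∀ i, (V (n+1+i) = Nat.fib (i+1) * V (n+1) + Nat.fib i * V n) ∧
      (V (n+1+(i+1)) = Nat.fib (i+2) * V (n+1) + Nat.fib (i+1) * V n) := by
    intro i
    induction i with
    | zero =>
      constructor
      · simp
      · have h0 : V (n+2) = V (n+1) + V n := hrec' j
        rw [show n+1+1 = n+2 from rfl, h0]
        simp [Nat.fib_one, Nat.fib_two]
    | succ k ih =>
      refine ⟨ih.2, ?_⟩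
      have h1 : V (n+1+(k+2)) = V (n+1+(k+1)) + V (n+1+k) := by
        have h2 := hrec' (n+k)
        rw [show n+1+(k+2) = n+k+3 from by ring, h2,
          show n+k+2 = n+1+(k+1) from by ring, show n+k+1 = n+1+k from by ring]
      have hf1 : Nat.fib (k+1+2) = Nat.fib (k+1) + Nat.fib (k+1+1) := Nat.fib_add_two
      have hf2 : Nat.fib (k+1+1) = Nat.fib (k+2) := by rw [show k+1+1 = k+2 from by omega]
      have hf3 : Nat.fib (k+2) = Nat.fib k + Nat.fib (k+1) := Nat.fib_add_two
      rw [h1, ih.1, ih.2, hf1, hf2, hf3]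
      ring
  have hlin : ∀ i, V (n+1+i) = Nat.fib (i+1) * V (n+1) + Nat.fib i * V n :=
    fun i => (hlin2 i).1
  -- the pair submonoid
  set genT : Set (ℕ × ℕ) := {p | ∃ k, p = (V (n+2*k), Nat.fib (2*k))} with hgenT
  set T : AddSubmonoid (ℕ × ℕ) := AddSubmonoid.closure genT with hT
  -- congruence for elements of T
  have Tcong : ∀ p : ℕ × ℕ, p ∈ T → p.1 ≡ p.2 * V (n+1) [MOD V n] := by
    intro p hp
    refine AddSubmonoid.closure_induction ?_ ?_ ?_ hp
    · rintro q ⟨k, rfl⟩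
      match k with
      | 0 => simpa using (Nat.modEq_zero_iff_dvd).mpr dvd_rfl
      | k+1 =>
        have h1 : V (n+2*(k+1)) = Nat.fib (2*k+2) * V (n+1) + Nat.fib (2*k+1) * V n := by
          have h0 := hlin (2*k+1)
          rw [show n+1+(2*k+1) = n+2*(k+1) from by ring] at h0
          rw [h0]
        show V (n+2*(k+1)) ≡ Nat.fib (2*(k+1)) * V (n+1) [MOD V n]
        rw [h1, show 2*(k+1) = 2*k+2 from by ring]
        have h2 : Nat.fib (2*k+1) * V n ≡ 0 [MOD V n] :=
          (Nat.modEq_zero_iff_dvd).mpr ⟨Nat.fib (2*k+1), by ring⟩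
        simpa using (Nat.ModEq.refl (Nat.fib (2*k+2) * V (n+1))).add h2
    · simpa using Nat.ModEq.refl 0
    · intro p q _ _ hpc hqc
      show p.1 + q.1 ≡ (p.2 + q.2) * V (n+1) [MOD V n]
      rw [add_mul]
      exact hpc.add hqc
  -- relation between S and T
  have hStoT : ∀ s, s ∈ S → ∃ B, (s, B) ∈ T := by
    intro s hs
    rw [hS] at hs
    refine AddSubmonoid.closure_induction ?_ ?_ ?_ hs
    · rintro t ⟨k, rfl⟩
      exact ⟨Nat.fib (2*k), AddSubmonoid.subset_closure ⟨k, rfl⟩⟩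
    · exact ⟨0, T.zero_mem⟩
    · rintro s t _ _ ⟨B1, hB1⟩ ⟨B2, hB2⟩
      exact ⟨B1 + B2, AddSubmonoid.add_mem _ hB1 hB2⟩
  have hTtoS : ∀ p : ℕ × ℕ, p ∈ T → p.1 ∈ S := by
    intro p hp
    rw [hS]
    refine AddSubmonoid.closure_induction ?_ ?_ ?_ hp
    · rintro q ⟨k, rfl⟩
      exact AddSubmonoid.subset_closure ⟨k, rfl⟩
    · exact AddSubmonoid.zero_mem _
    · intro p q _ _ h1 h2
      exact AddSubmonoid.add_mem _ h1 h2
  -- properties of the partial sums uAux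
  have huAux : ∀ k, (uAux V n k, Nat.fib (2*k+1) - 1) ∈ T ∧
      uAux V n k + V (n+1) = V (n+2*k+1) := by
    intro k
    induction k with
    | zero => exact ⟨by simpa [uAux, Prod.mk_zero_zero] using T.zero_mem, by simp [uAux]⟩
    | succ k ih =>
      constructor
      · have hmem : (uAux V n k + V (n + 2*(k+1)),
            (Nat.fib (2*k+1) - 1) + Nat.fib (2*(k+1))) ∈ T :=
          AddSubmonoid.add_mem _ ih.1 (AddSubmonoid.subset_closure ⟨k+1, rfl⟩)
        have he : (Nat.fib (2*k+1) - 1) + Nat.fib (2*(k+1)) = Nat.fib (2*(k+1)+1) - 1 := by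
          have h1 : Nat.fib (2*k+1+2) = Nat.fib (2*k+1) + Nat.fib (2*k+1+1) := Nat.fib_add_two
          have h2 : 0 < Nat.fib (2*k+1) := Nat.fib_pos.mpr (by omega)
          have h3 : Nat.fib (2*(k+1)) = Nat.fib (2*k+1+1) := by
            rw [show 2*(k+1) = 2*k+1+1 from by omega]
          have h4 : Nat.fib (2*(k+1)+1) = Nat.fib (2*k+1+2) := by
            rw [show 2*(k+1)+1 = 2*k+1+2 from by omega]
          rw [h3, h4]
          omega
        rw [← he]
        exact hmem
      · show uAux V n k + V (n+2*(k+1)) + V (n+1) = V (n+2*(k+1)+1)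
        have e1 : n+2*(k+1) = j+2*k+3 := by omega
        have e2 : n+2*(k+1)+1 = j+2*k+4 := by omega
        have e3 : n+2*k+1 = j+2*k+2 := by omega
        have hr : V (j+2*k+1+3) = V (j+2*k+1+2) + V (j+2*k+1+1) := hrec' (j+2*k+1)
        rw [show j+2*k+1+3 = j+2*k+4 from by omega, show j+2*k+1+2 = j+2*k+3 from by omega,
          show j+2*k+1+1 = j+2*k+2 from by omega] at hr
        have h2 := ih.2
        rw [e3] at h2
        rw [e2, e1]
        omega
  -- decrementing a generator
  have hgen : ∀ k, 1 ≤ k → ∃ s', s' < V (n+2*k) ∧ (s', Nat.fib (2*k) - 1) ∈ T := by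
    rintro (_ | k) hk
    · omega
    refine ⟨uAux V n k + V (n+2*k), ?_, ?_⟩
    · have e1 : n+2*(k+1) = j+2*k+3 := by omega
      have e2 : n+2*k+1 = j+2*k+2 := by omega
      have e3 : n+2*k = j+2*k+1 := by omega
      have hr : V (j+2*k+3) = V (j+2*k+2) + V (j+2*k+1) := hrec' (j+2*k)
      have h2 := (huAux k).2
      rw [e2] at h2
      rw [e1, e3]
      have h3 := hpos n
      omega
    · have hmem : (uAux V n k + V (n+2*k), (Nat.fib (2*k+1) - 1) + Nat.fib (2*k)) ∈ T :=
        AddSubmonoid.add_mem _ (huAux k).1 (AddSubmonoid.subset_closure ⟨k, rfl⟩)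
      have he : (Nat.fib (2*k+1) - 1) + Nat.fib (2*k) = Nat.fib (2*(k+1)) - 1 := by
        have h1 : Nat.fib (2*k+2) = Nat.fib (2*k) + Nat.fib (2*k+1) := Nat.fib_add_two
        have h2 : 0 < Nat.fib (2*k+1) := Nat.fib_pos.mpr (by omega)
        have h3 : Nat.fib (2*(k+1)) = Nat.fib (2*k+2) := by
          rw [show 2*(k+1) = 2*k+2 from by omega]
        rw [h3]
        omega
      rw [← he]
      exact hmem
  -- decrementing the weight of an arbitrary element of T
  have hdec : ∀ p : ℕ × ℕ, p ∈ T → 1 ≤ p.2 → ∃ s', s' < p.1 ∧ (s', p.2 - 1) ∈ T := by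
    intro p hp
    refine AddSubmonoid.closure_induction ?_ ?_ ?_ hp
    · rintro q ⟨k, rfl⟩ hq1
      have hk : 1 ≤ k := by
        by_contra hk0
        have hk0' : k = 0 := by omega
        simp [hk0'] at hq1
      obtain ⟨s', hs1, hs2⟩ := hgen k hk
      exact ⟨s', hs1, hs2⟩
    · intro h; simp at h
    · intro p q hpT hqT ihp ihq hpq
      rcases Nat.lt_or_ge p.2 1 with h | h
      · have hq1 : 1 ≤ q.2 := by
          have h0 : (p + q).2 = p.2 + q.2 := rfl
          omega
        obtain ⟨s', hs1, hs2⟩ := ihq hq1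
        refine ⟨p.1 + s', by have h0 : (p+q).1 = p.1 + q.1 := rfl; omega, ?_⟩
        have hmem : p + (s', q.2 - 1) ∈ T := AddSubmonoid.add_mem _ hpT hs2
        have he : p + (s', q.2 - 1) = (p.1 + s', (p + q).2 - 1) := by
          have h0 : (p + q).2 = p.2 + q.2 := rfl
          ext <;> simp <;> omega
        rwa [he] at hmem
      · obtain ⟨s', hs1, hs2⟩ := ihp h
        refine ⟨s' + q.1, by have h0 : (p+q).1 = p.1 + q.1 := rfl; omega, ?_⟩
        have hmem : (s', p.2 - 1) + q ∈ T := AddSubmonoid.add_mem _ hs2 hqT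
        have he : (s', p.2 - 1) + q = (s' + q.1, (p + q).2 - 1) := by
          have h0 : (p + q).2 = p.2 + q.2 := rfl
          ext <;> simp <;> omega
        rwa [he] at hmem
  -- decrementing by d
  have hmulti : ∀ d (p : ℕ × ℕ), p ∈ T → d ≤ p.2 →
      ∃ s', s' ≤ p.1 ∧ (s', p.2 - d) ∈ T ∧ (1 ≤ d → s' < p.1) := by
    intro d
    induction d with
    | zero =>
      intro p hp _
      exact ⟨p.1, le_rfl, by simpa using hp, by omega⟩
    | succ d ih =>
      intro p hp hdp
      obtain ⟨s1, hs1, hs1T⟩ := hdec p hp (by omega)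
      obtain ⟨s', hle, hmem, _⟩ := ih (s1, p.2 - 1) hs1T (by simp; omega)
      refine ⟨s', by simp at hle; omega, ?_, fun _ => by simp at hle; omega⟩
      have he : (s1, p.2 - 1).2 - d = p.2 - (d + 1) := by simp; omega
      rwa [he] at hmem
  -- main argument
  have hVn1 : 0 < V n := hpos j
  have hylt : y < V n := by omega
  obtain ⟨hmyS, hmycong⟩ := (hm y (by omega) hy).1
  obtain ⟨B, hBT⟩ := hStoT (m y) hmyS
  have hc1 : m y ≡ B * V (n+1) [MOD V n] := Tcong (m y, B) hBT
  have hVn2 : V (n+2) = V (n+1) + V n := hrec' j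
  have hc2 : V (n+2) * y ≡ y * V (n+1) [MOD V n] := by
    rw [hVn2, add_mul, mul_comm (V (n+1)) y]
    have h2 : V n * y ≡ 0 [MOD V n] := (Nat.modEq_zero_iff_dvd).mpr ⟨y, rfl⟩
    simpa using (Nat.ModEq.refl (y * V (n+1))).add h2
  have hc3 : B * V (n+1) ≡ y * V (n+1) [MOD V n] :=
    (hc1.symm.trans hmycong).trans hc2
  have hBy : B ≡ y [MOD V n] := Nat.ModEq.cancel_right_of_coprime hcop hc3
  have hyB : y ≤ B := by
    have h1 : B % V n = y % V n := hBy
    have h2 : y % V n = y := Nat.mod_eq_of_lt hylt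
    have h3 : B % V n ≤ B := Nat.mod_le _ _
    omega
  obtain ⟨s', hsle, hsT, hslt⟩ := hmulti (y - x) (m y, B) hBT (by simp; omega)
  have hslt' : s' < m y := hslt (by omega)
  have hs'S : s' ∈ S := hTtoS (s', (m y, B).2 - (y - x)) hsT
  have hs'c : s' ≡ V (n+2) * x [MOD V n] := by
    have hc4 : s' ≡ ((m y, B).2 - (y - x)) * V (n+1) [MOD V n] := Tcong _ hsT
    have hc4' : s' ≡ (B - (y - x)) * V (n+1) [MOD V n] := hc4
    have hdvd : V n ∣ B - y := (Nat.modEq_iff_dvd' hyB).mp hBy.symm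
    have he : B - (y - x) = (B - y) + x := by omega
    have hc5 : (B - (y - x)) * V (n+1) ≡ x * V (n+1) [MOD V n] := by
      rw [he, add_mul]
      have h0 : (B - y) * V (n+1) ≡ 0 [MOD V n] :=
        (Nat.modEq_zero_iff_dvd).mpr (Dvd.dvd.mul_right hdvd _)
      simpa [add_comm] using h0.add (Nat.ModEq.refl (x * V (n+1)))
    have hc6 : x * V (n+1) ≡ V (n+2) * x [MOD V n] := by
      rw [hVn2, add_mul, mul_comm (V (n+1)) x]
      have h2 : V n * x ≡ 0 [MOD V n] := (Nat.modEq_zero_iff_dvd).mpr ⟨x, rfl⟩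
      simpa using ((Nat.ModEq.refl (x * V (n+1))).add h2).symm
    exact (hc4'.trans hc5).trans hc6
  have hmx : m x ≤ s' := (hm x hx1 (by omega)).2 ⟨hs'S, hs'c⟩
  omega
end

section
/- Let a, b be positive integers with gcd(a,b) = 1 and let V be the generalized Fibonacci sequence with V_1 = a, V_2 = b and V_n = V_{n-1} + V_{n-2} for all n ≥ 3. Fix a positive integer n and let S = ⟨{V_{n+2k} : k ≥ 0}⟩. Then for every integer x with 1 ≤ x ≤ V_n − 1 there exist a positive integer k and λ_1, …, λ_k with each λ_i ∈ {0,1,2} and λ_k ≥ 1 such that x = Σ_{i=1}^{k} λ_i·F_{2i} and Σ_{i=1}^{k} λ_i·V_{n+2i} is the least element of S congruent to V_{n+2}·x modulo V_n. -/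
namespace Stmt12Aux

def fval (l : Multiset ℕ) : ℕ := (l.map (fun k => Nat.fib (2*k))).sum
def fcost (l : Multiset ℕ) : ℕ := (l.map (fun k => Nat.fib (2*k - 1))).sum

lemma fval_add (l m : Multiset ℕ) : fval (l + m) = fval l + fval m := by
  simp [fval]
lemma fcost_add (l m : Multiset ℕ) : fcost (l + m) = fcost l + fcost m := by
  simp [fcost]
lemma fval_cons (a : ℕ) (l : Multiset ℕ) : fval (a ::ₘ l) = Nat.fib (2*a) + fval l := by
  simp [fval]
lemma fcost_cons (a : ℕ) (l : Multiset ℕ) : fcost (a ::ₘ l) = Nat.fib (2*a-1) + fcost l := by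
  simp [fcost]
lemma fval_replicate (n a : ℕ) : fval (Multiset.replicate n a) = n * Nat.fib (2*a) := by
  simp [fval, Multiset.map_replicate]
lemma fcost_replicate (n a : ℕ) : fcost (Multiset.replicate n a) = n * Nat.fib (2*a-1) := by
  simp [fcost, Multiset.map_replicate]

lemma cost_le_val {k : ℕ} : Nat.fib (2*k-1) ≤ Nat.fib (2*k) := Nat.fib_mono (by omega)

lemma cost_pos {k : ℕ} (hk : 1 ≤ k) : 0 < Nat.fib (2*k-1) := Nat.fib_pos.mpr (by omega)

lemma val_le_two_cost {k : ℕ} (hk : 1 ≤ k) : Nat.fib (2*k) ≤ 2 * Nat.fib (2*k-1) := by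
  obtain ⟨j, rfl⟩ : ∃ j, k = j + 1 := ⟨k - 1, by omega⟩
  have h : 2*(j+1) = 2*j + 2 := by ring
  have h2 : 2*(j+1) - 1 = 2*j+1 := by omega
  rw [h2, h, Nat.fib_add_two]
  have := Nat.fib_mono (show 2*j ≤ 2*j+1 by omega)
  omega

lemma triple (j : ℕ) : Nat.fib (j+4) + Nat.fib j = 3 * Nat.fib (j+2) := by
  have h1 : Nat.fib (j+4) = Nat.fib (j+2) + Nat.fib (j+3) := Nat.fib_add_two
  have h2 : Nat.fib (j+3) = Nat.fib (j+1) + Nat.fib (j+2) := Nat.fib_add_two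
  have h3 : Nat.fib (j+2) = Nat.fib j + Nat.fib (j+1) := Nat.fib_add_two
  omega

lemma triple_val {i : ℕ} (hi : 2 ≤ i) :
    Nat.fib (2*(i+1)) + Nat.fib (2*(i-1)) = 3 * Nat.fib (2*i) := by
  have := triple (2*(i-1))
  have h1 : 2*(i-1) + 4 = 2*(i+1) := by omega
  have h2 : 2*(i-1) + 2 = 2*i := by omega
  rw [h1, h2] at this; exact this

lemma triple_cost {i : ℕ} (hi : 2 ≤ i) :
    Nat.fib (2*(i+1)-1) + Nat.fib (2*(i-1)-1) = 3 * Nat.fib (2*i-1) := by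
  have := triple (2*(i-1)-1)
  have h1 : 2*(i-1)-1 + 4 = 2*(i+1)-1 := by omega
  have h2 : 2*(i-1)-1 + 2 = 2*i-1 := by omega
  rw [h1, h2] at this; exact this

lemma fcost_le_fval (l : Multiset ℕ) : fcost l ≤ fval l := by
  induction l using Multiset.induction_on with
  | empty => simp [fval, fcost]
  | cons a s ih => rw [fval_cons, fcost_cons]; exact Nat.add_le_add cost_le_val ih

lemma fval_le_two_fcost (l : Multiset ℕ) (h : ∀ i ∈ l, 1 ≤ i) : fval l ≤ 2 * fcost l := by
  induction l using Multiset.induction_on with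
  | empty => simp [fval, fcost]
  | cons a s ih =>
    rw [fval_cons, fcost_cons, Nat.mul_add]
    exact Nat.add_le_add (val_le_two_cost (h a (Multiset.mem_cons_self a s)))
      (ih fun i hi => h i (Multiset.mem_cons_of_mem hi))

lemma card_le_fcost (l : Multiset ℕ) (h : ∀ i ∈ l, 1 ≤ i) : Multiset.card l ≤ fcost l := by
  induction l using Multiset.induction_on with
  | empty => simp [fcost]
  | cons a s ih =>
    rw [fcost_cons, Multiset.card_cons]
    have := cost_pos (h a (Multiset.mem_cons_self a s))
    have := ih fun i hi => h i (Multiset.mem_cons_of_mem hi)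
    omega


lemma core (x : ℕ) (hx : 1 ≤ x) :
    ∃ l₀ : Multiset ℕ, (∀ i ∈ l₀, 1 ≤ i) ∧ (∀ i, l₀.count i ≤ 2) ∧ fval l₀ = x ∧
      ∀ l : Multiset ℕ, (∀ i ∈ l, 1 ≤ i) → fval l = x → fcost l₀ ≤ fcost l := by
  classical
  set P : Multiset ℕ → Prop := fun l => (∀ i ∈ l, 1 ≤ i) ∧ fval l = x with hP
  set M : Multiset ℕ → ℕ := fun l => (x+1) * fcost l + Multiset.card l with hM
  set T : Set ℕ := {c | ∃ l, P l ∧ M l = c} with hT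
  have hTne : T.Nonempty := by
    refine ⟨M (Multiset.replicate x 1), Multiset.replicate x 1, ⟨?_, ?_⟩, rfl⟩
    · intro i hi; rw [Multiset.eq_of_mem_replicate hi]
    · rw [fval_replicate]; norm_num
  obtain ⟨l₀, hl₀P, hl₀M⟩ := Nat.sInf_mem hTne
  have hmin : ∀ l, P l → M l₀ ≤ M l := by
    intro l hl; rw [hl₀M]; exact Nat.sInf_le ⟨l, hl, rfl⟩
  -- cost minimality
  have hcost : ∀ l : Multiset ℕ, (∀ i ∈ l, 1 ≤ i) → fval l = x → fcost l₀ ≤ fcost l := by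
    intro l hl1 hl2
    by_contra hlt
    push_neg at hlt
    have h1 : Multiset.card l ≤ fcost l := card_le_fcost l hl1
    have h2 : fcost l ≤ x := hl2 ▸ fcost_le_fval l
    have := hmin l ⟨hl1, hl2⟩
    simp only [hM] at this
    nlinarith
  refine ⟨l₀, hl₀P.1, ?_, hl₀P.2, hcost⟩
  -- digits ≤ 2
  intro i
  by_contra hcnt
  push_neg at hcnt
  have hi1 : 1 ≤ i := hl₀P.1 i (Multiset.count_pos.mp (by omega))
  obtain ⟨t, ht⟩ := Multiset.le_iff_exists_add.mp
    (Multiset.le_count_iff_replicate_le.mp (show 3 ≤ l₀.count i by omega))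
  have ht1 : ∀ j ∈ t, 1 ≤ j := by
    intro j hj; exact hl₀P.1 j (ht ▸ Multiset.mem_add.mpr (Or.inr hj))
  have hvt : fval l₀ = 3 * Nat.fib (2*i) + fval t := by
    rw [ht, fval_add, fval_replicate]
  have hct : fcost l₀ = 3 * Nat.fib (2*i-1) + fcost t := by
    rw [ht, fcost_add, fcost_replicate]
  have hcard : Multiset.card l₀ = 3 + Multiset.card t := by
    rw [ht]; simp; omega
  rcases Nat.lt_or_ge i 2 with hi2 | hi2
  · -- i = 1 : replace by one 2
    have hieq : i = 1 := by omega
    subst hieq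
    have hlt := hmin (2 ::ₘ t) ⟨?_, ?_⟩
    · simp only [hM] at hlt
      rw [fcost_cons, Multiset.card_cons, hct, hcard] at hlt
      rw [show Nat.fib (2*2-1) = 2 from by decide, show Nat.fib (2*1-1) = 1 from by decide] at hlt
      have h1 := Nat.mul_le_mul_left (x+1) (show 2 + fcost t + 1 ≤ 3*1 + fcost t by omega)
      have h2 : (x+1)*(2 + fcost t + 1) = (x+1)*(2 + fcost t) + (x+1) := by ring
      omega
    · intro j hj
      rcases Multiset.mem_cons.mp hj with h | h
      · omega
      · exact ht1 j h
    · rw [fval_cons, ← hl₀P.2, hvt]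
      norm_num [Nat.fib]
  · -- i ≥ 2 : replace by (i+1) and (i-1)
    have hlt := hmin ((i+1) ::ₘ (i-1) ::ₘ t) ⟨?_, ?_⟩
    · simp only [hM] at hlt
      rw [fcost_cons, fcost_cons, Multiset.card_cons, Multiset.card_cons, hct, hcard] at hlt
      rw [show Nat.fib (2*(i+1)-1) + (Nat.fib (2*(i-1)-1) + fcost t) = 3 * Nat.fib (2*i-1) + fcost t
        from by have := triple_cost hi2; omega] at hlt
      omega
    · intro j hj
      rcases Multiset.mem_cons.mp hj with h | h
      · omega
      rcases Multiset.mem_cons.mp h with h | h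
      · omega
      · exact ht1 j h
    · rw [fval_cons, fval_cons, ← hl₀P.2, hvt]
      have := triple_val hi2
      omega

end Stmt12Aux
theorem stmt_12 (a b : ℕ) (ha : 0 < a) (hb : 0 < b) (hab : Nat.gcd a b = 1)
    (V : ℕ → ℕ) (hV1 : V 1 = a) (hV2 : V 2 = b)
    (hVrec : ∀ n, 3 ≤ n → V n = V (n - 1) + V (n - 2))
    (n : ℕ) (hn : 0 < n)
    (S : AddSubmonoid ℕ)
    (hS : S = AddSubmonoid.closure {x : ℕ | ∃ k : ℕ, x = V (n + 2 * k)}) :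
    ∀ x : ℕ, 1 ≤ x → x ≤ V n - 1 →
      ∃ k : ℕ, 0 < k ∧ ∃ lam : ℕ → ℕ,
        (∀ i ∈ Finset.Icc 1 k, lam i ≤ 2) ∧ 1 ≤ lam k ∧
        x = ∑ i ∈ Finset.Icc 1 k, lam i * Nat.fib (2 * i) ∧
        IsLeast {s : ℕ | s ∈ S ∧ s ≡ V (n + 2) * x [MOD V n]}
          (∑ i ∈ Finset.Icc 1 k, lam i * V (n + 2 * i)) := by
  classical
  intro x hx1 hx2
  open Stmt12Aux in
  have hVn2 : 2 ≤ V n := by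
    by_contra h
    push_neg at h
    omega
  have hxVn : x < V n := by omega
  -- linear recurrence identity
  have key : ∀ j, V (n + 1 + j) = Nat.fib (j+1) * V (n+1) + Nat.fib j * V n ∧
      V (n + 1 + (j+1)) = Nat.fib (j+2) * V (n+1) + Nat.fib (j+1) * V n := by
    intro j
    induction j with
    | zero =>
      constructor
      · simp
      · have h := hVrec (n+2) (by omega)
        have h1 : n + 2 - 1 = n + 1 := by omega
        have h2 : n + 2 - 2 = n := by omega
        rw [h1, h2] at h
        have : n + 1 + (0 + 1) = n + 2 := by omega
        rw [this, h]
        simp [Nat.fib]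
    | succ j ih =>
      refine ⟨ih.2, ?_⟩
      have h := hVrec (n + 1 + (j+2)) (by omega)
      have h1 : n + 1 + (j + 2) - 1 = n + 1 + (j+1) := by omega
      have h2 : n + 1 + (j + 2) - 2 = n + 1 + j := by omega
      rw [h1, h2] at h
      rw [h, ih.1, ih.2]
      have hf : Nat.fib (j+3) = Nat.fib (j+1) + Nat.fib (j+2) := Nat.fib_add_two
      have hf2 : Nat.fib (j+2) = Nat.fib j + Nat.fib (j+1) := Nat.fib_add_two
      rw [hf, hf2]
      ring
  have keyV : ∀ i, 1 ≤ i → V (n + 2*i) = Nat.fib (2*i) * V (n+1) + Nat.fib (2*i-1) * V n := by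
    intro i hi
    have h := (key (2*i - 1)).1
    have h1 : n + 1 + (2*i - 1) = n + 2*i := by omega
    have h2 : 2*i - 1 + 1 = 2*i := by omega
    rw [h1, h2] at h
    exact h
  have hV12 : V (n+2) = V (n+1) + V n := by
    have h := hVrec (n+2) (by omega)
    have h1 : n + 2 - 1 = n + 1 := by omega
    have h2 : n + 2 - 2 = n := by omega
    rw [h1, h2] at h
    exact h
  -- coprimality
  have cop : ∀ m, 1 ≤ m → Nat.gcd (V (m+1)) (V m) = 1 := by
    intro m hm
    induction m, hm using Nat.le_induction with
    | base => rw [hV1, hV2, Nat.gcd_comm]; exact hab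
    | succ m hm ih =>
      have h := hVrec (m+2) (by omega)
      have h1 : m + 2 - 1 = m + 1 := by omega
      have h2 : m + 2 - 2 = m := by omega
      rw [h1, h2] at h
      rw [show m+1+1 = m+2 from rfl, h, Nat.gcd_comm,
        show V (m+1) + V m = V m + V (m+1) from Nat.add_comm _ _,
        Nat.gcd_add_self_right]
      exact ih
  have copn : Nat.gcd (V n) (V (n+1)) = 1 := by rw [Nat.gcd_comm]; exact cop n hn
  -- the optimal representation
  obtain ⟨l₀, hl₀pos, hl₀cnt, hl₀val, hl₀min⟩ := Stmt12Aux.core x hx1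
  have hl₀ne : l₀ ≠ 0 := by
    intro h
    rw [h] at hl₀val
    simp [Stmt12Aux.fval] at hl₀val
    omega
  have hfne : l₀.toFinset.Nonempty := by
    rw [Multiset.toFinset_nonempty]; exact hl₀ne
  set k := l₀.toFinset.max' hfne with hk
  have hkmem : k ∈ l₀ := Multiset.mem_toFinset.mp (l₀.toFinset.max'_mem hfne)
  have hk1 : 1 ≤ k := hl₀pos k hkmem
  have hsub : l₀.toFinset ⊆ Finset.Icc 1 k := by
    intro i hi
    have hi' := Multiset.mem_toFinset.mp hi
    exact Finset.mem_Icc.mpr ⟨hl₀pos i hi', l₀.toFinset.le_max' i hi⟩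
  have hsum : ∀ g : ℕ → ℕ, (Multiset.map g l₀).sum = ∑ i ∈ Finset.Icc 1 k, l₀.count i * g i := by
    intro g
    rw [Finset.sum_multiset_map_count]
    rw [Finset.sum_subset hsub]
    · simp [smul_eq_mul]
    · intro i _ hi
      rw [Multiset.count_eq_zero_of_notMem (fun h => hi (Multiset.mem_toFinset.mpr h))]
      simp
  set lam : ℕ → ℕ := fun i => l₀.count i with hlam
  set c : ℕ := Stmt12Aux.fcost l₀ with hc
  have hxval : x = ∑ i ∈ Finset.Icc 1 k, lam i * Nat.fib (2 * i) := by
    rw [← hl₀val, Stmt12Aux.fval, hsum]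
  have hcval : c = ∑ i ∈ Finset.Icc 1 k, lam i * Nat.fib (2 * i - 1) := by
    rw [hc, Stmt12Aux.fcost, hsum]
  -- the chosen sum value
  have hchos : (∑ i ∈ Finset.Icc 1 k, lam i * V (n + 2 * i)) = V (n+1) * x + V n * c := by
    have : ∀ i ∈ Finset.Icc 1 k, lam i * V (n + 2*i)
        = (lam i * Nat.fib (2*i)) * V (n+1) + (lam i * Nat.fib (2*i-1)) * V n := by
      intro i hi
      rw [keyV i (Finset.mem_Icc.mp hi).1]
      ring
    rw [Finset.sum_congr rfl this, Finset.sum_add_distrib, ← Finset.sum_mul, ← Finset.sum_mul,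
      ← hxval, ← hcval]
    ring
  refine ⟨k, by omega, lam, ?_, ?_, hxval, ?_, ?_⟩
  · intro i _; exact hl₀cnt i
  · exact Multiset.count_pos.mpr hkmem
  · -- membership
    constructor
    · rw [hS]
      apply AddSubmonoid.sum_mem
      intro i hi
      have hmem := AddSubmonoid.nsmul_mem
        (AddSubmonoid.closure {x : ℕ | ∃ k : ℕ, x = V (n + 2 * k)})
        (AddSubmonoid.subset_closure ⟨i, rfl⟩) (lam i)
      simpa using hmem
    · -- congruence
      rw [hchos]
      have h1 : V (n+2) * x = V (n+1) * x + V n * x := by rw [hV12]; ring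
      rw [h1]
      apply Nat.ModEq.add_left
      calc V n * c ≡ 0 [MOD V n] := (Nat.modEq_zero_iff_dvd).mpr ⟨c, rfl⟩
        _ ≡ V n * x [MOD V n] := ((Nat.modEq_zero_iff_dvd).mpr ⟨x, rfl⟩).symm
  · -- lower bound
    rintro s ⟨hsS, hscong⟩
    rw [hS] at hsS
    have hrep : ∃ l : Multiset ℕ, s = (l.map (fun j => V (n + 2*j))).sum := by
      refine AddSubmonoid.closure_induction
        (motive := fun y _ => ∃ l : Multiset ℕ, y = (l.map (fun j => V (n + 2*j))).sum)
        ?_ ?_ ?_ hsS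
      · rintro y ⟨kk, rfl⟩; exact ⟨{kk}, by simp⟩
      · exact ⟨0, by simp⟩
      · rintro y z _ _ ⟨ly, hly⟩ ⟨lz, hlz⟩
        exact ⟨ly + lz, by rw [hly, hlz]; simp⟩
    obtain ⟨l, hl⟩ := hrep
    set l1 := l.filter (fun j => 1 ≤ j) with hl1def
    set l0 := l.filter (fun j => ¬ 1 ≤ j) with hl0def
    have hlsplit : l1 + l0 = l := Multiset.filter_add_not _ _
    have hl1pos : ∀ j ∈ l1, 1 ≤ j := fun j hj => (Multiset.mem_filter.mp hj).2
    have hl0sum : (l0.map (fun j => V (n+2*j))).sum = Multiset.card l0 * V n := by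
      have hcongr : ∀ j ∈ l0, V (n + 2*j) = V n := by
        intro j hj
        have := (Multiset.mem_filter.mp hj).2
        have hj0 : j = 0 := by omega
        rw [hj0]
        simp
      rw [Multiset.map_congr rfl hcongr]
      simp [Multiset.map_const', mul_comm]
    have hsplit : ∀ m : Multiset ℕ, (∀ j ∈ m, 1 ≤ j) →
        (m.map (fun j => V (n+2*j))).sum
          = V (n+1) * Stmt12Aux.fval m + V n * Stmt12Aux.fcost m := by
      intro m
      induction m using Multiset.induction_on with
      | empty => intro _; simp [Stmt12Aux.fval, Stmt12Aux.fcost]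
      | cons a s ih =>
        intro hm
        rw [Multiset.map_cons, Multiset.sum_cons, Stmt12Aux.fval_cons, Stmt12Aux.fcost_cons,
          ih (fun j hj => hm j (Multiset.mem_cons_of_mem hj)),
          keyV a (hm a (Multiset.mem_cons_self a s))]
        ring
    set Y := Stmt12Aux.fval l1 with hY
    set w := Stmt12Aux.fcost l1 + Multiset.card l0 with hw
    have hs : s = V (n+1) * Y + V n * w := by
      rw [hl, ← hlsplit, Multiset.map_add, Multiset.sum_add, hl0sum, hsplit l1 hl1pos, hw]
      ring
    -- congruence manipulation
    have hYx : Y ≡ x [MOD V n] := by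
      apply Nat.ModEq.cancel_left_of_coprime copn
      have e1 : V (n+1) * Y ≡ s [MOD V n] := by
        rw [hs]
        unfold Nat.ModEq
        rw [Nat.add_mul_mod_self_left]
      have e2 : V (n+2) * x ≡ V (n+1) * x [MOD V n] := by
        rw [hV12]
        unfold Nat.ModEq
        rw [add_mul, Nat.add_mul_mod_self_left]
      exact (e1.trans hscong).trans e2
    have hYmod : Y % V n = x := by
      have := hYx
      unfold Nat.ModEq at this
      rw [Nat.mod_eq_of_lt hxVn] at this
      exact this
    have hYeq : Y = V n * (Y / V n) + x := by
      conv_lhs => rw [← Nat.div_add_mod Y (V n)]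
      rw [hYmod]
    set m := Y / V n with hm
    have hcw : c ≤ w := by
      rcases Nat.eq_zero_or_pos m with hm0 | hm1
      · have hYx' : Y = x := by
          rw [hm0, Nat.mul_zero] at hYeq; omega
        have := hl₀min l1 hl1pos (by rw [← hY, hYx'])
        omega
      · have h1 : c ≤ x := by
          have := Stmt12Aux.fcost_le_fval l₀
          omega
        have h2 : Y ≤ 2 * Stmt12Aux.fcost l1 := Stmt12Aux.fval_le_two_fcost l1 hl1pos
        have h3 : V n ≤ V n * m := Nat.le_mul_of_pos_right _ hm1
        omega
    have hxY : x ≤ Y := by omega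
    rw [hchos, hs]
    exact Nat.add_le_add (Nat.mul_le_mul_left _ hxY) (Nat.mul_le_mul_left _ hcw)
end

section
/- Let a, b be positive integers with gcd(a,b) = 1 and let V be the generalized Fibonacci sequence with V_1 = a, V_2 = b and V_n = V_{n-1} + V_{n-2} for all n ≥ 3. Fix a positive integer n with V_n ≥ 2, a positive integer m with m > 2 and F_m ≤ V_n − 1, and let S = ⟨{V_{n+2k} : k ≥ 0}⟩. Then the least element of S congruent to V_{n+2}·F_m modulo V_n equals V_{n+m} + V_n if m is odd, and equals V_{n+m} if m is even. -/
open Nat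

/-- Cassini-type identity for odd indices. -/
lemma cassini13 (k : ℕ) :
    fib (2*k+1) * fib (2*k+1) = fib (2*k+2) * fib (2*k) + 1 := by
  induction k with
  | zero => simp
  | succ k ih =>
    have h2 : fib (2*k+2) = fib (2*k) + fib (2*k+1) := Nat.fib_add_two
    have h3 : fib (2*k+3) = fib (2*k+1) + fib (2*k+2) := by
      have h := Nat.fib_add_two (n := 2*k+1)
      rwa [show 2*k+1+2 = 2*k+3 from by ring, show 2*k+1+1 = 2*k+2 from by ring] at h
    have h4 : fib (2*k+4) = fib (2*k+2) + fib (2*k+3) := by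
      have h := Nat.fib_add_two (n := 2*k+2)
      rwa [show 2*k+2+2 = 2*k+4 from by ring, show 2*k+2+1 = 2*k+3 from by ring] at h
    rw [show 2*(k+1)+1 = 2*k+3 from by ring, show 2*(k+1)+2 = 2*k+4 from by ring,
      show 2*(k+1) = 2*k+2 from by ring, h4, h3]
    zify at ih h2 ⊢
    linear_combination ih - (fib (2*k+2) : ℤ) * h2

/-- d'Ocagne-type identity. -/
lemma key13 (k d : ℕ) :
    fib (2*k+1) * fib (2*k+2+d) = fib (2*k+2) * fib (2*k+1+d) + fib d := by
  induction d using Nat.twoStepInduction with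
  | zero => simp [Nat.mul_comm]
  | one =>
    have h2 : fib (2*k+2) = fib (2*k) + fib (2*k+1) := Nat.fib_add_two
    have h3 : fib (2*k+3) = fib (2*k+1) + fib (2*k+2) := by
      have h := Nat.fib_add_two (n := 2*k+1)
      rwa [show 2*k+1+2 = 2*k+3 from by ring, show 2*k+1+1 = 2*k+2 from by ring] at h
    have hc := cassini13 k
    rw [show 2*k+2+1 = 2*k+3 from by ring, show 2*k+1+1 = 2*k+2 from by ring, h3,
      Nat.fib_one]
    zify at hc h2 ⊢
    linear_combination hc - (fib (2*k+2) : ℤ) * h2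
  | more d ih1 ih2 =>
    have A : fib (2*k+2+(d+2)) = fib (2*k+2+d) + fib (2*k+2+(d+1)) := by
      have h := Nat.fib_add_two (n := 2*k+2+d)
      rwa [show 2*k+2+d+2 = 2*k+2+(d+2) from by ring,
        show 2*k+2+d+1 = 2*k+2+(d+1) from by ring] at h
    have B : fib (2*k+1+(d+2)) = fib (2*k+1+d) + fib (2*k+1+(d+1)) := by
      have h := Nat.fib_add_two (n := 2*k+1+d)
      rwa [show 2*k+1+d+2 = 2*k+1+(d+2) from by ring,
        show 2*k+1+d+1 = 2*k+1+(d+1) from by ring] at h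
    have C : fib (d+2) = fib d + fib (d+1) := Nat.fib_add_two
    rw [A, B, C, Nat.mul_add, Nat.mul_add]
    omega

theorem stmt_13 (a b : ℕ) (ha : 0 < a) (hb : 0 < b) (hab : Nat.gcd a b = 1)
    (V : ℕ → ℕ) (hV1 : V 1 = a) (hV2 : V 2 = b)
    (hVrec : ∀ n, 3 ≤ n → V n = V (n - 1) + V (n - 2))
    (n : ℕ) (hn : 0 < n) (hVn : 2 ≤ V n)
    (m : ℕ) (hm : 2 < m) (hmVn : Nat.fib m ≤ V n - 1)
    (S : AddSubmonoid ℕ)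
    (hS : S = AddSubmonoid.closure {x : ℕ | ∃ k : ℕ, x = V (n + 2 * k)}) :
    IsLeast {s : ℕ | s ∈ S ∧ s ≡ V (n + 2) * Nat.fib m [MOD V n]}
      (if Odd m then V (n + m) + V n else V (n + m)) := by
  subst hS
  set G : Set ℕ := {x : ℕ | ∃ k : ℕ, x = V (n + 2 * k)} with hG
  set ε : ℕ := if Odd m then 1 else 0 with hε
  have hεle : ε ≤ 1 := by rw [hε]; split <;> omega
  -- fib facts
  have hfib2 : 2 ≤ fib m := by
    have : fib 3 ≤ fib m := Nat.fib_mono hm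
    simpa [show fib 3 = 2 from rfl] using this
  have hfibm1 : 1 ≤ fib (m-1) := Nat.fib_pos.mpr (by omega)
  have hfibm2 : 1 ≤ fib (m-2) := Nat.fib_pos.mpr (by omega)
  have hfibmsplit : fib m = fib (m-2) + fib (m-1) := by
    have h := Nat.fib_add_two (n := m-2)
    rw [show m-2+2 = m from by omega, show m-2+1 = m-1 from by omega] at h
    exact h
  have hfibm1split : fib (m+1) = fib (m-1) + fib m := by
    have h := Nat.fib_add_two (n := m-1)
    rw [show m-1+2 = m+1 from by omega, show m-1+1 = m from by omega] at h
    exact h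
  -- recurrence in convenient form
  have hrec : ∀ p : ℕ, V (n + p + 2) = V (n + p) + V (n + p + 1) := by
    intro p
    have h := hVrec (n + p + 2) (by omega)
    rw [show n+p+2-1 = n+p+1 from by omega, show n+p+2-2 = n+p from by omega] at h
    omega
  -- representation V (n+p+1) = fib p * V n + fib (p+1) * V (n+1)
  have hBrep : ∀ p : ℕ, V (n + p + 1) = fib p * V n + fib (p+1) * V (n+1) := by
    intro p
    induction p using Nat.twoStepInduction with
    | zero => simp
    | one =>
      have h := hrec 0
      rw [show n+1+1 = n+0+2 from by omega, h, show n+0 = n from by omega,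
        show n+0+1 = n+1 from by omega]
      norm_num
    | more p ih1 ih2 =>
      have h := hrec (p+1)
      rw [show n+(p+1)+2 = n+p+3 from by omega, show n+(p+1)+1 = n+p+2 from by omega,
        show n+(p+1) = n+p+1 from by omega] at h
      rw [show n+(p+1)+1 = n+p+2 from by omega, show p+1+1 = p+2 from by omega] at ih2
      rw [show n+(p+2)+1 = n+p+3 from by omega, h]
      have f1 : fib (p+2) = fib p + fib (p+1) := Nat.fib_add_two
      have f2 : fib (p+2+1) = fib (p+1) + fib (p+2) := by
        have h' := Nat.fib_add_two (n := p+1)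
        rwa [show p+1+2 = p+2+1 from by ring, show p+1+1 = p+2 from by ring] at h'
      rw [ih1, ih2, f2, f1]
      ring
  have hBm : V (n + m) = fib (m-1) * V n + fib m * V (n+1) := by
    have h := hBrep (m-1)
    rw [show n+(m-1)+1 = n+m from by omega, show m-1+1 = m from by omega] at h
    exact h
  have hVn2 : V (n+2) = V n + V (n+1) := by
    have h := hrec 0
    rw [show n+0+2 = n+2 from by omega, show n+0 = n from by omega,
      show n+0+1 = n+1 from by omega] at h
    exact h
  -- coprimality of consecutive terms
  have hcop : ∀ i : ℕ, Nat.gcd (V (i+1)) (V (i+2)) = 1 := by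
    intro i
    induction i with
    | zero => simpa [hV1, hV2] using hab
    | succ i ih =>
      have h := hVrec (i+3) (by omega)
      rw [show i+3-1 = i+2 from by omega, show i+3-2 = i+1 from by omega] at h
      rw [show i+1+1 = i+2 from by omega, show i+1+2 = i+3 from by omega, h,
        Nat.add_comm (V (i+2)) (V (i+1)), Nat.gcd_add_self_right, Nat.gcd_comm]
      exact ih
  have hcopn : Nat.gcd (V n) (V (n+1)) = 1 := by
    have h := hcop (n-1)
    rw [show n-1+1 = n from by omega, show n-1+2 = n+1 from by omega] at h
    exact h
  have hfmlt : fib m < V n := by omega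
  -- the target
  have htarget : (if Odd m then V (n + m) + V n else V (n + m)) = V (n+m) + ε * V n := by
    rw [hε]; split <;> simp
  rw [htarget]
  constructor
  · -- membership
    constructor
    · -- in S
      show V (n+m) + ε * V n ∈ AddSubmonoid.closure G
      by_cases hodd : Odd m
      · have hε1 : ε = 1 := by rw [hε, if_pos hodd]
        rw [hε1, Nat.one_mul]
        obtain ⟨k, hk⟩ := hodd
        have mem : ∀ j : ℕ, V (n + (2*j+1)) + V n ∈ AddSubmonoid.closure G := by
          intro j
          induction j with
          | zero =>
            have he : V (n + (2*0+1)) + V n = V (n + 2*1) := by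
              rw [show n+(2*0+1) = n+1 from by omega, show n+2*1 = n+0+2 from by omega,
                hrec 0, show n+0 = n from by omega, show n+0+1 = n+1 from by omega]
              omega
            rw [he]
            exact AddSubmonoid.subset_closure ⟨1, rfl⟩
          | succ j ihj =>
            have h := hrec (2*j+1)
            have he : V (n + (2*(j+1)+1)) + V n = V (n + 2*(j+1)) + (V (n + (2*j+1)) + V n) := by
              rw [show n + (2*(j+1)+1) = n + (2*j+1) + 2 from by omega, h,
                show n + (2*j+1) + 1 = n + 2*(j+1) from by omega]
              omega
            rw [he]
            exact AddSubmonoid.add_mem _ (AddSubmonoid.subset_closure ⟨j+1, rfl⟩) ihj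
        have h := mem k
        rw [show n + (2*k+1) = n + m from by omega] at h
        exact h
      · have hε0 : ε = 0 := by rw [hε, if_neg hodd]
        rw [hε0, Nat.zero_mul, Nat.add_zero]
        have heven : ∃ k, m = 2*k := by
          rcases Nat.even_or_odd m with h | h
          · obtain ⟨k, hk⟩ := h; exact ⟨k, by omega⟩
          · exact absurd h hodd
        obtain ⟨k, hk⟩ := heven
        rw [hk]
        exact AddSubmonoid.subset_closure ⟨k, rfl⟩
    · -- congruence
      show V (n+m) + ε * V n ≡ V (n + 2) * fib m [MOD V n]
      have l1 : V (n+m) + ε * V n = fib m * V (n+1) + (fib (m-1) + ε) * V n := by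
        rw [hBm]; ring
      have l2 : V (n+2) * fib m = fib m * V (n+1) + fib m * V n := by
        rw [hVn2]; ring
      show _ % _ = _ % _
      rw [l1, l2, Nat.add_mul_mod_self_right, Nat.add_mul_mod_self_right]
  · -- lower bound
    rintro s ⟨hsS, hsmod⟩
    -- invariant via closure induction
    have hQ : ∃ c t : ℕ, s = c * V n + t * V (n+1) ∧ t ≤ 2*c ∧
        ((c = 0 ∧ t = 0) ∨ fib (m+1) ≤ t ∨ t * fib (m-1) + ε ≤ c * fib m) := by
      refine AddSubmonoid.closure_induction ?_ ?_ ?_ hsS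
      · rintro x ⟨k, rfl⟩
        rcases k with _ | k'
        · exact ⟨1, 0, by simp, by omega, Or.inr (Or.inr (by omega))⟩
        · have hx : V (n + 2*(k'+1)) = fib (2*k'+1) * V n + fib (2*k'+2) * V (n+1) := by
            have h := hBrep (2*k'+1)
            rw [show n + (2*k'+1) + 1 = n + 2*(k'+1) from by omega,
              show 2*k'+1+1 = 2*k'+2 from by omega] at h
            exact h
          refine ⟨fib (2*k'+1), fib (2*k'+2), hx, ?_, ?_⟩
          · have h1 : fib (2*k'+2) = fib (2*k') + fib (2*k'+1) := Nat.fib_add_two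
            have h2 : fib (2*k') ≤ fib (2*k'+1) := Nat.fib_mono (by omega)
            omega
          · by_cases h2k : 2*(k'+1) ≤ m
            · right; right
              have hk := key13 k' (m - (2*k'+2))
              rw [show 2*k'+2+(m-(2*k'+2)) = m from by omega,
                show 2*k'+1+(m-(2*k'+2)) = m-1 from by omega] at hk
              have hεd : ε ≤ fib (m - (2*k'+2)) := by
                rw [hε]; split
                · rename_i hodd
                  refine Nat.fib_pos.mpr ?_
                  rcases hodd with ⟨j, hj⟩
                  omega
                · omega
              omega
            · right; left
              exact Nat.fib_mono (by omega)
      · exact ⟨0, 0, by simp, by omega, Or.inl ⟨rfl, rfl⟩⟩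
      · rintro x y hx hy ⟨c1, t1, hx1, hx2, hx3⟩ ⟨c2, t2, hy1, hy2, hy3⟩
        refine ⟨c1+c2, t1+t2, by rw [hx1, hy1]; ring, by omega, ?_⟩
        rcases hx3 with ⟨h1, h2⟩ | h | h
        · subst h1; subst h2; simpa using hy3
        · exact Or.inr (Or.inl (le_trans h (by omega)))
        · rcases hy3 with ⟨h1, h2⟩ | h' | h'
          · subst h1; subst h2; right; right; simpa using h
          · exact Or.inr (Or.inl (le_trans h' (by omega)))
          · right; right
            rw [Nat.add_mul, Nat.add_mul]
            omega
    obtain ⟨c, t, hst, htc, hdisj⟩ := hQ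
    -- derive t ≡ fib m [MOD V n]
    have h1 : t * V (n+1) ≡ fib m * V (n+1) [MOD V n] := by
      have e1 : s ≡ t * V (n+1) [MOD V n] := by
        show _ % _ = _ % _
        rw [hst, Nat.add_comm, Nat.add_mul_mod_self_right]
      have e2 : V (n+2) * fib m ≡ fib m * V (n+1) [MOD V n] := by
        show _ % _ = _ % _
        rw [hVn2, show (V n + V (n+1)) * fib m = fib m * V (n+1) + fib m * V n from by ring,
          Nat.add_mul_mod_self_right]
      exact (e1.symm.trans hsmod).trans e2
    have htm : t ≡ fib m [MOD V n] :=
      Nat.ModEq.cancel_right_of_coprime hcopn h1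
    have htge : t = fib m ∨ fib m + V n ≤ t := by
      by_cases hlt : t < V n
      · left
        have h := htm
        unfold Nat.ModEq at h
        rw [Nat.mod_eq_of_lt hlt, Nat.mod_eq_of_lt hfmlt] at h
        exact h
      · right
        have hle : fib m ≤ t := by omega
        have hdvd : V n ∣ t - fib m := (Nat.modEq_iff_dvd' hle).mp htm.symm
        obtain ⟨q, hq⟩ := hdvd
        rcases Nat.eq_zero_or_pos q with hq0 | hq0
        · subst hq0; omega
        · have h2 : V n ≤ V n * q := Nat.le_mul_of_pos_right (V n) hq0
          omega
    -- conclude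
    have hkey : fib (m-1) + ε ≤ c ∧ fib m ≤ t := by
      rcases htge with hteq | htbig
      · subst hteq
        rcases hdisj with ⟨h1', h2'⟩ | h | h
        · omega
        · omega
        · refine ⟨?_, le_refl _⟩
          have hmc : fib m * fib (m-1) = fib (m-1) * fib m := Nat.mul_comm _ _
          rw [hmc] at h
          rcases Nat.lt_or_ge c (fib (m-1) + ε) with hcon | hcon
          · exfalso
            have hε01 : ε = 0 ∨ ε = 1 := by omega
            rcases hε01 with hε0 | hε1
            · rw [hε0] at hcon h
              have h2 : (c+1) * fib m ≤ fib (m-1) * fib m :=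
                Nat.mul_le_mul_right _ (by omega)
              rw [Nat.add_mul] at h2
              omega
            · rw [hε1] at hcon h
              have h2 : c * fib m ≤ fib (m-1) * fib m :=
                Nat.mul_le_mul_right _ (by omega)
              omega
          · exact hcon
      · exact ⟨by omega, by omega⟩
    rw [hst, hBm]
    calc fib (m-1) * V n + fib m * V (n+1) + ε * V n
        = (fib (m-1) + ε) * V n + fib m * V (n+1) := by ring
      _ ≤ c * V n + t * V (n+1) :=
        Nat.add_le_add (Nat.mul_le_mul_right _ hkey.1) (Nat.mul_le_mul_right _ hkey.2)
end

section
/- Let a, b be positive integers with gcd(a,b) = 1 and let V be the generalized Fibonacci sequence with V_1 = a, V_2 = b and V_n = V_{n-1} + V_{n-2} for all n ≥ 3. Fix a positive integer n with V_n ≥ 2, a positive integer m with m > 2 and F_m − 1 ≤ V_n − 1 and F_m − 1 ≥ 1, and let S = ⟨{V_{n+2k} : k ≥ 0}⟩. Then the least element of S congruent to V_{n+2}·(F_m − 1) modulo V_n equals V_{n+m} − V_{n+1}. -/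
private lemma fibkey (s : ℕ) : ∀ t : ℕ,
    (Nat.fib (s + t + 1) : ℤ) * Nat.fib t + (-1) ^ t * Nat.fib s
      = (Nat.fib (s + t) : ℤ) * Nat.fib (t + 1) := by
  intro t
  induction t with
  | zero => simp
  | succ t ih =>
    have h1 : s + (t + 1) + 1 = (s + t) + 2 := by omega
    have h2 : s + (t + 1) = (s + t) + 1 := by omega
    have h3 : t + 1 + 1 = t + 2 := rfl
    rw [h1, h2, h3, Nat.fib_add_two (n := s + t), Nat.fib_add_two (n := t)]
    push_cast
    linear_combination -ih

private lemma fib_ineq {k m' : ℕ} (h : 2 * k + 1 ≤ m') :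
    Nat.fib m' * Nat.fib (2 * k + 2) ≤ Nat.fib (m' + 1) * Nat.fib (2 * k + 1) := by
  have hk := fibkey (m' - (2 * k + 1)) (2 * k + 1)
  have hs1 : m' - (2 * k + 1) + (2 * k + 1) = m' := by omega
  rw [hs1] at hk
  have hpow : ((-1 : ℤ)) ^ (2 * k + 1) = -1 := by
    rw [pow_succ, pow_mul]; norm_num
  rw [hpow] at hk
  have h0 : (0 : ℤ) ≤ Nat.fib (m' - (2 * k + 1)) := by positivity
  have : (Nat.fib m' : ℤ) * Nat.fib (2 * k + 1 + 1) ≤ (Nat.fib (m' + 1) : ℤ) * Nat.fib (2 * k + 1) := by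
    linarith [hk]
  have h4 : 2 * k + 1 + 1 = 2 * k + 2 := rfl
  rw [h4] at this
  exact_mod_cast this

theorem stmt_14 (a b : ℕ) (ha : 0 < a) (hb : 0 < b) (hab : Nat.gcd a b = 1)
    (V : ℕ → ℕ) (hV1 : V 1 = a) (hV2 : V 2 = b)
    (hVrec : ∀ n, 3 ≤ n → V n = V (n - 1) + V (n - 2))
    (n : ℕ) (hn : 0 < n) (hVn : 2 ≤ V n)
    (m : ℕ) (hm : 2 < m) (hmVn : Nat.fib m - 1 ≤ V n - 1) (hm1 : 1 ≤ Nat.fib m - 1)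
    (S : AddSubmonoid ℕ)
    (hS : S = AddSubmonoid.closure {x : ℕ | ∃ k : ℕ, x = V (n + 2 * k)}) :
    IsLeast {s : ℕ | s ∈ S ∧ s ≡ V (n + 2) * (Nat.fib m - 1) [MOD V n]}
      (V (n + m) - V (n + 1)) := by
  subst hS
  -- recurrence in convenient form
  have hrec : ∀ k, 1 ≤ k → V (k + 2) = V (k + 1) + V k := by
    intro k hk
    have h := hVrec (k + 2) (by omega)
    simpa using h
  -- generators
  have hgen : ∀ k, V (n + 2 * k) ∈ AddSubmonoid.closure {x : ℕ | ∃ k : ℕ, x = V (n + 2 * k)} :=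
    fun k => AddSubmonoid.subset_closure ⟨k, rfl⟩
  -- the basic identity V (n+j+1) = fib (j+1) * V (n+1) + fib j * V n
  have hId : ∀ j, V (n + j + 1) = Nat.fib (j + 1) * V (n + 1) + Nat.fib j * V n := by
    intro j
    induction j using Nat.twoStepInduction with
    | zero => simp
    | one =>
      have h := hrec n hn
      have e : n + 1 + 1 = n + 2 := rfl
      rw [e, h]
      simp [Nat.fib_one, Nat.fib_two]
    | more j ih1 ih2 =>
      have e3 : V (n + (j + 2) + 1) = V (n + (j + 1) + 1) + V (n + j + 1) := by
        have h := hrec (n + j + 1) (by omega)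
        have e : n + (j + 2) + 1 = (n + j + 1) + 2 := by omega
        have e' : n + (j + 1) + 1 = (n + j + 1) + 1 := by omega
        rw [e, e', h]
      rw [e3, ih1, ih2]
      have f3 : Nat.fib (j + 2 + 1) = Nat.fib (j + 1) + Nat.fib (j + 2) := by
        have e : j + 2 + 1 = (j + 1) + 2 := by omega
        rw [e, Nat.fib_add_two]
      have f2 : Nat.fib (j + 2) = Nat.fib j + Nat.fib (j + 1) := Nat.fib_add_two
      rw [f3, f2]
      ring
  -- coprimality
  have hcop : Nat.gcd (V n) (V (n + 1)) = 1 := by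
    have hall : ∀ k, 1 ≤ k → Nat.gcd (V k) (V (k + 1)) = 1 := by
      intro k hk
      induction k with
      | zero => omega
      | succ k ih =>
        rcases Nat.lt_or_ge 0 k with h | h
        · have ihh := ih h
          rw [hrec k h, Nat.add_comm (V (k + 1)) (V k), Nat.gcd_add_self_right]
          rw [Nat.gcd_comm]
          exact ihh
        · have hk0 : k = 0 := by omega
          subst hk0
          rw [hV1, hV2]; exact hab
    exact hall n hn
  -- facts about fib m
  have hfm : 2 ≤ Nat.fib m := by omega
  have hfmlt : Nat.fib (m - 1) < Nat.fib m := by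
    have := Nat.fib_lt_fib_succ (n := m - 1) (by omega)
    have e : m - 1 + 1 = m := by omega
    rwa [e] at this
  have hfm1pos : 0 < Nat.fib (m - 1) := Nat.fib_pos.mpr (by omega)
  -- the closed form of the candidate
  have hVnm : V (n + m) = Nat.fib m * V (n + 1) + Nat.fib (m - 1) * V n := by
    have h := hId (m - 1)
    have e : n + (m - 1) + 1 = n + m := by omega
    have e2 : m - 1 + 1 = m := by omega
    rw [e, e2] at h
    exact h
  have hle : V (n + 1) ≤ Nat.fib m * V (n + 1) :=
    Nat.le_mul_of_pos_left _ (by omega)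
  have hc : V (n + m) - V (n + 1)
      = (Nat.fib m - 1) * V (n + 1) + Nat.fib (m - 1) * V n := by
    rw [hVnm, Nat.sub_mul, one_mul]
    omega
  -- congruence of the candidate
  have hmod2 : V (n + 2) * (Nat.fib m - 1) % V n = ((Nat.fib m - 1) * V (n + 1)) % V n := by
    rw [hrec n hn, add_mul, mul_comm (V (n + 1)) (Nat.fib m - 1),
      mul_comm (V n) (Nat.fib m - 1), Nat.add_mul_mod_self_right]
  have hcand_mod : (V (n + m) - V (n + 1)) ≡ V (n + 2) * (Nat.fib m - 1) [MOD V n] := by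
    show (V (n + m) - V (n + 1)) % V n = _ % V n
    rw [hc, Nat.add_mul_mod_self_right, hmod2]
  -- membership of the candidate
  have hmemS : V (n + m) - V (n + 1) ∈
      AddSubmonoid.closure {x : ℕ | ∃ k : ℕ, x = V (n + 2 * k)} := by
    have hodd : ∀ t, ∃ s ∈ AddSubmonoid.closure {x : ℕ | ∃ k : ℕ, x = V (n + 2 * k)},
        V (n + (2 * t + 3)) = V (n + 1) + s := by
      intro t
      induction t with
      | zero =>
        refine ⟨V (n + 2 * 1), hgen 1, ?_⟩
        have h := hrec (n + 1) (by omega)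
        have e : n + (2 * 0 + 3) = (n + 1) + 2 := by omega
        have e2 : n + 2 * 1 = (n + 1) + 1 := by omega
        rw [e, e2, h, Nat.add_comm]
      | succ t ih =>
        obtain ⟨s, hsS, hs⟩ := ih
        refine ⟨s + V (n + 2 * (t + 2)), AddSubmonoid.add_mem _ hsS (hgen (t + 2)), ?_⟩
        have h := hrec (n + (2 * t + 3)) (by omega)
        have e : n + (2 * (t + 1) + 3) = (n + (2 * t + 3)) + 2 := by omega
        have e2 : n + 2 * (t + 2) = (n + (2 * t + 3)) + 1 := by omega
        rw [e, h, hs, e2]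
        ring
    have key : ∃ s ∈ AddSubmonoid.closure {x : ℕ | ∃ k : ℕ, x = V (n + 2 * k)},
        V (n + m) = V (n + 1) + s := by
      rcases Nat.even_or_odd m with he | ho
      · -- m even, m ≥ 4, m = 2t+4
        obtain ⟨t, ht⟩ : ∃ t, m = 2 * t + 4 := by
          obtain ⟨r, hr⟩ := he; exact ⟨(m - 4) / 2, by omega⟩
        subst ht
        obtain ⟨s, hsS, hs⟩ := hodd t
        refine ⟨s + V (n + 2 * (t + 1)), AddSubmonoid.add_mem _ hsS (hgen (t + 1)), ?_⟩
        have h := hrec (n + 2 * (t + 1)) (by omega)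
        have e : n + (2 * t + 4) = (n + 2 * (t + 1)) + 2 := by omega
        have e2 : n + (2 * t + 3) = (n + 2 * (t + 1)) + 1 := by omega
        rw [e, h, ← e2, hs]
        ring
      · obtain ⟨t, ht⟩ : ∃ t, m = 2 * t + 3 := by
          obtain ⟨r, hr⟩ := ho; exact ⟨(m - 3) / 2, by omega⟩
        subst ht
        exact hodd t
    obtain ⟨s, hsS, hs⟩ := key
    have : V (n + m) - V (n + 1) = s := by omega
    rwa [this]
  constructor
  · exact ⟨hmemS, hcand_mod⟩
  -- lower bound
  · rintro s ⟨hsS, hscong⟩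
    -- representation invariant
    have hrepAll : ∀ x ∈ AddSubmonoid.closure {x : ℕ | ∃ k : ℕ, x = V (n + 2 * k)},
        ∃ D E : ℕ, x = D * V (n + 1) + E * V n ∧ D ≤ 2 * E ∧
          (Nat.fib (m - 1) * D ≤ Nat.fib m * E ∨ Nat.fib (m + 1) ≤ D) := by
      intro x hx
      induction hx using AddSubmonoid.closure_induction with
      | mem x hx =>
        obtain ⟨k, rfl⟩ := hx
        match k with
        | 0 =>
          refine ⟨0, 1, by simp, by omega, Or.inl (by simp)⟩
        | (k + 1) =>
          refine ⟨Nat.fib (2 * k + 2), Nat.fib (2 * k + 1), ?_, ?_, ?_⟩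
          · have h := hId (2 * k + 1)
            have e : n + 2 * (k + 1) = n + (2 * k + 1) + 1 := by omega
            have e2 : 2 * k + 1 + 1 = 2 * k + 2 := rfl
            rw [e, h, e2]
          · have h1 : Nat.fib (2 * k) ≤ Nat.fib (2 * k + 1) := Nat.fib_mono (by omega)
            have h2 : Nat.fib (2 * k + 2) = Nat.fib (2 * k) + Nat.fib (2 * k + 1) :=
              Nat.fib_add_two
            omega
          · by_cases hk : 2 * k + 2 ≤ m
            · left
              have h := fib_ineq (k := k) (m' := m - 1) (by omega)
              have e : m - 1 + 1 = m := by omega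
              rwa [e] at h
            · right
              exact Nat.fib_mono (by omega)
      | zero => exact ⟨0, 0, by simp, by omega, Or.inl (by simp)⟩
      | add x y hx hy ihx ihy =>
        obtain ⟨D1, E1, h1, h2, h3⟩ := ihx
        obtain ⟨D2, E2, h4, h5, h6⟩ := ihy
        refine ⟨D1 + D2, E1 + E2, by rw [h1, h4]; ring, by omega, ?_⟩
        rcases h3 with h3 | h3
        · rcases h6 with h6 | h6
          · left
            rw [mul_add, mul_add]
            omega
          · right; omega
        · right; omega
    obtain ⟨D, E, hsEq, hDE, hAlt⟩ := hrepAll s hsS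
    -- congruence gives D ≡ fib m - 1 mod V n, hence fib m - 1 ≤ D
    have h1 : s % V n = (D * V (n + 1)) % V n := by
      rw [hsEq]; exact Nat.add_mul_mod_self_right _ _ _
    have hDmod : D ≡ (Nat.fib m - 1) [MOD V n] := by
      apply Nat.ModEq.cancel_right_of_coprime (c := V (n + 1)) hcop
      show (D * V (n + 1)) % V n = ((Nat.fib m - 1) * V (n + 1)) % V n
      rw [← h1, ← hmod2]
      exact hscong
    have hDlb : Nat.fib m - 1 ≤ D := by
      have h2 : D % V n = (Nat.fib m - 1) % V n := hDmod
      have h3 : (Nat.fib m - 1) % V n = Nat.fib m - 1 := Nat.mod_eq_of_lt (by omega)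
      have h4 := Nat.mod_le D (V n)
      omega
    -- E ≥ fib (m-1)
    have hE : Nat.fib (m - 1) ≤ E := by
      rcases hAlt with h | h
      · by_contra hE'
        push_neg at hE'
        set X := Nat.fib (m - 1) with hX
        set Y := Nat.fib m with hY
        have hYD : Y ≤ D + 1 := by omega
        have t1 : X * Y ≤ X * D + X := by
          calc X * Y ≤ X * (D + 1) := Nat.mul_le_mul_left X hYD
            _ = X * D + X := by ring
        have t2 : Y * E + Y ≤ Y * X := by
          calc Y * E + Y = Y * (E + 1) := by ring
            _ ≤ Y * X := Nat.mul_le_mul_left Y (by omega)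
        have t3 : Y * X = X * Y := Nat.mul_comm Y X
        omega
      · have h2 : Nat.fib (m + 1) = Nat.fib (m - 1) + Nat.fib m := by
          have e : m + 1 = (m - 1) + 2 := by omega
          have e2 : m - 1 + 1 = m := by omega
          rw [e, Nat.fib_add_two, e2]
        omega
    -- conclude
    rw [hc, hsEq]
    have hA : (Nat.fib m - 1) * V (n + 1) ≤ D * V (n + 1) :=
      Nat.mul_le_mul_right _ hDlb
    have hB : Nat.fib (m - 1) * V n ≤ E * V n :=
      Nat.mul_le_mul_right _ hE
    omega
end

section
/- Let a, b be positive integers with gcd(a,b) = 1 and let V be the generalized Fibonacci sequence with V_1 = a, V_2 = b and V_n = V_{n-1} + V_{n-2} for all n ≥ 3. Fix a positive integer n with V_n ≥ 2 and let S = ⟨{V_{n+2k} : k ≥ 0}⟩. Let m denote the least element of S congruent to V_{n+2}·(V_n − 1) modulo V_n. Then m − V_n is the greatest natural number not belonging to S. -/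
theorem stmt_15 (a b : ℕ) (ha : 0 < a) (hb : 0 < b) (hab : Nat.gcd a b = 1)
    (V : ℕ → ℕ) (hV1 : V 1 = a) (hV2 : V 2 = b)
    (hVrec : ∀ n, 3 ≤ n → V n = V (n - 1) + V (n - 2))
    (n : ℕ) (hn : 0 < n) (hVn : 2 ≤ V n)
    (S : AddSubmonoid ℕ)
    (hS : S = AddSubmonoid.closure {x : ℕ | ∃ k : ℕ, x = V (n + 2 * k)})
    (m : ℕ)
    (hm : IsLeast {s : ℕ | s ∈ S ∧ s ≡ V (n + 2) * (V n - 1) [MOD V n]} m) :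
    IsGreatest {x : ℕ | x ∉ S} (m - V n) := by
  -- normalized recurrence
  have hrec : ∀ k, 1 ≤ k → V (k + 2) = V (k + 1) + V k := fun k hk => hVrec (k + 2) (by omega)
  -- positivity
  have hpos : ∀ k, 0 < V (k + 1) := by
    intro k
    induction k using Nat.strong_induction_on with
    | _ k ih =>
      obtain _ | _ | k := k
      · rw [hV1]; exact ha
      · rw [hV2]; exact hb
      · have h : V (k + 1 + 2) = V (k + 1 + 1) + V (k + 1) := hrec (k + 1) (by omega)
        have h1 := ih k (by omega)
        show 0 < V (k + 1 + 2)
        omega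
  -- coprimality of consecutive terms
  have hcop : ∀ k, Nat.Coprime (V (k + 1)) (V (k + 2)) := by
    intro k
    induction k with
    | zero => rw [hV1, hV2]; exact hab
    | succ k ih =>
      have h : V (k + 1 + 2) = V (k + 1 + 1) + V (k + 1) := hrec (k + 1) (by omega)
      show Nat.Coprime (V (k + 1 + 1)) (V (k + 1 + 2))
      rw [h, Nat.add_comm (V (k + 1 + 1)) (V (k + 1))]
      exact Nat.coprime_add_self_right.mpr ih.symm
  have hVnpos : 0 < V n := by omega
  have hcopn : Nat.Coprime (V n) (V (n + 2)) := by
    have h : V (n + 2) = V (n + 1) + V n := hrec n hn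
    rw [h]
    refine Nat.coprime_add_self_right.mpr ?_
    obtain ⟨j, rfl⟩ : ∃ j, n = j + 1 := ⟨n - 1, by omega⟩
    exact hcop j
  -- generators
  have hgen : ∀ k, V (n + 2 * k) ∈ S := by
    intro k; rw [hS]; exact AddSubmonoid.subset_closure ⟨k, rfl⟩
  have hVnS : V n ∈ S := hgen 0
  have hV2S : V (n + 2) ∈ S := hgen 1
  have hmulVn : ∀ j, j * V n ∈ S := by
    intro j
    have := S.nsmul_mem hVnS j
    simpa [smul_eq_mul] using this
  -- generators grow
  have hgrow : ∀ k, V n ≤ V (n + 2 * k) := by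
    intro k
    induction k with
    | zero => exact le_refl _
    | succ k ih =>
      have h : V (n + 2 * k + 2) = V (n + 2 * k + 1) + V (n + 2 * k) := hrec (n + 2 * k) (by omega)
      have h2 : V (n + 2 * (k + 1)) = V (n + 2 * k + 1) + V (n + 2 * k) := h
      omega
  -- partial sums of generators
  set T : ℕ → ℕ := fun k => ∑ j ∈ Finset.range k, V (n + 2 * (j + 1)) with hTdef
  have hT0 : T 0 = 0 := rfl
  have hTsucc : ∀ k, T (k + 1) = T k + V (n + 2 * (k + 1)) := fun k => Finset.sum_range_succ _ _
  have hTS : ∀ k, T k ∈ S := by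
    intro k
    induction k with
    | zero => rw [hT0]; exact S.zero_mem
    | succ k ih => rw [hTsucc k]; exact S.add_mem ih (hgen (k + 1))
  -- the key identity
  have hI : ∀ k, V (n + 2 * (k + 2)) + V n = V (n + 2) + 2 * V (n + 2 * (k + 1)) + T k := by
    intro k
    induction k with
    | zero =>
      have e1 : V (n + 2) = V (n + 1) + V n := hrec n hn
      have e2 : V (n + 3) = V (n + 2) + V (n + 1) := hrec (n + 1) (by omega)
      have e3 : V (n + 4) = V (n + 3) + V (n + 2) := hrec (n + 2) (by omega)
      show V (n + 4) + V n = V (n + 2) + 2 * V (n + 2) + T 0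
      rw [hT0]
      omega
    | succ k ih =>
      have hB : V (n + 2 * (k + 1 + 2)) + V (n + 2 * (k + 1)) = 3 * V (n + 2 * (k + 2)) := by
        have e1 : V (n + 2 * (k + 1) + 2) = V (n + 2 * (k + 1) + 1) + V (n + 2 * (k + 1)) :=
          hrec (n + 2 * (k + 1)) (by omega)
        have e2 : V (n + 2 * (k + 1) + 3) = V (n + 2 * (k + 1) + 2) + V (n + 2 * (k + 1) + 1) :=
          hrec (n + 2 * (k + 1) + 1) (by omega)
        have e3 : V (n + 2 * (k + 1) + 4) = V (n + 2 * (k + 1) + 3) + V (n + 2 * (k + 1) + 2) :=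
          hrec (n + 2 * (k + 1) + 2) (by omega)
        show V (n + 2 * (k + 1) + 4) + V (n + 2 * (k + 1)) = 3 * V (n + 2 * (k + 1) + 2)
        omega
      have eA : V (n + 2 * (k + 1 + 1)) = V (n + 2 * (k + 2)) := rfl
      rw [eA, hTsucc k]
      omega
  -- replacement lemma
  have hrepl : ∀ k, ∃ R, R ∈ S ∧ R ≤ V (n + 2 * (k + 1)) ∧
      V (n + 2 * (k + 1)) + V n = V (n + 2) + R := by
    intro k
    cases k with
    | zero =>
      refine ⟨V n, hVnS, ?_, rfl⟩
      have h : V (n + 2) = V (n + 1) + V n := hrec n hn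
      show V n ≤ V (n + 2)
      have := hpos n
      omega
    | succ k =>
      refine ⟨2 * V (n + 2 * (k + 1)) + T k, ?_, ?_, ?_⟩
      · exact S.add_mem (by
          have := S.nsmul_mem (hgen (k + 1)) 2
          simpa [smul_eq_mul] using this) (hTS k)
      · have h := hI k
        have h2 : V n ≤ V (n + 2) := by
          have e : V (n + 2) = V (n + 1) + V n := hrec n hn
          omega
        show 2 * V (n + 2 * (k + 1)) + T k ≤ V (n + 2 * (k + 2))
        omega
      · show V (n + 2 * (k + 2)) + V n = V (n + 2) + (2 * V (n + 2 * (k + 1)) + T k)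
        have h := hI k
        omega
  -- descent lemma
  have hdesc : ∀ s, s ∈ AddSubmonoid.closure {x : ℕ | ∃ k : ℕ, x = V (n + 2 * k)} →
      ¬ (V n ∣ s) → ∃ s', s' ∈ S ∧ s' ≤ s ∧ s' + V (n + 2) ≡ s [MOD V n] := by
    intro s hsS
    induction hsS using AddSubmonoid.closure_induction with
    | mem x hx =>
      intro hnd
      obtain ⟨k, rfl⟩ := hx
      cases k with
      | zero => exact absurd (dvd_refl (V n) : V n ∣ V (n + 2 * 0)) hnd
      | succ k =>
        obtain ⟨R, hRS, hRle, hReq⟩ := hrepl k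
        refine ⟨R, hRS, hRle, ?_⟩
        have h : R + V (n + 2) = V (n + 2 * (k + 1)) + V n := by omega
        rw [h]
        exact Nat.add_mod_right _ _
    | zero => intro hnd; exact absurd (dvd_zero _) hnd
    | add x y hx hy ihx ihy =>
      intro hnd
      have hxy : ¬ (V n ∣ x) ∨ ¬ (V n ∣ y) := by
        by_contra h
        push_neg at h
        exact hnd (Dvd.dvd.add h.1 h.2)
      have hyS : y ∈ S := by rw [hS]; exact hy
      have hxS : x ∈ S := by rw [hS]; exact hx
      rcases hxy with h | h
      · obtain ⟨s', h1, h2, h3⟩ := ihx h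
        refine ⟨s' + y, S.add_mem h1 hyS, by omega, ?_⟩
        have e : s' + y + V (n + 2) = s' + V (n + 2) + y := by ring
        rw [e]
        exact h3.add_right y
      · obtain ⟨s', h1, h2, h3⟩ := ihy h
        refine ⟨x + s', S.add_mem hxS h1, by omega, ?_⟩
        have e : x + s' + V (n + 2) = s' + V (n + 2) + x := by ring
        have e2 : x + y = s' + V (n + 2) + x - V (n + 2) - s' + y := by omega
        have h4 := (h3.add_left x)
        have e3 : x + (s' + V (n + 2)) = x + s' + V (n + 2) := by ring
        have e4 : x + s' + V (n + 2) ≡ x + y [MOD V n] := by rw [← e3]; exact h4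
        exact e4
  -- Apery classes
  have hCne : ∀ t : ℕ, {s : ℕ | s ∈ S ∧ s ≡ t * V (n + 2) [MOD V n]}.Nonempty := by
    intro t
    refine ⟨t * V (n + 2), ?_, Nat.ModEq.refl _⟩
    have := S.nsmul_mem hV2S t
    simpa [smul_eq_mul] using this
  set w : ℕ → ℕ := fun t => sInf {s : ℕ | s ∈ S ∧ s ≡ t * V (n + 2) [MOD V n]} with hwdef
  have hwmem : ∀ t, w t ∈ S ∧ w t ≡ t * V (n + 2) [MOD V n] := fun t => Nat.sInf_mem (hCne t)
  have hwle : ∀ t x, x ∈ S → x ≡ t * V (n + 2) [MOD V n] → w t ≤ x :=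
    fun t x h1 h2 => Nat.sInf_le ⟨h1, h2⟩
  -- step lemma
  have hstep : ∀ t, t + 1 < V n → w t ≤ w (t + 1) := by
    intro t htn
    obtain ⟨hwS, hweq⟩ := hwmem (t + 1)
    have hnd : ¬ (V n ∣ w (t + 1)) := by
      intro hd
      have h0 : w (t + 1) ≡ 0 [MOD V n] := (Nat.modEq_zero_iff_dvd).mpr hd
      have h1 : (t + 1) * V (n + 2) ≡ 0 [MOD V n] := hweq.symm.trans h0
      have h2 : V n ∣ (t + 1) * V (n + 2) := (Nat.modEq_zero_iff_dvd).mp h1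
      have h3 : V n ∣ (t + 1) := hcopn.dvd_of_dvd_mul_right h2
      have := Nat.le_of_dvd (by omega) h3
      omega
    obtain ⟨s', hs'S, hs'le, hs'eq⟩ := hdesc (w (t + 1)) (by rw [← hS]; exact hwS) hnd
    have hc1 : s' + V (n + 2) ≡ (t + 1) * V (n + 2) [MOD V n] := hs'eq.trans hweq
    have hc2 : s' + V (n + 2) ≡ t * V (n + 2) + V (n + 2) [MOD V n] := by
      have e : (t + 1) * V (n + 2) = t * V (n + 2) + V (n + 2) := by ring
      rw [← e]; exact hc1
    have hc3 : s' ≡ t * V (n + 2) [MOD V n] := Nat.ModEq.add_right_cancel' _ hc2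
    exact le_trans (hwle t s' hs'S hc3) hs'le
  -- chain
  have hchain : ∀ d t, t + d = V n - 1 → w t ≤ w (V n - 1) := by
    intro d
    induction d with
    | zero =>
      intro t ht
      have : t = V n - 1 := by omega
      rw [this]
    | succ d ih =>
      intro t ht
      have h1 : w t ≤ w (t + 1) := hstep t (by omega)
      have h2 := ih (t + 1) (by omega)
      omega
  have hwmax : ∀ t, t ≤ V n - 1 → w t ≤ w (V n - 1) := fun t ht =>
    hchain (V n - 1 - t) t (by omega)
  -- m = w (V n - 1)
  have hmw : m = w (V n - 1) := by
    have hsets : {s : ℕ | s ∈ S ∧ s ≡ (V n - 1) * V (n + 2) [MOD V n]} =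
        {s : ℕ | s ∈ S ∧ s ≡ V (n + 2) * (V n - 1) [MOD V n]} := by
      ext x; rw [Nat.mul_comm]
    have h1 : IsLeast {s : ℕ | s ∈ S ∧ s ≡ (V n - 1) * V (n + 2) [MOD V n]} (w (V n - 1)) :=
      ⟨Nat.sInf_mem (hCne _), fun x hx => Nat.sInf_le hx⟩
    rw [hsets] at h1
    exact hm.unique h1
  -- membership criterion
  have hmemof : ∀ x t, x ≡ t * V (n + 2) [MOD V n] → w t ≤ x → x ∈ S := by
    intro x t hx hwx
    have h1 : w t ≡ x [MOD V n] := ((hwmem t).2).trans hx.symm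
    have h2 : V n ∣ x - w t := (Nat.modEq_iff_dvd' hwx).mp h1
    obtain ⟨c, hc⟩ := h2
    have hx' : x = w t + V n * c := by omega
    rw [hx']
    refine S.add_mem (hwmem t).1 ?_
    rw [Nat.mul_comm]
    exact hmulVn c
  -- class surjectivity
  have hclass : ∀ x : ℕ, ∃ t, t < V n ∧ x ≡ t * V (n + 2) [MOD V n] := by
    intro x
    obtain ⟨u, -, hu⟩ := Nat.exists_mul_mod_eq_one_of_coprime hcopn.symm (by omega)
    refine ⟨x * u % V n, Nat.mod_lt _ (by omega), ?_⟩
    have h1 : V (n + 2) * u ≡ 1 [MOD V n] := by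
      show V (n + 2) * u % V n = 1 % V n
      rw [Nat.mod_eq_of_lt (by omega : (1 : ℕ) < V n)]
      exact hu
    have h2 : (x * u % V n) * V (n + 2) ≡ x * u * V (n + 2) [MOD V n] :=
      (Nat.mod_modEq _ _).mul_right _
    have h3 : x * u * V (n + 2) = x * (V (n + 2) * u) := by ring
    have h4 : x * (V (n + 2) * u) ≡ x * 1 [MOD V n] := h1.mul_left x
    have h5 : (x * u % V n) * V (n + 2) ≡ x [MOD V n] := by
      refine (h2.trans ?_)
      rw [h3]
      simpa using h4
    exact h5.symm
  -- m ≥ V n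
  have hSlb : ∀ s, s ∈ AddSubmonoid.closure {x : ℕ | ∃ k : ℕ, x = V (n + 2 * k)} →
      s = 0 ∨ V n ≤ s := by
    intro s hs
    induction hs using AddSubmonoid.closure_induction with
    | mem x hx => obtain ⟨k, rfl⟩ := hx; right; exact hgrow k
    | zero => left; rfl
    | add x y _ _ ihx ihy => rcases ihx with h | h <;> rcases ihy with h' | h' <;> omega
  have hmVn : V n ≤ m := by
    rcases hSlb m (by rw [← hS]; exact hm.1.1) with h0 | h
    · exfalso
      have h1 : V (n + 2) * (V n - 1) ≡ 0 [MOD V n] := by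
        have := hm.1.2
        rw [h0] at this
        exact this.symm.trans ((Nat.modEq_zero_iff_dvd).mpr (dvd_zero _))
      have h2 : V n ∣ V (n + 2) * (V n - 1) := (Nat.modEq_zero_iff_dvd).mp h1
      have h3 : V n ∣ V n - 1 := hcopn.dvd_of_dvd_mul_left h2
      have := Nat.le_of_dvd (by omega) h3
      omega
    · exact h
  -- m - V n ∉ S
  have hnotin : (m - V n) ∉ S := by
    intro hin
    have h2 : m - V n ≡ m - V n + V n [MOD V n] := (Nat.add_mod_right _ _).symm
    have h1 : m - V n + V n = m := by omega
    have hcong : m - V n ≡ V (n + 2) * (V n - 1) [MOD V n] := by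
      rw [h1] at h2
      exact h2.trans hm.1.2
    have := hm.2 ⟨hin, hcong⟩
    omega
  -- upper bound
  have hub : ∀ x, x ∉ S → x ≤ m - V n := by
    intro x hx
    obtain ⟨t, htlt, hteq⟩ := hclass x
    have ht0 : t ≠ 0 := by
      rintro rfl
      have h0 : V n ∣ x := (Nat.modEq_zero_iff_dvd).mp (by simpa using hteq)
      obtain ⟨c, rfl⟩ := h0
      refine hx ?_
      rw [Nat.mul_comm]
      exact hmulVn c
    have hxlt : x < w t := by
      by_contra h
      exact hx (hmemof x t hteq (by omega))
    have hwtm : w t ≤ m := by rw [hmw]; exact hwmax t (by omega)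
    have hcong : x ≡ w t [MOD V n] := hteq.trans (hwmem t).2.symm
    have hdvd : V n ∣ w t - x := (Nat.modEq_iff_dvd' (by omega)).mp hcong
    have hle : V n ≤ w t - x := Nat.le_of_dvd (by omega) hdvd
    omega
  exact ⟨hnotin, fun x hx => hub x hx⟩
end

section
/- Let L_m denote the Lucas numbers, defined by L_m = F_{m+1} + F_{m-1} for m ≥ 1 (so L_1 = 1, L_2 = 3, and L_m = L_{m-1} + L_{m-2} for m ≥ 3). Let n ≥ 4 be an integer and let S = ⟨{L_{n+2k} : k ≥ 0}⟩ be the additive submonoid of ℕ generated by L_n, L_{n+2}, L_{n+4}, …. Then L_{2n+1} + L_{2n−1} − L_{n+2} is the greatest natural number not belonging to S. -/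
private lemma docagneZ (k : ℕ) : ∀ m : ℕ,
    (Nat.fib (m + k + 1) : ℤ) * Nat.fib (m + 1) - Nat.fib (m + k + 2) * Nat.fib m
      = (-1) ^ m * Nat.fib (k + 1) := by
  intro m
  induction m with
  | zero => simp
  | succ p ih =>
    have e1 : p + 1 + k + 1 = p + k + 2 := by omega
    have e2 : p + 1 + k + 2 = p + k + 3 := by omega
    rw [e1, e2]
    have A1 : (Nat.fib (p + 2) : ℤ) = Nat.fib p + Nat.fib (p + 1) := by
      rw [Nat.fib_add_two]; push_cast; ring
    have A2 : (Nat.fib (p + k + 3) : ℤ) = Nat.fib (p + k + 1) + Nat.fib (p + k + 2) := by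
      rw [show p + k + 3 = (p + k + 1) + 2 by omega, Nat.fib_add_two]; push_cast; ring
    rw [show p + 1 + 1 = p + 2 by omega, A1, A2, pow_succ]
    linear_combination -ih

private lemma coinIneq (K k : ℕ) :
    Nat.fib (2 * K) * Nat.fib (2 * k + 2) ≤ Nat.fib (2 * K + 1) * Nat.fib (2 * k + 1) := by
  rcases le_or_gt K k with h | h
  · obtain ⟨d, rfl⟩ : ∃ d, k = K + d := ⟨k - K, by omega⟩
    have H := docagneZ (2 * d) (2 * K)
    have e : ((-1 : ℤ)) ^ (2 * K) = 1 := by rw [pow_mul]; norm_num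
    rw [e, one_mul] at H
    have : (Nat.fib (2 * K) : ℤ) * Nat.fib (2 * (K + d) + 2)
        ≤ Nat.fib (2 * K + 1) * Nat.fib (2 * (K + d) + 1) := by
      rw [show 2 * (K + d) + 2 = 2 * K + 2 * d + 2 by ring,
          show 2 * (K + d) + 1 = 2 * K + 2 * d + 1 by ring]
      have : (0 : ℤ) ≤ Nat.fib (2 * d + 1) := by positivity
      linarith [H]
    exact_mod_cast this
  · obtain ⟨d, rfl⟩ : ∃ d, K = k + 1 + d := ⟨K - k - 1, by omega⟩
    have H := docagneZ (2 * d) (2 * k + 1)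
    have e : ((-1 : ℤ)) ^ (2 * k + 1) = -1 := by rw [pow_succ, pow_mul]; norm_num
    rw [e] at H
    have : (Nat.fib (2 * (k + 1 + d)) : ℤ) * Nat.fib (2 * k + 2)
        ≤ Nat.fib (2 * (k + 1 + d) + 1) * Nat.fib (2 * k + 1) := by
      rw [show 2 * (k + 1 + d) + 1 = 2 * k + 2 * d + 3 by ring,
          show 2 * (k + 1 + d) = 2 * k + 2 * d + 2 by ring]
      have : (0 : ℤ) ≤ Nat.fib (2 * d + 1) := by positivity
      have e3 : 2 * k + 1 + 2 * d + 1 = 2 * k + 2 * d + 2 := by omega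
      have e4 : 2 * k + 1 + 2 * d + 2 = 2 * k + 2 * d + 3 := by omega
      rw [e3, e4] at H
      linarith [H]
    exact_mod_cast this

section UpperCombin

variable (P : ℕ → ℕ → Prop)
  (h0 : P 0 0)
  (hcoin : ∀ k : ℕ, P (Nat.fib (2 * k + 2)) (Nat.fib (2 * k + 1)))
  (hadd : ∀ a b c d : ℕ, P a b → P c d → P (a + c) (b + d))

include h0 hcoin hadd in
private lemma Qlem : ∀ s : ℕ, ∀ j < Nat.fib (s + 2), ∃ w ≤ Nat.fib (s + 1), P j w := by
  intro s
  induction s using Nat.strong_induction_on with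
  | _ s ih =>
    match s with
    | 0 =>
      intro j hj
      interval_cases j
      exact ⟨0, by simp, h0⟩
    | 1 =>
      intro j hj
      have : Nat.fib 3 = 2 := by decide
      rw [this] at hj
      interval_cases j
      · exact ⟨0, by simp, h0⟩
      · exact ⟨1, by simp, by simpa using hcoin 0⟩
    | (s + 2) =>
      intro j hj
      rw [show s + 2 + 2 = s + 4 by omega] at hj
      rw [show s + 2 + 1 = s + 3 by omega]
      by_cases hsmall : j < Nat.fib (s + 3)
      · obtain ⟨w, hw, hP⟩ := ih (s + 1) (by omega) j (by rw [show s + 1 + 2 = s + 3 by omega]; exact hsmall)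
        refine ⟨w, ?_, hP⟩
        rw [show s + 1 + 1 = s + 2 by omega] at hw
        exact le_trans hw Nat.fib_le_fib_succ
      · push_neg at hsmall
        have f1 : Nat.fib (s + 4) = Nat.fib (s + 2) + Nat.fib (s + 3) := by
          rw [show s + 4 = s + 2 + 2 by omega]; exact Nat.fib_add_two
        have f2 : Nat.fib (s + 3) = Nat.fib (s + 1) + Nat.fib (s + 2) := by
          rw [show s + 3 = s + 1 + 2 by omega]; exact Nat.fib_add_two
        have f3 : Nat.fib (s + 2) ≤ Nat.fib (s + 3) := Nat.fib_mono (by omega)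
        obtain ⟨a, rfl | rfl⟩ := Nat.even_or_odd' s
        · -- s = 2a : subtract coin fib (2a+2) = fib (s+2)
          have hco := hcoin a
          set j' := j - Nat.fib (2 * a + 2) with hj'
          have hj'lt : j' < Nat.fib (2 * a + 3) := by omega
          obtain ⟨w', hw', hP'⟩ := ih (2 * a + 1) (by omega) j'
            (by rw [show 2 * a + 1 + 2 = 2 * a + 3 by omega]; exact hj'lt)
          rw [show 2 * a + 1 + 1 = 2 * a + 2 by omega] at hw'
          refine ⟨Nat.fib (2 * a + 1) + w', by omega, ?_⟩
          have := hadd _ _ _ _ hco hP'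
          rwa [show Nat.fib (2 * a + 2) + j' = j by omega] at this
        · -- s = 2a+1 : subtract coin fib (2a+4) = fib (s+3)
          have hco := hcoin (a + 1)
          rw [show 2 * (a + 1) + 2 = 2 * a + 1 + 3 by ring,
              show 2 * (a + 1) + 1 = 2 * a + 1 + 2 by ring] at hco
          set j' := j - Nat.fib (2 * a + 1 + 3) with hj'
          have hj'lt : j' < Nat.fib (2 * a + 1 + 2) := by omega
          obtain ⟨w', hw', hP'⟩ := ih (2 * a + 1) (by omega) j' hj'lt
          refine ⟨Nat.fib (2 * a + 1 + 2) + w', by omega, ?_⟩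
          have := hadd _ _ _ _ hco hP'
          rwa [show Nat.fib (2 * a + 1 + 3) + j' = j by omega] at this

include h0 hcoin hadd in
private lemma PlemOdd : ∀ a : ℕ, ∀ j < Nat.fib (2*a+6) + Nat.fib (2*a+4),
    ∃ w ≤ Nat.fib (2*a+5) + Nat.fib (2*a+3), P j w := by
  intro a j hj
  by_cases h1 : j < Nat.fib (2*a+6)
  · obtain ⟨w, hw, hP⟩ := Qlem P h0 hcoin hadd (2*a+4) j
      (by rw [show 2*a+4+2 = 2*a+6 by omega]; exact h1)
    rw [show 2*a+4+1 = 2*a+5 by omega] at hw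
    exact ⟨w, by omega, hP⟩
  · push_neg at h1
    have hco := hcoin (a+2)
    rw [show 2*(a+2)+2 = 2*a+6 by ring, show 2*(a+2)+1 = 2*a+5 by ring] at hco
    set j' := j - Nat.fib (2*a+6) with hj'
    have hj'lt : j' < Nat.fib (2*a+4) := by omega
    obtain ⟨w', hw', hP'⟩ := Qlem P h0 hcoin hadd (2*a+2) j'
      (by rw [show 2*a+2+2 = 2*a+4 by omega]; exact hj'lt)
    rw [show 2*a+2+1 = 2*a+3 by omega] at hw'
    refine ⟨Nat.fib (2*a+5) + w', by omega, ?_⟩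
    have := hadd _ _ _ _ hco hP'
    rwa [show Nat.fib (2*a+6) + j' = j by omega] at this

include h0 hcoin hadd in
private lemma PlemEven : ∀ b : ℕ, ∀ j < Nat.fib (2*b+5) + Nat.fib (2*b+3),
    ∃ w ≤ Nat.fib (2*b+4) + Nat.fib (2*b+2), P j w := by
  intro b
  induction b with
  | zero =>
    intro j hj
    have e5 : Nat.fib 5 = 5 := by decide
    have e4 : Nat.fib 4 = 3 := by decide
    have e3 : Nat.fib 3 = 2 := by decide
    have e2 : Nat.fib 2 = 1 := by decide
    simp only [Nat.zero_eq, Nat.mul_zero, Nat.zero_add] at hj ⊢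
    norm_num [e5, e4, e3, e2] at hj ⊢
    have c0 : P 1 1 := by simpa using hcoin 0
    have c1 : P 3 2 := by
      have := hcoin 1
      norm_num [e4, e3] at this
      exact this
    by_cases h1 : j < 5
    · obtain ⟨w, hw, hP⟩ := Qlem P h0 hcoin hadd 3 j (by rw [e5]; omega)
      rw [e4] at hw
      exact ⟨w, by omega, hP⟩
    · interval_cases j
      · exact ⟨4, by omega, by have := hadd _ _ _ _ (hadd _ _ _ _ c1 c0) c0; norm_num at this; exact this⟩
      · exact ⟨4, by omega, by have := hadd _ _ _ _ c1 c1; norm_num at this; exact this⟩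
  | succ b ihb =>
    intro j hj
    simp only [show 2*(b+1)+5 = 2*b+7 by ring, show 2*(b+1)+4 = 2*b+6 by ring,
      show 2*(b+1)+3 = 2*b+5 by ring, show 2*(b+1)+2 = 2*b+4 by ring] at hj ⊢
    have r5 : Nat.fib (2*b+7) = Nat.fib (2*b+5) + Nat.fib (2*b+6) := by
      rw [show 2*b+7 = 2*b+5+2 by omega]; exact Nat.fib_add_two
    have r4 : Nat.fib (2*b+6) = Nat.fib (2*b+4) + Nat.fib (2*b+5) := by
      rw [show 2*b+6 = 2*b+4+2 by omega]; exact Nat.fib_add_two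
    have r3 : Nat.fib (2*b+5) = Nat.fib (2*b+3) + Nat.fib (2*b+4) := by
      rw [show 2*b+5 = 2*b+3+2 by omega]; exact Nat.fib_add_two
    have r2 : Nat.fib (2*b+4) = Nat.fib (2*b+2) + Nat.fib (2*b+3) := by
      rw [show 2*b+4 = 2*b+2+2 by omega]; exact Nat.fib_add_two
    by_cases h1 : j < Nat.fib (2*b+7)
    · obtain ⟨w, hw, hP⟩ := Qlem P h0 hcoin hadd (2*b+5) j
        (by rw [show 2*b+5+2 = 2*b+7 by omega]; exact h1)
      rw [show 2*b+5+1 = 2*b+6 by omega] at hw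
      exact ⟨w, by omega, hP⟩
    · push_neg at h1
      have hco6 := hcoin (b+2)
      rw [show 2*(b+2)+2 = 2*b+6 by ring, show 2*(b+2)+1 = 2*b+5 by ring] at hco6
      have hco4 := hcoin (b+1)
      rw [show 2*(b+1)+2 = 2*b+4 by ring, show 2*(b+1)+1 = 2*b+3 by ring] at hco4
      set j' := j - Nat.fib (2*b+6) with hj'def
      have hj'lt : j' < 2 * Nat.fib (2*b+5) := by omega
      by_cases h2 : j' < Nat.fib (2*b+5) + Nat.fib (2*b+3)
      · obtain ⟨w', hw', hP'⟩ := ihb j' h2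
        refine ⟨Nat.fib (2*b+5) + w', by omega, ?_⟩
        have := hadd _ _ _ _ hco6 hP'
        rwa [show Nat.fib (2*b+6) + j' = j by omega] at this
      · push_neg at h2
        set j'' := j' - Nat.fib (2*b+4) with hj''def
        have hj''lt : j'' < Nat.fib (2*b+5) + Nat.fib (2*b+3) := by omega
        obtain ⟨w'', hw'', hP''⟩ := ihb j'' hj''lt
        refine ⟨Nat.fib (2*b+5) + Nat.fib (2*b+3) + w'', by omega, ?_⟩
        have := hadd _ _ _ _ (hadd _ _ _ _ hco6 hco4) hP''
        rwa [show Nat.fib (2*b+6) + Nat.fib (2*b+4) + j'' = j by omega,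
             show Nat.fib (2*b+5) + Nat.fib (2*b+3) + w'' = Nat.fib (2*b+5) + Nat.fib (2*b+3) + w'' from rfl] at this

end UpperCombin

private lemma lucasCop : ∀ k : ℕ, Nat.Coprime (Nat.fib (k+2) + Nat.fib k) (Nat.fib (k+3) + Nat.fib (k+1)) := by
  intro k
  induction k with
  | zero => decide
  | succ k ih =>
    have r : Nat.fib (k+1+3) + Nat.fib (k+1+1) = (Nat.fib (k+2) + Nat.fib k) + (Nat.fib (k+3) + Nat.fib (k+1)) := by
      have h4 : Nat.fib (k+4) = Nat.fib (k+2) + Nat.fib (k+3) := by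
        rw [show k+4 = k+2+2 by omega]; exact Nat.fib_add_two
      have h2 : Nat.fib (k+2) = Nat.fib k + Nat.fib (k+1) := Nat.fib_add_two
      rw [show k+1+3 = k+4 by omega, show k+1+1 = k+2 by omega]
      omega
    rw [show k+1+2 = k+3 by omega, r]
    exact Nat.coprime_add_self_right.mpr ih.symm

set_option maxHeartbeats 1000000 in
theorem stmt_18 (L : ℕ → ℕ)
    (hL : ∀ m, 1 ≤ m → L m = Nat.fib (m + 1) + Nat.fib (m - 1))
    (n : ℕ) (hn : 4 ≤ n)
    (S : AddSubmonoid ℕ)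
    (hS : S = AddSubmonoid.closure {x : ℕ | ∃ k : ℕ, x = L (n + 2 * k)}) :
    IsGreatest {m : ℕ | m ∉ S} (L (2 * n + 1) + L (2 * n - 1) - L (n + 2)) := by
  obtain ⟨m, rfl⟩ : ∃ m, n = m + 4 := ⟨n - 4, by omega⟩
  clear hn
  obtain ⟨a, ha⟩ : ∃ x, x = Nat.fib (m+2) := ⟨_, rfl⟩
  obtain ⟨b, hb⟩ : ∃ x, x = Nat.fib (m+3) := ⟨_, rfl⟩
  have ha1 : 1 ≤ a := by rw [ha]; exact Nat.fib_pos.mpr (by omega)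
  have hb2 : 2 ≤ b := by
    have h1 : Nat.fib 3 ≤ Nat.fib (m+3) := Nat.fib_mono (by omega)
    have h2 : Nat.fib 3 = 2 := by decide
    omega
  have hab : a ≤ b := by rw [ha, hb]; exact Nat.fib_mono (by omega)
  have efib4 : Nat.fib (m+4) = a + b := by
    rw [show m+4 = m+2+2 by omega, Nat.fib_add_two, ha, hb]
  have efib5 : Nat.fib (m+5) = a + 2*b := by
    rw [show m+5 = m+3+2 by omega, Nat.fib_add_two, show m+3+1 = m+4 by omega, efib4, ← hb]
    omega
  have efib6 : Nat.fib (m+6) = 2*a + 3*b := by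
    rw [show m+6 = m+4+2 by omega, Nat.fib_add_two, show m+4+1 = m+5 by omega, efib4, efib5]; ring
  have efib7 : Nat.fib (m+7) = 3*a + 5*b := by
    rw [show m+7 = m+5+2 by omega, Nat.fib_add_two, show m+5+1 = m+6 by omega, efib5, efib6]; ring
  -- generators in fib form
  have hgen : ∀ k : ℕ, L (m + 4 + 2 * k) = Nat.fib (m + 2*k + 5) + Nat.fib (m + 2*k + 3) := by
    intro k
    rw [hL _ (by omega)]
    congr 1 <;> congr 1 <;> omega
  have hmem : ∀ k : ℕ, Nat.fib (m + 2*k + 5) + Nat.fib (m + 2*k + 3) ∈ S := by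
    intro k
    rw [hS]
    exact AddSubmonoid.subset_closure ⟨k, (hgen k).symm⟩
  have hAS : a + 3*b ∈ S := by
    have := hmem 0
    rw [show m+2*0+5 = m+5 by norm_num, show m+2*0+3 = m+3 by norm_num, efib5, ← hb] at this
    rwa [show a + 2*b + b = a + 3*b by ring] at this
  -- generator identity: L (n + 2(k+1)) = fib(2k+2) * B + fib(2k+1) * A
  have hgenBA : ∀ k : ℕ, Nat.fib (m + 2*k + 7) + Nat.fib (m + 2*k + 5)
      = Nat.fib (2*k+2) * (3*a + 4*b) + Nat.fib (2*k+1) * (a + 3*b) := by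
    intro k
    have h1 := Nat.fib_add (2*k+1) (m+5)
    have h2 := Nat.fib_add (2*k+1) (m+3)
    rw [show 2*k+1+(m+5)+1 = m+2*k+7 by ring] at h1
    rw [show 2*k+1+(m+3)+1 = m+2*k+5 by ring] at h2
    rw [h1, h2, show 2*k+1+1 = 2*k+2 by ring, show m+5+1 = m+6 by ring,
        show m+3+1 = m+4 by ring, efib4, efib5, efib6, ← hb]
    ring
  have hcoinS : ∀ k : ℕ, Nat.fib (2*k+2) * (3*a + 4*b) + Nat.fib (2*k+1) * (a + 3*b) ∈ S := by
    intro k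
    rw [← hgenBA k]
    have := hmem (k+1)
    rwa [show m+2*(k+1)+5 = m+2*k+7 by ring, show m+2*(k+1)+3 = m+2*k+5 by ring] at this
  -- doubled-index fib values
  have d6 : Nat.fib (2*m+6) = a*b + b*(a+b) := by
    have h := Nat.fib_add (m+2) (m+3)
    rw [show m+2+(m+3)+1 = 2*m+6 by ring, show m+2+1 = m+3 by ring, show m+3+1 = m+4 by ring,
        efib4, ← ha, ← hb] at h
    exact h
  have d8 : Nat.fib (2*m+8) = b*(a+b) + (a+b)*(a+2*b) := by
    have h := Nat.fib_add (m+3) (m+4)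
    rw [show m+3+(m+4)+1 = 2*m+8 by ring, show m+3+1 = m+4 by ring, show m+4+1 = m+5 by ring,
        efib4, efib5, ← hb] at h
    exact h
  have d10 : Nat.fib (2*m+10) = (a+b)*(a+2*b) + (a+2*b)*(2*a+3*b) := by
    have h := Nat.fib_add (m+4) (m+5)
    rw [show m+4+(m+5)+1 = 2*m+10 by ring, show m+4+1 = m+5 by ring, show m+5+1 = m+6 by ring,
        efib4, efib5, efib6] at h
    exact h
  obtain ⟨A', hA'⟩ : ∃ x : ℕ, a+3*b = x+1 := ⟨a+3*b-1, by omega⟩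
  obtain ⟨C', hC'⟩ : ∃ x : ℕ, 2*a+b = x+1 := ⟨2*a+b-1, by omega⟩
  have hT1 : L (2*(m+4)+1) = Nat.fib (2*m+10) + Nat.fib (2*m+8) := by
    rw [hL _ (by omega)]; congr 1 <;> congr 1 <;> omega
  have hT2 : L (2*(m+4)-1) = Nat.fib (2*m+8) + Nat.fib (2*m+6) := by
    rw [hL _ (by omega)]; congr 1 <;> congr 1 <;> omega
  have hT3 : L (m+4+2) = 4*a + 7*b := by
    rw [hL _ (by omega)]
    rw [show m+4+2+1 = m+7 by omega, show m+4+2-1 = m+5 by omega, efib7, efib5]; ring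
  have hA'z : (a:ℤ) + 3*b = A' + 1 := by exact_mod_cast hA'
  have hC'z : 2*(a:ℤ) + b = C' + 1 := by exact_mod_cast hC'
  have hTval : L (2*(m+4)+1) + L (2*(m+4)-1) - L (m+4+2) = A'*(3*a+4*b) + C'*(a+3*b) := by
    rw [hT1, hT2, hT3]
    have e : Nat.fib (2*m+10) + Nat.fib (2*m+8) + (Nat.fib (2*m+8) + Nat.fib (2*m+6))
        = A'*(3*a+4*b) + C'*(a+3*b) + (4*a+7*b) := by
      rw [d6, d8, d10]
      zify
      linear_combination (3*(a:ℤ)+4*b) * hA'z + ((a:ℤ)+3*b) * hC'z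
    omega
  -- lower bound invariant
  have hinv : ∀ s ∈ S, ∃ j w : ℕ, s = j*(3*a+4*b) + w*(a+3*b)
      ∧ ∀ K : ℕ, Nat.fib (2*K) * j ≤ Nat.fib (2*K+1) * w := by
    intro s hs
    rw [hS] at hs
    induction hs using AddSubmonoid.closure_induction with
    | mem x hx =>
      obtain ⟨k, rfl⟩ := hx
      rcases k with _ | k'
      · refine ⟨0, 1, ?_, fun K => by simp⟩
        rw [hgen 0, show m+2*0+5 = m+5 by norm_num, show m+2*0+3 = m+3 by norm_num, efib5, ← hb]
        ring
      · refine ⟨Nat.fib (2*k'+2), Nat.fib (2*k'+1), ?_, fun K => coinIneq K k'⟩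
        rw [hgen (k'+1), show m+2*(k'+1)+5 = m+2*k'+7 by ring,
            show m+2*(k'+1)+3 = m+2*k'+5 by ring]
        exact hgenBA k'
    | zero => exact ⟨0, 0, by simp, by simp⟩
    | add x y hx hy ihx ihy =>
      obtain ⟨j1, w1, e1, i1⟩ := ihx
      obtain ⟨j2, w2, e2, i2⟩ := ihy
      refine ⟨j1+j2, w1+w2, by rw [e1, e2]; ring, fun K => ?_⟩
      rw [Nat.mul_add, Nat.mul_add]
      exact Nat.add_le_add (i1 K) (i2 K)
  -- coprimality
  have hcop : Nat.Coprime (a+3*b) (3*a+4*b) := by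
    have := lucasCop (m+3)
    rw [show m+3+2 = m+5 by omega, show m+3+3 = m+6 by omega, show m+3+1 = m+4 by omega,
        efib5, efib6, efib4, ← hb] at this
    rwa [show a+2*b+b = a+3*b by ring, show 2*a+3*b+(a+b) = 3*a+4*b by ring] at this
  -- T not in S
  have hTnot : A'*(3*a+4*b) + C'*(a+3*b) ∉ S := by
    intro hTS
    obtain ⟨j, w, hEq, hInv⟩ := hinv _ hTS
    have e : (j+1)*(3*a+4*b) + w*(a+3*b) = (a+3*b)*(3*a+4*b + C') := by
      zify
      zify at hEq
      linear_combination -hEq - (3*(a:ℤ)+4*b) * hA'z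
    have hdvd : (a+3*b) ∣ (j+1) := by
      have h1 : (a+3*b) ∣ (j+1)*(3*a+4*b) + w*(a+3*b) := Dvd.intro _ e.symm
      have h2 : (a+3*b) ∣ w*(a+3*b) := dvd_mul_left _ _
      have h3 : (a+3*b) ∣ (j+1)*(3*a+4*b) := by
        have := Nat.dvd_sub h1 h2
        rwa [Nat.add_sub_cancel] at this
      exact hcop.dvd_of_dvd_mul_right h3
    obtain ⟨q, hq⟩ := hdvd
    rcases q with _ | _ | q
    · simp at hq
    · -- q = 1 : j = A', w = C'
      norm_num at hq
      have hj : j = A' := by omega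
      subst hj
      have hw : C' = w := by
        have h4 : C'*(a+3*b) = w*(a+3*b) := Nat.add_left_cancel hEq
        exact Nat.eq_of_mul_eq_mul_right (by omega) h4
      subst hw
      rcases Nat.even_or_odd' m with ⟨p, rfl | rfl⟩
      · -- m = 2p : use K = p+2
        have hK := hInv (p+2)
        rw [show 2*(p+2)+1 = 2*p+5 by ring, show 2*(p+2) = 2*p+4 by ring, efib4, efib5] at hK
        have hcasZ := docagneZ 0 (2*p+2)
        rw [show 2*p+2+0+1 = 2*p+3 by ring, show 2*p+2+0+2 = 2*p+4 by ring,
            show 2*p+2+1 = 2*p+3 by ring, efib4, ← ha, ← hb,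
            show ((-1:ℤ))^(2*p+2) = 1 from Even.neg_one_pow ⟨p+1, by ring⟩] at hcasZ
        simp only [zero_add, Nat.fib_one, Nat.cast_one, mul_one, one_mul] at hcasZ
        push_cast at hcasZ
        have hKz : ((a:ℤ)+b) * j ≤ ((a:ℤ)+2*b) * C' := by exact_mod_cast hK
        have hA'e : (j:ℤ) = a+3*b-1 := by linarith [hA'z]
        have hC'e : (C':ℤ) = 2*a+b-1 := by linarith [hC'z]
        rw [hA'e, hC'e] at hKz
        have hb2z : (2:ℤ) ≤ b := by exact_mod_cast hb2
        have key : ((a:ℤ)+b) * ((a:ℤ)+3*b-1) = ((a:ℤ)+2*b) * (2*(a:ℤ)+b-1) + 1 + b := by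
          linear_combination hcasZ
        linarith [key, hKz, hb2z]
      · -- m = 2p+1 : use K = p+3
        have hK := hInv (p+3)
        rw [show 2*(p+3)+1 = 2*p+1+6 by ring, show 2*(p+3) = 2*p+1+5 by ring, efib5, efib6] at hK
        have hcasZ := docagneZ 0 (2*p+1+2)
        rw [show 2*p+1+2+0+1 = 2*p+1+3 by ring, show 2*p+1+2+0+2 = 2*p+1+4 by ring,
            show 2*p+1+2+1 = 2*p+1+3 by ring, efib4, ← ha, ← hb,
            show ((-1:ℤ))^(2*p+1+2) = -1 from Odd.neg_one_pow ⟨p+1, by ring⟩] at hcasZ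
        simp only [zero_add, Nat.fib_one, Nat.cast_one, mul_one, one_mul] at hcasZ
        push_cast at hcasZ
        have hKz : ((a:ℤ)+2*b) * j ≤ (2*(a:ℤ)+3*b) * C' := by exact_mod_cast hK
        have hA'e : (j:ℤ) = a+3*b-1 := by linarith [hA'z]
        have hC'e : (C':ℤ) = 2*a+b-1 := by linarith [hC'z]
        rw [hA'e, hC'e] at hKz
        have hab5 : 5 ≤ a+b := by
          have h6 := Nat.fib_mono (show 5 ≤ 2*p+1+4 by omega)
          rw [efib4] at h6
          have e5 : Nat.fib 5 = 5 := by decide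
          omega
        have hab5z : (5:ℤ) ≤ (a:ℤ)+b := by exact_mod_cast hab5
        have key : ((a:ℤ)+2*b) * ((a:ℤ)+3*b-1) = (2*(a:ℤ)+3*b) * (2*(a:ℤ)+b-1) + ((a:ℤ)+b) - 3 := by
          linear_combination 3*hcasZ
        linarith [key, hKz, hab5z]
    · -- q ≥ 2
      have hj2 : 2*(a+3*b) - 1 ≤ j := by
        have h5 : (a+3*b)*2 ≤ (a+3*b)*(q+1+1) := Nat.mul_le_mul_left _ (by omega)
        omega
      have hjB : (2*(a+3*b)-1)*(3*a+4*b) ≤ j*(3*a+4*b) := Nat.mul_le_mul_right _ hj2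
      have e2 : 2*(a+3*b)-1 = 2*A'+1 := by omega
      rw [e2] at hjB
      have h5 : C' < 3*a+4*b := by omega
      have p1 : C'*(a+3*b) < (3*a+4*b)*(a+3*b) :=
        Nat.mul_lt_mul_of_lt_of_le h5 (le_refl _) (by omega)
      have p2 : (2*A'+1)*(3*a+4*b) = A'*(3*a+4*b) + (A'*(3*a+4*b) + (3*a+4*b)) := by ring
      have p3 : (a+3*b)*(3*a+4*b) = A'*(3*a+4*b) + (3*a+4*b) := by
        rw [hA']; ring
      have hjle : j*(3*a+4*b) ≤ A'*(3*a+4*b) + C'*(a+3*b) := by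
        rw [hEq]; exact Nat.le_add_right _ _
      linarith
  -- upper bound: everything above T is in S
  have hup : ∀ x : ℕ, A'*(3*a+4*b) + C'*(a+3*b) < x → x ∈ S := by
    intro x hx
    haveI : NeZero (a+3*b) := ⟨by omega⟩
    set jz : ZMod (a+3*b) := (x : ZMod (a+3*b)) * (((3*a+4*b : ℕ) : ZMod (a+3*b)))⁻¹ with hjz
    have hjlt : jz.val < a+3*b := ZMod.val_lt jz
    have hcong : jz.val * (3*a+4*b) ≡ x [MOD (a+3*b)] := by
      have h1 : ((jz.val * (3*a+4*b) : ℕ) : ZMod (a+3*b)) = ((x:ℕ) : ZMod (a+3*b)) := by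
        rw [Nat.cast_mul, ZMod.natCast_zmod_val, hjz, mul_assoc,
            mul_comm (((3*a+4*b : ℕ) : ZMod (a+3*b)))⁻¹ _,
            ZMod.coe_mul_inv_eq_one _ hcop.symm, mul_one]
      exact (ZMod.natCast_eq_natCast_iff _ _ _).mp h1
    obtain ⟨w, hwC, hsS⟩ : ∃ w ≤ 2*a+b, jz.val*(3*a+4*b) + w*(a+3*b) ∈ S := by
      set P : ℕ → ℕ → Prop := fun u v => u*(3*a+4*b) + v*(a+3*b) ∈ S with hPdef
      have h0 : P 0 0 := by
        simp only [hPdef, Nat.zero_mul, Nat.add_zero]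
        exact S.zero_mem
      have hco : ∀ k, P (Nat.fib (2*k+2)) (Nat.fib (2*k+1)) := fun k => hcoinS k
      have haddP : ∀ a1 b1 c d : ℕ, P a1 b1 → P c d → P (a1+c) (b1+d) := by
        intro a1 b1 c d h1 h2
        simp only [hPdef] at h1 h2 ⊢
        have e : (a1+c)*(3*a+4*b) + (b1+d)*(a+3*b)
            = (a1*(3*a+4*b) + b1*(a+3*b)) + (c*(3*a+4*b) + d*(a+3*b)) := by ring
        rw [e]; exact S.add_mem h1 h2
      rcases Nat.even_or_odd' m with ⟨p, rfl | rfl⟩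
      · have ebound : Nat.fib (2*p+5) + Nat.fib (2*p+3) = a+3*b := by
          rw [efib5, ← hb]; ring
        have cbound : Nat.fib (2*p+4) + Nat.fib (2*p+2) = 2*a+b := by
          rw [efib4, ← ha]; ring
        obtain ⟨w, hw, hPw⟩ := PlemEven P h0 hco haddP p jz.val (by rw [ebound]; exact hjlt)
        exact ⟨w, by omega, hPw⟩
      · have ebound : Nat.fib (2*p+6) + Nat.fib (2*p+4) = a+3*b := by
          rw [show 2*p+6 = 2*p+1+5 by ring, show 2*p+4 = 2*p+1+3 by ring, efib5, ← hb]; ring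
        have cbound : Nat.fib (2*p+5) + Nat.fib (2*p+3) = 2*a+b := by
          rw [show 2*p+5 = 2*p+1+4 by ring, show 2*p+3 = 2*p+1+2 by ring, efib4, ← ha]; ring
        obtain ⟨w, hw, hPw⟩ := PlemOdd P h0 hco haddP p jz.val (by rw [ebound]; exact hjlt)
        exact ⟨w, by omega, hPw⟩
    have hsmod : jz.val*(3*a+4*b) + w*(a+3*b) ≡ x [MOD (a+3*b)] := by
      have h1 : (jz.val*(3*a+4*b) + w*(a+3*b)) % (a+3*b) = (jz.val*(3*a+4*b)) % (a+3*b) :=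
        Nat.add_mul_mod_self_right _ _ _
      show (jz.val*(3*a+4*b) + w*(a+3*b)) % (a+3*b) = x % (a+3*b)
      rw [h1]; exact hcong
    have hsle : jz.val*(3*a+4*b) + w*(a+3*b) ≤ A'*(3*a+4*b) + C'*(a+3*b) + (a+3*b) := by
      have h1 : jz.val*(3*a+4*b) ≤ A'*(3*a+4*b) := Nat.mul_le_mul_right _ (by omega)
      have h2 : w*(a+3*b) ≤ (C'+1)*(a+3*b) := Nat.mul_le_mul_right _ (by omega)
      have h3 : (C'+1)*(a+3*b) = C'*(a+3*b) + (a+3*b) := by ring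
      linarith
    have hxs : jz.val*(3*a+4*b) + w*(a+3*b) ≤ x := by
      by_contra hlt
      push_neg at hlt
      have hd : (a+3*b) ∣ (jz.val*(3*a+4*b) + w*(a+3*b)) - x :=
        (Nat.modEq_iff_dvd' (le_of_lt hlt)).mp hsmod.symm
      have h4 : a+3*b ≤ (jz.val*(3*a+4*b) + w*(a+3*b)) - x := Nat.le_of_dvd (by omega) hd
      omega
    have hd : (a+3*b) ∣ x - (jz.val*(3*a+4*b) + w*(a+3*b)) := (Nat.modEq_iff_dvd' hxs).mp hsmod
    obtain ⟨q, hq⟩ := hd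
    have hx' : x = (jz.val*(3*a+4*b) + w*(a+3*b)) + (a+3*b)*q := by omega
    rw [hx']
    refine S.add_mem hsS ?_
    have hmul : q • (a+3*b) ∈ S := S.nsmul_mem hAS q
    rwa [smul_eq_mul, mul_comm] at hmul
  -- assemble
  rw [hTval]
  constructor
  · exact hTnot
  · intro x hxmem
    by_contra hgt
    push_neg at hgt
    exact hxmem (hup x hgt)
end

section
/- Let a, b be positive integers with gcd(a,b) = 1 and let V be the generalized Fibonacci sequence with V_1 = a, V_2 = b and V_n = V_{n-1} + V_{n-2} for all n ≥ 3. Fix a positive integer n and let κ be the positive integer determined by F_{2(κ−1)} ≤ V_n − 1 < F_{2κ}. Then: (a) the additive submonoid of ℕ generated by {V_{n+2k} : k ∈ ℕ} equals the additive submonoid generated by the finite set {V_n, V_{n+2}, …, V_{n+2(κ−1)}}; and (b) for each k with 1 ≤ k ≤ κ − 1, V_{n+2k} does not belong to the additive submonoid generated by {V_n, V_{n+2}, …, V_{n+2(k−1)}}. In particular {V_n, V_{n+2}, …, V_{n+2(κ−1)}} is the minimal set of generators, so the embedding dimension of S is κ. -/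
open Finset Nat

def E : ℕ → ℕ := fun j => if j = 0 then 1 else Nat.fib (2*j - 1)

lemma fibid : ∀ (t j : ℕ), fib (2*j+1) * fib (2*j+2*t+2) = fib (2*j+2) * fib (2*j+2*t+1) + fib (2*t) := by
  intro t j
  induction j with
  | zero =>
      simp only [Nat.mul_zero, Nat.zero_add]
      simp only [Nat.fib_add_two, Nat.fib_one]
      ring_nf
  | succ j ih =>
      have e1 : 2*(j+1)+1 = (2*j+1)+2 := by ring
      have e2 : 2*(j+1)+2*t+2 = (2*j+2*t+2)+2 := by ring
      have e3 : 2*(j+1)+2 = (2*j+2)+2 := by ring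
      have e4 : 2*(j+1)+2*t+1 = (2*j+2*t+1)+2 := by ring
      rw [e1, e2, e3, e4]
      simp only [Nat.fib_add_two] at ih ⊢
      ring_nf at ih ⊢
      nlinarith [ih]

lemma IdE : ∀ k j : ℕ, j ≤ k → E j * fib (2*k) = fib (2*j) * fib (2*k-1) + fib (2*(k-j)) := by
  intro k j hjk
  rcases Nat.eq_zero_or_pos j with h0 | h0
  · subst h0
    simp [E]
  · have hk : 0 < k := by omega
    have h := fibid (k - j) (j - 1)
    have e1 : 2*(j-1)+1 = 2*j-1 := by omega
    have e2 : 2*(j-1)+2*(k-j)+2 = 2*k := by omega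
    have e3 : 2*(j-1)+2 = 2*j := by omega
    have e4 : 2*(j-1)+2*(k-j)+1 = 2*k-1 := by omega
    rw [e1, e2, e3, e4] at h
    rw [show E j = fib (2*j-1) from if_neg (by omega)]
    omega

lemma sumfib : ∀ m : ℕ, (∑ j ∈ Finset.range m, fib (2*(m-j))) + 1 = fib (2*m+1) := by
  intro m
  induction m with
  | zero => simp
  | succ m ih =>
      rw [Finset.sum_range_succ']
      have h1 : ∀ j ∈ Finset.range m, fib (2*(m+1-(j+1))) = fib (2*(m-j)) := by
        intro j hj; congr 1; omega
      rw [Finset.sum_congr rfl h1]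
      have h2 : 2*(m+1-0) = 2*m+2 := by omega
      rw [h2]
      have hA : fib (2*m+2) = fib (2*m) + fib (2*m+1) := Nat.fib_add_two
      have hB : fib (2*(m+1)+1) = fib (2*m+1) + fib (2*m+2) := by
        have e : 2*(m+1)+1 = (2*m+1)+2 := by ring
        rw [e, Nat.fib_add_two]
      omega

lemma rep3 : ∀ k m : ℕ, m < fib (2*k) →
    ∃ f : ℕ → ℕ, f 0 = 0 ∧ (∀ j, f j ≤ 2) ∧ m = ∑ j ∈ Finset.range k, f j * fib (2*j) := by
  intro k
  induction k with
  | zero => intro m hm; simp at hm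
  | succ k ih =>
      intro m hm
      rcases Nat.eq_zero_or_pos k with hk | hk
      · subst hk
        have hm0 : m = 0 := by simpa using hm
        exact ⟨fun _ => 0, rfl, fun _ => by simp, by simp [hm0]⟩
      · have hfibpos : 0 < fib (2*k) := by rw [Nat.fib_pos]; omega
        have hfib1 : fib (2*k-1) ≤ fib (2*k) := Nat.fib_mono (by omega)
        have hm3 : m < 3 * fib (2*k) := by
          have hA : fib (2*(k+1)) = fib (2*k) + fib (2*k+1) := by
            have e : 2*(k+1) = (2*k)+2 := by ring
            rw [e, Nat.fib_add_two]
          have hB : fib (2*k+1) = fib (2*k-1) + fib (2*k) := by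
            have e : 2*k+1 = (2*k-1)+2 := by omega
            rw [e, Nat.fib_add_two]
            congr 2
            omega
          omega
        obtain ⟨l, hlm, hrem, hl2⟩ : ∃ l : ℕ, l * fib (2*k) ≤ m ∧
            m - l * fib (2*k) < fib (2*k) ∧ l ≤ 2 := by
          rcases lt_or_ge m (fib (2*k)) with h | h
          · exact ⟨0, by omega, by omega, by omega⟩
          · rcases lt_or_ge m (2 * fib (2*k)) with h2 | h2
            · exact ⟨1, by omega, by omega, by omega⟩
            · exact ⟨2, by omega, by omega, by omega⟩
        obtain ⟨f, hf0, hf2, hfs⟩ := ih (m - l * fib (2*k)) hrem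
        refine ⟨Function.update f k l, ?_, ?_, ?_⟩
        · rw [Function.update_of_ne (by omega)]; exact hf0
        · intro j
          rcases eq_or_ne j k with h | h
          · rw [h, Function.update_self]; omega
          · rw [Function.update_of_ne h]; exact hf2 j
        · rw [Finset.sum_range_succ]
          have hcong : ∀ j ∈ Finset.range k, Function.update f k l j * fib (2*j) = f j * fib (2*j) := by
            intro j hj
            rw [Function.update_of_ne (by simp at hj; omega)]
          rw [Finset.sum_congr rfl hcong, Function.update_self, ← hfs]
          omega

lemma rep_of_mem (w : ℕ → ℕ) (K : ℕ) (x : ℕ)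
    (hx : x ∈ AddSubmonoid.closure {y : ℕ | ∃ j : ℕ, j < K ∧ y = w j}) :
    ∃ f : ℕ → ℕ, x = ∑ j ∈ Finset.range K, f j * w j := by
  induction hx using AddSubmonoid.closure_induction with
  | mem y hy =>
      obtain ⟨j, hj, rfl⟩ := hy
      refine ⟨fun i => if i = j then 1 else 0, ?_⟩
      rw [Finset.sum_congr rfl (fun i _ => by rw [ite_mul, one_mul, zero_mul])]
      rw [Finset.sum_ite_eq' (Finset.range K) j w]
      simp [hj]
  | zero => exact ⟨fun _ => 0, by simp⟩
  | add y z _ _ hy hz =>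
      obtain ⟨f, rfl⟩ := hy
      obtain ⟨g, rfl⟩ := hz
      refine ⟨fun i => f i + g i, ?_⟩
      rw [← Finset.sum_add_distrib]
      exact Finset.sum_congr rfl (fun i _ => by ring)

theorem stmt_19 (a b : ℕ) (ha : 0 < a) (hb : 0 < b) (hab : Nat.gcd a b = 1)
    (V : ℕ → ℕ) (hV1 : V 1 = a) (hV2 : V 2 = b)
    (hVrec : ∀ n, 3 ≤ n → V n = V (n - 1) + V (n - 2))
    (n : ℕ) (hn : 0 < n)
    (κ : ℕ) (hκ : 0 < κ)
    (hκ1 : Nat.fib (2 * (κ - 1)) ≤ V n - 1) (hκ2 : V n - 1 < Nat.fib (2 * κ)) :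
    AddSubmonoid.closure {x : ℕ | ∃ k : ℕ, x = V (n + 2 * k)}
        = AddSubmonoid.closure {x : ℕ | ∃ k : ℕ, k ≤ κ - 1 ∧ x = V (n + 2 * k)} ∧
      ∀ k : ℕ, 1 ≤ k → k ≤ κ - 1 →
        V (n + 2 * k) ∉ AddSubmonoid.closure {x : ℕ | ∃ j : ℕ, j ≤ k - 1 ∧ x = V (n + 2 * j)} := by
  -- positivity
  have hpos : ∀ m : ℕ, 0 < V (m+1) := by
    intro m
    induction m using Nat.strong_induction_on with
    | _ m IH =>
      match m, IH with
      | 0, _ => rw [hV1]; exact ha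
      | 1, _ => rw [hV2]; exact hb
      | (m+2), IH =>
        have h := hVrec (m+2+1) (by omega)
        have e1 : m+2+1-1 = m+1+1 := by omega
        have e2 : m+2+1-2 = m+1 := by omega
        rw [h, e1, e2]
        have h1 := IH (m+1) (by omega)
        have h2 := IH m (by omega)
        omega
  have hc : 0 < V n := by
    have := hpos (n-1); rwa [show n-1+1 = n by omega] at this
  have hd : 0 < V (n+1) := hpos n
  -- linear formula
  have hVf : ∀ m, V (n+m+1) = fib m * V n + fib (m+1) * V (n+1) := by
    intro m
    induction m using Nat.strong_induction_on with
    | _ m IH =>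
      match m, IH with
      | 0, _ => simp
      | 1, _ =>
          have h := hVrec (n+1+1) (by omega)
          have e1 : n+1+1-1 = n+1 := by omega
          have e2 : n+1+1-2 = n := by omega
          rw [h, e1, e2, fib_one]
          have : fib 2 = 1 := rfl
          rw [this]
          ring
      | (m+2), IH =>
          have h := hVrec (n+(m+2)+1) (by omega)
          have e1 : n+(m+2)+1-1 = n+(m+1)+1 := by omega
          have e2 : n+(m+2)+1-2 = n+m+1 := by omega
          rw [h, e1, e2, IH (m+1) (by omega), IH m (by omega)]
          have hf1 : fib (m+2) = fib m + fib (m+1) := Nat.fib_add_two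
          have hf2 : fib (m+2+1) = fib (m+1) + fib (m+2) := by
            rw [show m+2+1 = (m+1)+2 by ring, Nat.fib_add_two]
          rw [show m+1+1 = m+2 by ring] at *
          rw [hf2, hf1]
          ring
  have hW : ∀ j : ℕ, V (n+2*j) = E j * V n + fib (2*j) * V (n+1) := by
    intro j
    rcases Nat.eq_zero_or_pos j with h0 | h0
    · subst h0; simp [E]
    · have e : n+2*j = n+(2*j-1)+1 := by omega
      rw [e, hVf (2*j-1)]
      rw [show E j = fib (2*j-1) from if_neg (by omega)]
      rw [show 2*j-1+1 = 2*j by omega]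
  -- gcd
  have hgcd : Nat.gcd (V n) (V (n+1)) = 1 := by
    have key : ∀ m : ℕ, Nat.gcd (V (m+1)) (V (m+2)) = 1 := by
      intro m
      induction m with
      | zero => rw [hV1, hV2]; exact hab
      | succ m ih =>
          have h := hVrec (m+3) (by omega)
          have e1 : m+3-1 = m+2 := by omega
          have e2 : m+3-2 = m+1 := by omega
          rw [show m+1+1 = m+2 by ring, show m+1+2 = m+3 by ring, h, e1, e2]
          rw [Nat.add_comm (V (m+2)) (V (m+1)), Nat.gcd_add_self_right, Nat.gcd_comm]
          exact ih
    have := key (n-1)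
    rwa [show n-1+1 = n by omega, show n-1+2 = n+1 by omega] at this
  -- sum splitting helpers
  have hsplit : ∀ (h : ℕ → ℕ) (K : ℕ), ∑ j ∈ Finset.range K, h j * V (n+2*j)
      = (∑ j ∈ Finset.range K, h j * E j) * V n + (∑ j ∈ Finset.range K, h j * fib (2*j)) * V (n+1) := by
    intro h K
    rw [Finset.sum_mul, Finset.sum_mul, ← Finset.sum_add_distrib]
    refine Finset.sum_congr rfl fun j _ => ?_
    rw [hW j]; ring
  have hEq2 : ∀ (h : ℕ → ℕ) (k : ℕ),
      (∑ j ∈ Finset.range k, h j * E j) * fib (2*k)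
        = (∑ j ∈ Finset.range k, h j * fib (2*j)) * fib (2*k-1)
          + ∑ j ∈ Finset.range k, h j * fib (2*(k-j)) := by
    intro h k
    rw [Finset.sum_mul, Finset.sum_mul, ← Finset.sum_add_distrib]
    refine Finset.sum_congr rfl fun j hj => ?_
    have hid := IdE k j (le_of_lt (Finset.mem_range.mp hj))
    calc h j * E j * fib (2*k) = h j * (E j * fib (2*k)) := by ring
      _ = h j * (fib (2*j) * fib (2*k-1) + fib (2*(k-j))) := by rw [hid]
      _ = h j * fib (2*j) * fib (2*k-1) + h j * fib (2*(k-j)) := by ring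
  have hpeel : ∀ (h : ℕ → ℕ) (k : ℕ), 1 ≤ k →
      ∑ j ∈ Finset.range k, h j = (∑ j ∈ Finset.range (k-1), h (j+1)) + h 0 := by
    intro h k hk
    obtain ⟨k', rfl⟩ : ∃ k', k = k'+1 := ⟨k-1, by omega⟩
    simp [Finset.sum_range_succ']
  -- key membership lemma
  have keymem : ∀ k : ℕ, 1 ≤ k → V n ≤ fib (2*k) →
      ∀ (S : AddSubmonoid ℕ), (∀ j, j < k → V (n+2*j) ∈ S) → V (n+2*k) ∈ S := by
    intro k hk1 hck S hS
    have hF2pos : 0 < fib (2*k) := by rw [Nat.fib_pos]; omega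
    have hF1F2 : fib (2*k-1) ≤ fib (2*k) := Nat.fib_mono (by omega)
    have hF1pos : 0 < fib (2*k-1) := by rw [Nat.fib_pos]; omega
    obtain ⟨f, hf0, hf2, hfs⟩ := rep3 k (fib (2*k) - V n) (by omega)
    set S1 := ∑ j ∈ Finset.range k, f j * fib (2*j) with hS1def
    set S2 := ∑ j ∈ Finset.range k, f j * E j with hS2def
    have hRbound : (∑ j ∈ Finset.range k, f j * fib (2*(k-j))) + 2 ≤ 2 * fib (2*k-1) := by
      have hp := hpeel (fun j => f j * fib (2*(k-j))) k hk1
      simp only [hf0, Nat.zero_mul, Nat.add_zero] at hp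
      rw [hp]
      have hb1 : ∀ j ∈ Finset.range (k-1), f (j+1) * fib (2*(k-(j+1))) ≤ 2 * fib (2*((k-1)-j)) := by
        intro j hj
        have e : 2*(k-(j+1)) = 2*((k-1)-j) := by omega
        rw [e]
        exact Nat.mul_le_mul_right _ (hf2 (j+1))
      have hb2 := Finset.sum_le_sum hb1
      rw [← Finset.mul_sum] at hb2
      have hs := sumfib (k-1)
      have e2 : fib (2*(k-1)+1) = fib (2*k-1) := by congr 1; omega
      omega
    have hS2le : S2 ≤ fib (2*k-1) := by
      by_contra hcon
      push_neg at hcon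
      have h1 : (fib (2*k-1) + 1) * fib (2*k) ≤ S2 * fib (2*k) := Nat.mul_le_mul_right _ (by omega)
      have h2 := hEq2 f k
      rw [← hS1def, ← hS2def, ← hfs] at h2
      have h3 : (fib (2*k) - V n) * fib (2*k-1) ≤ (fib (2*k) - 1) * fib (2*k-1) :=
        Nat.mul_le_mul_right _ (by omega)
      have h4 : (fib (2*k) - 1) * fib (2*k-1) = fib (2*k) * fib (2*k-1) - fib (2*k-1) := by
        rw [Nat.sub_mul, one_mul]
      have h5 : (fib (2*k-1) + 1) * fib (2*k) = fib (2*k) * fib (2*k-1) + fib (2*k) := by ring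
      have h6 : fib (2*k-1) ≤ fib (2*k) * fib (2*k-1) := Nat.le_mul_of_pos_left _ hF2pos
      omega
    set g : ℕ → ℕ := fun j => if j = 0 then (fib (2*k-1) + V (n+1) - S2) else f j with hgdef
    have hg0 : g 0 = fib (2*k-1) + V (n+1) - S2 := rfl
    have hgsucc : ∀ j, g (j+1) = f (j+1) := fun j => if_neg (by omega)
    have hgE : ∑ j ∈ Finset.range k, g j * E j = fib (2*k-1) + V (n+1) := by
      rw [hpeel (fun j => g j * E j) k hk1]
      have hagree : ∀ j ∈ Finset.range (k-1), g (j+1) * E (j+1) = f (j+1) * E (j+1) := by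
        intro j hj; rw [hgsucc]
      rw [Finset.sum_congr rfl hagree]
      have hS2eq : S2 = ∑ j ∈ Finset.range (k-1), f (j+1) * E (j+1) := by
        rw [hS2def, hpeel (fun j => f j * E j) k hk1]
        simp [hf0]
      rw [← hS2eq, hg0]
      have hE0 : E 0 = 1 := rfl
      rw [hE0]
      omega
    have hgF : ∑ j ∈ Finset.range k, g j * fib (2*j) = fib (2*k) - V n := by
      rw [hpeel (fun j => g j * fib (2*j)) k hk1]
      have hagree : ∀ j ∈ Finset.range (k-1), g (j+1) * fib (2*(j+1)) = f (j+1) * fib (2*(j+1)) := by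
        intro j hj; rw [hgsucc]
      rw [Finset.sum_congr rfl hagree]
      have hS1eq : S1 = ∑ j ∈ Finset.range (k-1), f (j+1) * fib (2*(j+1)) := by
        rw [hS1def, hpeel (fun j => f j * fib (2*j)) k hk1]
        simp [hf0]
      rw [← hS1eq]
      simp [← hfs]
    have hrep : V (n+2*k) = ∑ j ∈ Finset.range k, g j * V (n+2*j) := by
      rw [hsplit g k, hgE, hgF]
      have hWk : V (n+2*k) = fib (2*k-1) * V n + fib (2*k) * V (n+1) := by
        rw [hW k, show E k = fib (2*k-1) from if_neg (by omega)]
      rw [hWk]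
      zify [hck]
      ring
    rw [hrep]
    refine AddSubmonoid.sum_mem S fun j hj => ?_
    have hmem := hS j (Finset.mem_range.mp hj)
    have hns := AddSubmonoid.nsmul_mem S hmem (g j)
    simpa [nsmul_eq_mul] using hns
  have hcκ : V n ≤ fib (2*κ) := by omega
  have main : ∀ k : ℕ, V (n+2*k) ∈
      AddSubmonoid.closure {x : ℕ | ∃ k : ℕ, k ≤ κ - 1 ∧ x = V (n + 2 * k)} := by
    intro k
    induction k using Nat.strong_induction_on with
    | _ k IH =>
      by_cases hk : k ≤ κ - 1
      · exact AddSubmonoid.subset_closure ⟨k, hk, rfl⟩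
      · have hk1 : 1 ≤ k := by omega
        have hle : V n ≤ fib (2*k) := le_trans hcκ (Nat.fib_mono (by omega))
        exact keymem k hk1 hle _ (fun j hj => IH j hj)
  constructor
  · refine le_antisymm ?_ (AddSubmonoid.closure_mono ?_)
    · rw [AddSubmonoid.closure_le]
      rintro x ⟨k, rfl⟩
      exact main k
    · rintro x ⟨k, hk, rfl⟩
      exact ⟨k, rfl⟩
  · intro k hk1 hkκ hmem
    have hseteq : {x : ℕ | ∃ j : ℕ, j ≤ k - 1 ∧ x = V (n + 2 * j)}
        = {y : ℕ | ∃ j : ℕ, j < k ∧ y = (fun j => V (n+2*j)) j} := by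
      ext x
      simp only [Set.mem_setOf_eq]
      constructor
      · rintro ⟨j, hj, rfl⟩; exact ⟨j, by omega, rfl⟩
      · rintro ⟨j, hj, rfl⟩; exact ⟨j, by omega, rfl⟩
    rw [hseteq] at hmem
    obtain ⟨f, hfs⟩ := rep_of_mem _ k _ hmem
    have hF2pos : 0 < fib (2*k) := by rw [Nat.fib_pos]; omega
    have hF1pos : 0 < fib (2*k-1) := by rw [Nat.fib_pos]; omega
    have hF2c : fib (2*k) < V n := by
      have := Nat.fib_mono (show 2*k ≤ 2*(κ-1) by omega)
      omega
    set A := ∑ j ∈ Finset.range k, f j * E j with hAdef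
    set B := ∑ j ∈ Finset.range k, f j * fib (2*j) with hBdef
    set R := ∑ j ∈ Finset.range k, f j * fib (2*(k-j)) with hRdef
    clear_value A B R
    have hWk : V (n+2*k) = fib (2*k-1) * V n + fib (2*k) * V (n+1) := by
      rw [hW k, show E k = fib (2*k-1) from if_neg (by omega)]
    have hEq1 : fib (2*k-1) * V n + fib (2*k) * V (n+1) = A * V n + B * V (n+1) := by
      have h := hsplit f k
      rw [← hAdef, ← hBdef] at h
      rw [← hWk, hfs]
      exact h
    have hEq2' := hEq2 f k
    rw [← hAdef, ← hBdef, ← hRdef] at hEq2'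
    have hRB : R = 0 → B = 0 := by
      intro hR0
      rw [hRdef] at hR0
      have hall := (Finset.sum_eq_zero_iff).mp hR0
      rw [hBdef]
      refine Finset.sum_eq_zero fun j hj => ?_
      have hj' := Finset.mem_range.mp hj
      have hfib : 0 < fib (2*(k-j)) := by rw [Nat.fib_pos]; omega
      have hz := hall j hj
      rcases Nat.mul_eq_zero.mp hz with h | h
      · simp [h]
      · omega
    have hcop : IsCoprime (V n : ℤ) (V (n+1) : ℤ) := by
      rw [Int.isCoprime_iff_gcd_eq_one, Int.gcd_natCast_natCast]
      exact hgcd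
    have heqZ : ((A:ℤ) - fib (2*k-1)) * V n = ((fib (2*k):ℤ) - B) * V (n+1) := by
      have h := hEq1
      zify at h
      linear_combination -h
    have hdvd : (V n : ℤ) ∣ (fib (2*k) : ℤ) - B := by
      refine hcop.dvd_of_dvd_mul_right ?_
      exact ⟨(A:ℤ) - fib (2*k-1), by linear_combination -heqZ⟩
    rcases lt_trichotomy B (fib (2*k)) with hB | hB | hB
    · have hle := Int.le_of_dvd (by omega) hdvd
      omega
    · have hA1 : A = fib (2*k-1) := by
        have h0 : ((A:ℤ) - fib (2*k-1)) * V n = 0 := by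
          rw [heqZ, hB]; ring
        rcases mul_eq_zero.mp h0 with h | h
        · omega
        · omega
      rw [hA1, hB] at hEq2'
      have hmc : fib (2*k-1) * fib (2*k) = fib (2*k) * fib (2*k-1) := Nat.mul_comm _ _
      have hR0 : R = 0 := by omega
      have hB0 := hRB hR0
      omega
    · have hdvd2 : (V n : ℤ) ∣ (B:ℤ) - fib (2*k) := by
        obtain ⟨t, ht⟩ := hdvd
        exact ⟨-t, by linear_combination -ht⟩
      have hle := Int.le_of_dvd (by omega) hdvd2
      have hBge : fib (2*k) + V n ≤ B := by omega
      have hup : (fib (2*k) + V n) * V (n+1) ≤ B * V (n+1) := Nat.mul_le_mul_right _ hBge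
      have hAlt : A < fib (2*k-1) := by
        by_contra hcon
        push_neg at hcon
        have h1 : fib (2*k-1) * V n ≤ A * V n := Nat.mul_le_mul_right _ hcon
        have h3 : V n ≤ V n * V (n+1) := Nat.le_mul_of_pos_right _ hd
        have hexp : (fib (2*k) + V n) * V (n+1) = fib (2*k) * V (n+1) + V n * V (n+1) := by ring
        linarith [hEq1, hup, h1, h3, hc, hexp]
      have h4 : (fib (2*k) + V n) * fib (2*k-1) ≤ B * fib (2*k-1) := Nat.mul_le_mul_right _ hBge
      have h5 : fib (2*k-1) ≤ V n * fib (2*k-1) := Nat.le_mul_of_pos_left _ hc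
      have h6 : fib (2*k-1) * fib (2*k) < A * fib (2*k) := by
        have hexp2 : (fib (2*k) + V n) * fib (2*k-1) = fib (2*k) * fib (2*k-1) + V n * fib (2*k-1) := by ring
        linarith [hEq2', h4, h5, hF1pos, hexp2]
      have h7 : fib (2*k-1) < A := lt_of_mul_lt_mul_right h6 (Nat.zero_le _)
      omega
end
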